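/- arXiv:1906.08249 — 10 statements merged into one kernel-verified Lean document; each statement's English description precedes it below -/
import Mathlib

section
/- Let A be a finite alphabet, let d ≥ 2 and n ≥ d, and let f : A^d → A be a bipermutive local rule. Let F : A^n → A^{n−d+1} be the no-boundary cellular automaton defined by F(x)_i = f(x_i, …, x_{i+d−1}) for 0 ≤ i ≤ n−d. Then for every fixed word z ∈ A^{d−1} and every position i with 0 ≤ i ≤ n−d+1, the restriction of F obtained by fixing the d−1 consecutive input coordinates x_i = z_0, x_{i+1} = z_1, …, x_{i+d−2} = z_{d−2}, viewed as a function of the remaining n−d+1 input coordinates, is a bijection from A^{n−d+1} to A^{n−d+1}. -/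
set_option maxHeartbeats 4000000 in
/-- Fixing `d-1` consecutive coordinates of a bipermutive no-boundary CA
yields a bijection on the remaining `n-d+1` coordinates. -/
theorem stmt_0 (A : Type*) [Fintype A] (d n : ℕ) (hd : 2 ≤ d) (hn : d ≤ n)
    (f : (Fin d → A) → A)
    -- `f` is left permutive: fixing the last `d-1` coordinates gives a bijection in the first
    (hleft : ∀ z : Fin (d - 1) → A, Function.Bijective (fun a : A =>
      f (fun i : Fin d => if h : (i : ℕ) = 0 then a
        else z ⟨(i : ℕ) - 1, by have := i.isLt; omega⟩)))
    -- `f` is right permutive: fixing the first `d-1` coordinates gives a bijection in the last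
    (hright : ∀ z : Fin (d - 1) → A, Function.Bijective (fun a : A =>
      f (fun i : Fin d => if h : (i : ℕ) < d - 1 then z ⟨(i : ℕ), h⟩ else a)))
    -- `F` is the no-boundary CA of length `n` and diameter `d` with local rule `f`
    (F : (Fin n → A) → (Fin (n - d + 1) → A))
    (hF : ∀ x : Fin n → A, ∀ i : Fin (n - d + 1),
      F x i = f (fun j : Fin d =>
        x ⟨(i : ℕ) + (j : ℕ), by have := i.isLt; have := j.isLt; omega⟩))
    -- fixed word and position
    (z : Fin (d - 1) → A) (i : ℕ) (hi : i ≤ n - d + 1) :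
    Function.Bijective (fun y : Fin (n - d + 1) → A =>
      F (fun j : Fin n =>
        if h1 : (j : ℕ) < i then y ⟨(j : ℕ), by omega⟩
        else if h2 : (j : ℕ) < i + (d - 1) then z ⟨(j : ℕ) - i, by omega⟩
        else y ⟨(j : ℕ) - (d - 1), by have := j.isLt; omega⟩)) := by
  set X : (Fin (n - d + 1) → A) → Fin n → A := fun y j =>
    if h1 : (j : ℕ) < i then y ⟨(j : ℕ), by omega⟩
    else if h2 : (j : ℕ) < i + (d - 1) then z ⟨(j : ℕ) - i, by omega⟩
    else y ⟨(j : ℕ) - (d - 1), by have := j.isLt; omega⟩ with hX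
  rw [← Finite.injective_iff_bijective]
  intro y y' h
  simp only [] at h
  -- key pointwise equalities on outputs
  have hEq : ∀ p : ℕ, ∀ hp : p < n - d + 1,
      f (fun j : Fin d => X y ⟨p + (j : ℕ), by have := j.isLt; omega⟩) =
      f (fun j : Fin d => X y' ⟨p + (j : ℕ), by have := j.isLt; omega⟩) := by
    intro p hp
    have h1 := congrFun h ⟨p, hp⟩
    rw [hF, hF] at h1
    exact h1
  -- left claim: coordinates below i agree
  have claimA : ∀ k : ℕ, ∀ hk : k < i,
      y ⟨i - 1 - k, by omega⟩ = y' ⟨i - 1 - k, by omega⟩ := by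
    intro k
    induction k using Nat.strong_induction_on with
    | _ k IH =>
      intro hk
      set p := i - 1 - k with hpdef
      have hpn1 : p < n - d + 1 := by omega
      have hpn : p < n := by omega
      have E := hEq p hpn1
      set z' : Fin (d - 1) → A :=
        fun t => X y ⟨p + 1 + (t : ℕ), by have := t.isLt; omega⟩ with hz'
      have htail : ∀ t : Fin (d - 1),
          X y ⟨p + 1 + (t : ℕ), by have := t.isLt; omega⟩ =
          X y' ⟨p + 1 + (t : ℕ), by have := t.isLt; omega⟩ := by
        intro t
        have ht := t.isLt
        simp only [hX]
        by_cases hc : p + 1 + (t : ℕ) < i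
        · rw [dif_pos hc, dif_pos hc]
          -- p + 1 + t = i - 1 - (k - 1 - t)
          have ht' : (t : ℕ) < k := by omega
          have := IH (k - 1 - (t : ℕ)) (by omega) (by omega)
          have heq : (⟨p + 1 + (t : ℕ), by omega⟩ : Fin (n - d + 1)) =
              ⟨i - 1 - (k - 1 - (t : ℕ)), by omega⟩ := by
            apply Fin.ext; simp; omega
          rw [heq]
          exact this
        · have hc2 : p + 1 + (t : ℕ) < i + (d - 1) := by omega
          rw [dif_neg hc, dif_neg hc, dif_pos hc2, dif_pos hc2]
      have e1 : (fun j : Fin d => X y ⟨p + (j : ℕ), by have := j.isLt; omega⟩) =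
          (fun j : Fin d => if h : (j : ℕ) = 0 then X y ⟨p, hpn⟩
            else z' ⟨(j : ℕ) - 1, by have := j.isLt; omega⟩) := by
        funext j
        by_cases hj : (j : ℕ) = 0
        · rw [dif_pos hj]
          congr 1
          apply Fin.ext; simp [hj]
        · rw [dif_neg hj]
          have heq : (⟨p + (j : ℕ), by have := j.isLt; omega⟩ : Fin n) =
              ⟨p + 1 + ((j : ℕ) - 1), by have := j.isLt; omega⟩ := by
            apply Fin.ext; simp; omega
          rw [heq]
      have e2 : (fun j : Fin d => X y' ⟨p + (j : ℕ), by have := j.isLt; omega⟩) =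
          (fun j : Fin d => if h : (j : ℕ) = 0 then X y' ⟨p, hpn⟩
            else z' ⟨(j : ℕ) - 1, by have := j.isLt; omega⟩) := by
        funext j
        by_cases hj : (j : ℕ) = 0
        · rw [dif_pos hj]
          congr 1
          apply Fin.ext; simp [hj]
        · rw [dif_neg hj]
          have heq : (⟨p + (j : ℕ), by have := j.isLt; omega⟩ : Fin n) =
              ⟨p + 1 + ((j : ℕ) - 1), by have := j.isLt; omega⟩ := by
            apply Fin.ext; simp; omega
          rw [heq]
          exact (htail ⟨(j : ℕ) - 1, by have := j.isLt; omega⟩).symm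
      have hxy : X y ⟨p, hpn⟩ = X y' ⟨p, hpn⟩ := by
        apply (hleft z').1
        show f (fun j : Fin d => if h : (j : ℕ) = 0 then X y ⟨p, hpn⟩
            else z' ⟨(j : ℕ) - 1, by have := j.isLt; omega⟩) =
          f (fun j : Fin d => if h : (j : ℕ) = 0 then X y' ⟨p, hpn⟩
            else z' ⟨(j : ℕ) - 1, by have := j.isLt; omega⟩)
        rw [← e1, ← e2]
        exact E
      have hpi : p < i := by omega
      simpa only [hX, dif_pos hpi] using hxy
  -- right claim: coordinates at or above i agree
  have claimB : ∀ k : ℕ, ∀ hk : i + k ≤ n - d,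
      y ⟨i + k, by omega⟩ = y' ⟨i + k, by omega⟩ := by
    intro k
    induction k using Nat.strong_induction_on with
    | _ k IH =>
      intro hk
      set p := i + k with hpdef
      have hpn1 : p < n - d + 1 := by omega
      have E := hEq p hpn1
      set z' : Fin (d - 1) → A :=
        fun t => X y ⟨p + (t : ℕ), by have := t.isLt; omega⟩ with hz'
      have htail : ∀ t : Fin (d - 1),
          X y ⟨p + (t : ℕ), by have := t.isLt; omega⟩ =
          X y' ⟨p + (t : ℕ), by have := t.isLt; omega⟩ := by
        intro t
        have ht := t.isLt
        simp only [hX]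
        have hc : ¬ (p + (t : ℕ) < i) := by omega
        by_cases hc2 : p + (t : ℕ) < i + (d - 1)
        · simp only [dif_neg hc, dif_pos hc2]
        · simp only [dif_neg hc, dif_neg hc2]
          have := IH (k + (t : ℕ) - (d - 1)) (by omega) (by omega)
          have heq : (⟨p + (t : ℕ) - (d - 1), by omega⟩ : Fin (n - d + 1)) =
              ⟨i + (k + (t : ℕ) - (d - 1)), by omega⟩ := by
            apply Fin.ext; simp; omega
          rw [heq]
          exact this
      have hlast : p + (d - 1) < n := by omega
      have e1 : (fun j : Fin d => X y ⟨p + (j : ℕ), by have := j.isLt; omega⟩) =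
          (fun j : Fin d => if h : (j : ℕ) < d - 1 then z' ⟨(j : ℕ), h⟩
            else X y ⟨p + (d - 1), hlast⟩) := by
        funext j
        by_cases hj : (j : ℕ) < d - 1
        · rw [dif_pos hj]
        · rw [dif_neg hj]
          congr 1
          apply Fin.ext; simp; have := j.isLt; omega
      have e2 : (fun j : Fin d => X y' ⟨p + (j : ℕ), by have := j.isLt; omega⟩) =
          (fun j : Fin d => if h : (j : ℕ) < d - 1 then z' ⟨(j : ℕ), h⟩
            else X y' ⟨p + (d - 1), hlast⟩) := by
        funext j
        by_cases hj : (j : ℕ) < d - 1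
        · rw [dif_pos hj]
          exact (htail ⟨(j : ℕ), hj⟩).symm
        · rw [dif_neg hj]
          congr 1
          apply Fin.ext; simp; have := j.isLt; omega
      have hxy : X y ⟨p + (d - 1), hlast⟩ = X y' ⟨p + (d - 1), hlast⟩ := by
        apply (hright z').1
        show f (fun j : Fin d => if h : (j : ℕ) < d - 1 then z' ⟨(j : ℕ), h⟩
            else X y ⟨p + (d - 1), hlast⟩) =
          f (fun j : Fin d => if h : (j : ℕ) < d - 1 then z' ⟨(j : ℕ), h⟩
            else X y' ⟨p + (d - 1), hlast⟩)
        rw [← e1, ← e2]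
        exact E
      have hc : ¬ (p + (d - 1) < i) := by omega
      have hc2 : ¬ (p + (d - 1) < i + (d - 1)) := by omega
      simp only [hX, dif_neg hc, dif_neg hc2] at hxy
      have heq : (⟨p + (d - 1) - (d - 1), by omega⟩ : Fin (n - d + 1)) =
          ⟨i + k, by omega⟩ := by
        apply Fin.ext; simp; omega
      rw [heq] at hxy
      exact hxy
  funext q
  by_cases hq : (q : ℕ) < i
  · have := claimA (i - 1 - (q : ℕ)) (by omega)
    have heq : (⟨i - 1 - (i - 1 - (q : ℕ)), by omega⟩ : Fin (n - d + 1)) = q := by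
      apply Fin.ext; simp; omega
    rwa [heq] at this
  · have hq2 : (q : ℕ) ≤ n - d := by have := q.isLt; omega
    have := claimB ((q : ℕ) - i) (by omega)
    have heq : (⟨i + ((q : ℕ) - i), by omega⟩ : Fin (n - d + 1)) = q := by
      apply Fin.ext; simp; omega
    rwa [heq] at this
end

section
/- Let A be a finite alphabet with q ≥ 2 symbols, let d ≥ 2, and let f : A^d → A be a bipermutive local rule. Let F : A^{2(d−1)} → A^{d−1} be the no-boundary cellular automaton of length 2(d−1) defined by f. Then the square array indexed by pairs (x, y) ∈ A^{d−1} × A^{d−1} with entry F(x‖y) (where x‖y denotes concatenation) is a Latin square of order q^{d−1}; that is, for every fixed x ∈ A^{d−1} the map y ↦ F(x‖y) is a bijection of A^{d−1}, and for every fixed y ∈ A^{d−1} the map x ↦ F(x‖y) is a bijection of A^{d−1}. -/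
/-!
Row `x` of the square sends `y` to `F(x‖y)`, whose `k`-th cell reads the window of `x‖y`
ending at `y k`; every other cell of that window lies in `x` or in `y` strictly before `k`.
By right permutivity, `F(x‖y)` therefore determines `y k` once `y` is known below `k`, so the
row map is injective by induction on `k`. Symmetrically, the `k`-th window starts at `x k` and
otherwise sees only `x` strictly after `k` and `y`, and left permutivity gives injectivity of
the columns by downward induction.
-/

theorem Function.injective_of_triangular {ι α β : Type*} {r : ι → ι → Prop}
    (hr : WellFounded r) {G : (ι → α) → ι → β}
    (h : ∀ u v k, (∀ j, r j k → u j = v j) → G u k = G v k → u k = v k) :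
    Function.Injective G :=
  fun u v huv => funext fun k => hr.induction k fun k ih => h u v k ih (congrFun huv k)

section Permutive

variable {A : Type*} {d : ℕ} {f : (Fin d → A) → A}

theorem eq_of_rightPermutive
    (hright : ∀ z : Fin (d - 1) → A, Function.Injective (fun a : A =>
      f (fun i : Fin d => if h : (i : ℕ) < d - 1 then z ⟨(i : ℕ), h⟩ else a)))
    {w w' : Fin d → A} (hw : ∀ i : Fin d, (i : ℕ) < d - 1 → w i = w' i) (he : f w = f w') :
    w = w' := by
  funext i
  by_cases hi : (i : ℕ) < d - 1
  · exact hw i hi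
  set z : Fin (d - 1) → A := fun j => w ⟨j, by omega⟩
  have hlast : ∀ v : Fin d → A, (∀ j : Fin d, (j : ℕ) < d - 1 → v j = w j) →
      (fun l : Fin d => if h : (l : ℕ) < d - 1 then z ⟨l, h⟩ else v i) = v := by
    intro v hv
    funext l
    split_ifs with hl
    · exact (hv l hl).symm
    · exact congrArg v (Fin.ext (by omega))
  apply hright z
  simp only [hlast w fun _ _ => rfl, hlast w' fun j hj => (hw j hj).symm, he]

theorem eq_of_leftPermutive
    (hleft : ∀ z : Fin (d - 1) → A, Function.Injective (fun a : A =>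
      f (fun i : Fin d => if h : (i : ℕ) = 0 then a
        else z ⟨(i : ℕ) - 1, by have := i.isLt; omega⟩)))
    {w w' : Fin d → A} (hw : ∀ i : Fin d, (i : ℕ) ≠ 0 → w i = w' i) (he : f w = f w') :
    w = w' := by
  funext i
  by_cases hi : (i : ℕ) ≠ 0
  · exact hw i hi
  set z : Fin (d - 1) → A := fun j => w ⟨j + 1, by omega⟩
  have hfirst : ∀ v : Fin d → A, (∀ j : Fin d, (j : ℕ) ≠ 0 → v j = w j) →
      (fun l : Fin d => if h : (l : ℕ) = 0 then v i
        else z ⟨(l : ℕ) - 1, by have := l.isLt; omega⟩) = v := by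
    intro v hv
    funext l
    split_ifs with hl
    · exact congrArg v (Fin.ext (by omega))
    · exact ((congrArg w (Fin.ext (by simp only; omega))).trans (hv l hl).symm)
  apply hleft z
  simp only [hfirst w fun _ _ => rfl, hfirst w' fun j hj => (hw j hj).symm, he]

end Permutive

section NoBoundary

variable {A : Type*} {d : ℕ} {f : (Fin d → A) → A}
  {F : (Fin (2 * (d - 1)) → A) → (Fin (d - 1) → A)}
  {cat : (Fin (d - 1) → A) → (Fin (d - 1) → A) → (Fin (2 * (d - 1)) → A)}

theorem nbca_row_injective
    (hright : ∀ z : Fin (d - 1) → A, Function.Injective (fun a : A =>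
      f (fun i : Fin d => if h : (i : ℕ) < d - 1 then z ⟨(i : ℕ), h⟩ else a)))
    (hF : ∀ x : Fin (2 * (d - 1)) → A, ∀ i : Fin (d - 1),
      F x i = f (fun j : Fin d =>
        x ⟨(i : ℕ) + (j : ℕ), by have := i.isLt; have := j.isLt; omega⟩))
    (hcat : ∀ x y : Fin (d - 1) → A, ∀ j : Fin (2 * (d - 1)),
      cat x y j = if h : (j : ℕ) < d - 1 then x ⟨(j : ℕ), h⟩
        else y ⟨(j : ℕ) - (d - 1), by have := j.isLt; omega⟩)
    (x : Fin (d - 1) → A) :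
    Function.Injective (fun y : Fin (d - 1) → A => F (cat x y)) := by
  refine Function.injective_of_triangular wellFounded_lt fun u v k hlt he => ?_
  rw [hF, hF] at he
  have hwindow := eq_of_rightPermutive hright (fun j hj => ?_) he
  · have hk := congrFun hwindow ⟨d - 1, by have := k.isLt; omega⟩
    simp only [hcat, show ¬ (k : ℕ) + (d - 1) < d - 1 by omega, dite_false,
      Nat.add_sub_cancel] at hk
    exact hk
  · simp only [hcat]
    split_ifs with h
    · rfl
    · exact hlt _ (Fin.lt_def.mpr (by simp only; omega))

theorem nbca_column_injective
    (hleft : ∀ z : Fin (d - 1) → A, Function.Injective (fun a : A =>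
      f (fun i : Fin d => if h : (i : ℕ) = 0 then a
        else z ⟨(i : ℕ) - 1, by have := i.isLt; omega⟩)))
    (hF : ∀ x : Fin (2 * (d - 1)) → A, ∀ i : Fin (d - 1),
      F x i = f (fun j : Fin d =>
        x ⟨(i : ℕ) + (j : ℕ), by have := i.isLt; have := j.isLt; omega⟩))
    (hcat : ∀ x y : Fin (d - 1) → A, ∀ j : Fin (2 * (d - 1)),
      cat x y j = if h : (j : ℕ) < d - 1 then x ⟨(j : ℕ), h⟩
        else y ⟨(j : ℕ) - (d - 1), by have := j.isLt; omega⟩)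
    (y : Fin (d - 1) → A) :
    Function.Injective (fun x : Fin (d - 1) → A => F (cat x y)) := by
  refine Function.injective_of_triangular wellFounded_gt fun u v k hgt he => ?_
  rw [hF, hF] at he
  have hwindow := eq_of_leftPermutive hleft (fun j hj => ?_) he
  · have hk := congrFun hwindow ⟨0, by have := k.isLt; omega⟩
    simp only [hcat, Nat.add_zero, k.isLt, dite_true] at hk
    exact hk
  · simp only [hcat]
    split_ifs with h
    · exact hgt _ (Fin.lt_def.mpr (by simp only; omega))
    · rfl

end NoBoundary

/-- The square generated by a bipermutive CA of diameter `d` and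
length `2(d-1)` is a Latin square of order `q^(d-1)`. -/
theorem stmt_1 (A : Type*) [Fintype A] (q d : ℕ) (hq : Fintype.card A = q)
    (f : (Fin d → A) → A)
    -- `f` is left permutive: fixing the last `d-1` coordinates gives a bijection in the first
    (hleft : ∀ z : Fin (d - 1) → A, Function.Bijective (fun a : A =>
      f (fun i : Fin d => if h : (i : ℕ) = 0 then a
        else z ⟨(i : ℕ) - 1, by have := i.isLt; omega⟩)))
    -- `f` is right permutive: fixing the first `d-1` coordinates gives a bijection in the last
    (hright : ∀ z : Fin (d - 1) → A, Function.Bijective (fun a : A =>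
      f (fun i : Fin d => if h : (i : ℕ) < d - 1 then z ⟨(i : ℕ), h⟩ else a)))
    -- `F` is the no-boundary CA of length `2(d-1)` and diameter `d` with local rule `f`
    (F : (Fin (2 * (d - 1)) → A) → (Fin (d - 1) → A))
    (hF : ∀ x : Fin (2 * (d - 1)) → A, ∀ i : Fin (d - 1),
      F x i = f (fun j : Fin d =>
        x ⟨(i : ℕ) + (j : ℕ), by have := i.isLt; have := j.isLt; omega⟩))
    -- `cat x y` is the concatenation `x‖y`
    (cat : (Fin (d - 1) → A) → (Fin (d - 1) → A) → (Fin (2 * (d - 1)) → A))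
    (hcat : ∀ x y : Fin (d - 1) → A, ∀ j : Fin (2 * (d - 1)),
      cat x y j = if h : (j : ℕ) < d - 1 then x ⟨(j : ℕ), h⟩
        else y ⟨(j : ℕ) - (d - 1), by have := j.isLt; omega⟩) :
    -- the square has order `q^(d-1)`, every row is a permutation, every column is a permutation
    Fintype.card (Fin (d - 1) → A) = q ^ (d - 1) ∧
    (∀ x : Fin (d - 1) → A, Function.Bijective (fun y : Fin (d - 1) → A => F (cat x y))) ∧
    (∀ y : Fin (d - 1) → A, Function.Bijective (fun x : Fin (d - 1) → A => F (cat x y))) :=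
  ⟨by rw [Fintype.card_fun, Fintype.card_fin, hq],
    fun x => Finite.injective_iff_bijective.mp
      (nbca_row_injective (fun z => (hright z).1) hF hcat x),
    fun y => Finite.injective_iff_bijective.mp
      (nbca_column_injective (fun z => (hleft z).1) hF hcat y)⟩
end

section
/- Let q be a prime power, d ≥ 2, and let a_0,…,a_{d−1} and b_0,…,b_{d−1} be elements of F_q with a_0 ≠ 0, a_{d−1} ≠ 0, b_0 ≠ 0, b_{d−1} ≠ 0. Define the linear no-boundary cellular automata F, G : F_q^{2(d−1)} → F_q^{d−1} by F(z)_i = Σ_{j=0}^{d−1} a_j z_{i+j} and G(z)_i = Σ_{j=0}^{d−1} b_j z_{i+j} for 0 ≤ i ≤ d−2. Then the joint map H : F_q^{2(d−1)} → F_q^{d−1} × F_q^{d−1} defined by H(z) = (F(z), G(z)) is a bijection (equivalently, the Latin squares of order q^{d−1} generated by F and G are orthogonal) if and only if the polynomials p_f(X) = a_0 + a_1 X + ⋯ + a_{d−1} X^{d−1} and p_g(X) = b_0 + b_1 X + ⋯ + b_{d−1} X^{d−1} are coprime in F_q[X]. -/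
/-!
Up to reindexing, `z ↦ (F z, G z)` is `z ↦ z ᵥ* sylvester p_g p_f (d - 1) (d - 1)`: the columns
of the Sylvester matrix are the coefficient vectors of `X ^ i * p_f` and `X ^ i * p_g` for
`i < d - 1`, and pairing such a column with `z` is exactly one cell of the automaton. Hence the map
is bijective iff the Sylvester matrix is invertible, i.e. iff the resultant of `p_f` and `p_g`
(both of degree exactly `d - 1`) is nonzero, which over a field means that they are coprime.
-/

open Polynomial Matrix

namespace Polynomial

section Semiring

variable {R : Type*} [Semiring R]

theorem sum_C_mul_X_pow_eq_ofFn [DecidableEq R] (n : ℕ) (v : Fin n → R) :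
    ∑ i : Fin n, C (v i) * X ^ (i : ℕ) = ofFn n v := by
  simp [ofFn_eq_sum_monomial, C_mul_X_pow_eq_monomial]

theorem coeff_ofFn_val [DecidableEq R] {n : ℕ} (v : Fin n → R) (k : Fin n) :
    (ofFn n v).coeff k = v k :=
  ofFn_coeff_eq_val_of_lt v k.isLt

theorem natDegree_ofFn_succ [DecidableEq R] {n : ℕ} (v : Fin (n + 1) → R)
    (hv : v (Fin.last n) ≠ 0) : (ofFn (n + 1) v).natDegree = n :=
  le_antisymm (Nat.lt_succ_iff.mp (ofFn_natDegree_lt n.succ_pos v))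
    (le_natDegree_of_ne_zero ((coeff_ofFn_val v (Fin.last n)).trans_ne hv))

theorem sum_mul_ite_coeff_eq_sum_fin {N : ℕ} (p : R[X]) (z : Fin N → R) (j n : ℕ)
    (hjn : j + n < N) :
    ∑ i : Fin N, z i * (if (i : ℕ) ∈ Set.Icc j (j + n) then p.coeff (i - j) else 0) =
      ∑ k : Fin (n + 1), z ⟨j + k, by omega⟩ * p.coeff k := by
  symm
  refine Finset.sum_of_injOn (fun k : Fin (n + 1) => (⟨j + k, by omega⟩ : Fin N))
    (fun k _ l _ hkl => Fin.ext (by simpa using congrArg Fin.val hkl)) (fun _ _ => by simp)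
    ?_ (fun k _ => by simp [Fin.is_le k])
  intro i _ hi
  rw [mul_ite, mul_zero, ite_eq_right_iff]
  rintro ⟨hji, hij⟩
  exact absurd ⟨⟨i - j, by omega⟩, by simp, Fin.ext (by simp; omega)⟩ hi

theorem vecMul_sylvester_castAdd (f g : R[X]) (m n : ℕ) (z : Fin (m + n) → R) (j : Fin m) :
    (z ᵥ* sylvester f g m n) (Fin.castAdd n j) =
      ∑ k : Fin (n + 1), z ⟨j + k, by omega⟩ * g.coeff k := by
  simpa [vecMul, dotProduct, sylvester] using sum_mul_ite_coeff_eq_sum_fin g z j n (by omega)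

theorem vecMul_sylvester_natAdd (f g : R[X]) (m n : ℕ) (z : Fin (m + n) → R) (j : Fin n) :
    (z ᵥ* sylvester f g m n) (Fin.natAdd m j) =
      ∑ k : Fin (m + 1), z ⟨j + k, by omega⟩ * f.coeff k := by
  simpa [vecMul, dotProduct, sylvester] using sum_mul_ite_coeff_eq_sum_fin f z j m (by omega)

end Semiring

theorem bijective_vecMul_sylvester_iff {K : Type*} [Field K] {f g : K[X]} {m n : ℕ}
    (hf : f.natDegree = m) (hg : g.natDegree = n) (h : f ≠ 0 ∨ g ≠ 0) :
    Function.Bijective (fun z => z ᵥ* sylvester f g m n) ↔ IsCoprime f g := by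
  subst hf hg
  have hbij : Function.Bijective (fun z => z ᵥ* sylvester f g f.natDegree g.natDegree) ↔
      IsUnit (sylvester f g f.natDegree g.natDegree) :=
    ⟨fun hb => vecMul_injective_iff_isUnit.mp hb.injective,
      fun hu => ⟨vecMul_injective_iff_isUnit.mpr hu, vecMul_surjective_iff_isUnit.mpr hu⟩⟩
  rw [hbij, isUnit_iff_isUnit_det, isUnit_iff_ne_zero, ← resultant, Ne, resultant_eq_zero_iff]
  tauto

end Polynomial

open Polynomial in
/-- Two LBCA of diameter `d` generate orthogonal Latin squares iff their
associated polynomials are coprime. -/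
theorem stmt_2 (K : Type*) [Field K] (d : ℕ) (hd : 2 ≤ d)
    (a b : Fin d → K)
    (had : a ⟨d - 1, by omega⟩ ≠ 0)
    (hbd : b ⟨d - 1, by omega⟩ ≠ 0)
    (F G : (Fin (2 * (d - 1)) → K) → (Fin (d - 1) → K))
    (hF : ∀ z : Fin (2 * (d - 1)) → K, ∀ i : Fin (d - 1),
      F z i = ∑ j : Fin d, a j *
        z ⟨(i : ℕ) + (j : ℕ), by have := i.isLt; have := j.isLt; omega⟩)
    (hG : ∀ z : Fin (2 * (d - 1)) → K, ∀ i : Fin (d - 1),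
      G z i = ∑ j : Fin d, b j *
        z ⟨(i : ℕ) + (j : ℕ), by have := i.isLt; have := j.isLt; omega⟩) :
    Function.Bijective (fun z : Fin (2 * (d - 1)) → K => (F z, G z)) ↔
      IsCoprime (∑ j : Fin d, C (a j) * X ^ (j : ℕ))
        (∑ j : Fin d, C (b j) * X ^ (j : ℕ)) := by
  classical
  obtain ⟨m, rfl⟩ : ∃ m, d = m + 1 := ⟨d - 1, by omega⟩
  rw [sum_C_mul_X_pow_eq_ofFn, sum_C_mul_X_pow_eq_ofFn]
  have hf : (ofFn (m + 1) a).natDegree = m := natDegree_ofFn_succ a had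
  have hg : (ofFn (m + 1) b).natDegree = m := natDegree_ofFn_succ b hbd
  have hFG : (fun z => (F z, G z)) = (Fin.appendEquiv m m).symm ∘
      (fun w => w ᵥ* sylvester (ofFn (m + 1) b) (ofFn (m + 1) a) m m) ∘
      (finCongr (by omega : 2 * (m + 1 - 1) = m + m)).arrowCongr (.refl K) := by
    funext z
    refine Prod.ext (funext fun i => ?_) (funext fun i => ?_) <;>
      simp only [Function.comp_apply, Fin.appendEquiv_symm_apply, vecMul_sylvester_castAdd,
        vecMul_sylvester_natAdd, hF, hG, coeff_ofFn_val, Equiv.arrowCongr_apply, finCongr_symm,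
        finCongr_apply, Fin.cast_mk, Equiv.refl_apply, mul_comm]
  rw [hFG, Equiv.comp_bijective, Equiv.bijective_comp,
    bijective_vecMul_sylvester_iff hg hf (.inl (ne_zero_of_natDegree_gt (n := 0) (by omega))),
    isCoprime_comm]
end

section
/- Let q be a prime power, d ≥ 2, and k ≥ 2. For each 1 ≤ t ≤ k let a^{(t)}_0,…,a^{(t)}_{d−1} ∈ F_q with a^{(t)}_0 ≠ 0 and a^{(t)}_{d−1} ≠ 0, defining the linear no-boundary cellular automaton F_t : F_q^{2(d−1)} → F_q^{d−1} by F_t(z)_i = Σ_{j=0}^{d−1} a^{(t)}_j z_{i+j}, and the polynomial p_t(X) = Σ_{j=0}^{d−1} a^{(t)}_j X^j ∈ F_q[X]. Then the k Latin squares of order q^{d−1} generated by F_1,…,F_k are mutually orthogonal (i.e., for every pair s ≠ t the map z ↦ (F_s(z), F_t(z)) is a bijection of F_q^{2(d−1)} onto F_q^{d−1} × F_q^{d−1}) if and only if the polynomials p_1,…,p_k are pairwise coprime in F_q[X]. -/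
open Polynomial

namespace Stmt3Aux

variable {K : Type*} [Field K]

noncomputable def slice (f : K[X]) (a b : ℕ) : K[X] :=
  ∑ m ∈ Finset.range b, C (f.coeff (a + m)) * X ^ m

lemma coeff_slice (f : K[X]) (a b m : ℕ) :
    (slice f a b).coeff m = if m < b then f.coeff (a + m) else 0 := by
  rw [slice, finset_sum_coeff]
  simp only [coeff_C_mul, coeff_X_pow, mul_ite, mul_one, mul_zero]
  rw [Finset.sum_ite_eq (Finset.range b) m (fun m' => f.coeff (a + m'))]
  simp [Finset.mem_range]

lemma natDegree_slice_le (f : K[X]) (a b : ℕ) (hb : 1 ≤ b) :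
    (slice f a b).natDegree ≤ b - 1 := by
  rw [natDegree_le_iff_coeff_eq_zero]
  intro N hN
  rw [coeff_slice, if_neg (by omega)]

lemma keyA {n : ℕ} (hn : 1 ≤ n) (p q Z : K[X])
    (hpd : p.natDegree = n) (hqd : q.natDegree = n) (hp0 : p ≠ 0)
    (hco : IsCoprime p q)
    (hZ : ∀ m, 2 * n ≤ m → Z.coeff m = 0)
    (h1 : ∀ m, n ≤ m → m < 2 * n → (p * Z).coeff m = 0)
    (h2 : ∀ m, n ≤ m → m < 2 * n → (q * Z).coeff m = 0) : Z = 0 := by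
  have hZd : Z.natDegree ≤ 2 * n - 1 :=
    natDegree_le_iff_coeff_eq_zero.2 fun N hN => hZ N (by omega)
  have key : ∀ r : K[X], r.natDegree = n →
      (∀ m, n ≤ m → m < 2 * n → (r * Z).coeff m = 0) →
      r * Z = slice (r * Z) 0 n + slice (r * Z) (2 * n) n * X ^ (2 * n) := by
    intro r hrd hmid
    have hrZ : (r * Z).natDegree ≤ 3 * n - 1 := by
      refine natDegree_mul_le.trans ?_; omega
    ext m
    simp only [coeff_add, coeff_mul_X_pow', coeff_slice, Nat.zero_add]
    rcases lt_or_ge m n with hm | hm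
    · rw [if_pos hm, if_neg (show ¬ 2 * n ≤ m by omega), add_zero]
    rcases lt_or_ge m (2 * n) with hm2 | hm2
    · rw [if_neg (show ¬ m < n by omega), if_neg (show ¬ 2 * n ≤ m by omega),
        hmid m hm hm2, add_zero]
    rcases lt_or_ge m (3 * n) with hm3 | hm3
    · rw [if_neg (show ¬ m < n by omega), if_pos hm2, if_pos (show m - 2 * n < n by omega),
        Nat.add_sub_cancel' hm2, zero_add]
    · rw [if_neg (show ¬ m < n by omega), if_pos hm2, if_neg (show ¬ m - 2 * n < n by omega),
        coeff_eq_zero_of_natDegree_lt (by omega), add_zero]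
  have hP := key p hpd h1
  have hQ := key q hqd h2
  set A := slice (p * Z) 0 n with hA
  set B := slice (p * Z) (2 * n) n with hB
  set A' := slice (q * Z) 0 n with hA'
  set B' := slice (q * Z) (2 * n) n with hB'
  have hAd : A.natDegree ≤ n - 1 := natDegree_slice_le _ _ _ hn
  have hBd : B.natDegree ≤ n - 1 := natDegree_slice_le _ _ _ hn
  have hA'd : A'.natDegree ≤ n - 1 := natDegree_slice_le _ _ _ hn
  have hiden : q * A - p * A' = (p * B' - q * B) * X ^ (2 * n) := by
    have h : q * (A + B * X ^ (2 * n)) = p * (A' + B' * X ^ (2 * n)) := by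
      rw [← hP, ← hQ]; ring
    linear_combination h
  have hE : p * B' - q * B = 0 := by
    by_contra hE
    have hdeg : (q * A - p * A').natDegree ≤ 2 * n - 1 := by
      refine (natDegree_sub_le _ _).trans ?_
      have h1' : (q * A).natDegree ≤ 2 * n - 1 := natDegree_mul_le.trans (by omega)
      have h2' : (p * A').natDegree ≤ 2 * n - 1 := natDegree_mul_le.trans (by omega)
      omega
    rw [hiden, natDegree_mul hE (pow_ne_zero _ X_ne_zero), natDegree_X_pow] at hdeg
    omega
  have hD : q * A = p * A' := by
    have h := hiden; rw [hE, zero_mul, sub_eq_zero] at h; exact h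
  have hA0 : A = 0 := by
    have hdvd : p ∣ A := hco.dvd_of_dvd_mul_left ⟨A', hD⟩
    exact eq_zero_of_dvd_of_natDegree_lt hdvd (by omega)
  have hB0 : B = 0 := by
    have hqB : q * B = p * B' := by
      have h := hE; rw [sub_eq_zero] at h; exact h.symm
    have hdvd : p ∣ B := hco.dvd_of_dvd_mul_left ⟨B', hqB⟩
    exact eq_zero_of_dvd_of_natDegree_lt hdvd (by omega)
  have hPZ0 : p * Z = 0 := by rw [hP, hA0, hB0]; ring
  rcases mul_eq_zero.1 hPZ0 with h | h
  · exact absurd h hp0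
  · exact h

end Stmt3Aux

namespace Stmt3Aux2
open Stmt3Aux
variable {K : Type*} [Field K]

lemma keyB {n : ℕ} (hn : 1 ≤ n) (p q : K[X])
    (hpd : p.natDegree = n) (hqd : q.natDegree = n)
    (hnc : ¬ IsCoprime p q) :
    ∃ Z : K[X], Z ≠ 0 ∧ (∀ m, 2 * n ≤ m → Z.coeff m = 0) ∧
      (∀ m, n ≤ m → m < 2 * n → (p * Z).coeff m = 0) ∧
      (∀ m, n ≤ m → m < 2 * n → (q * Z).coeff m = 0) := by
  classical
  have hp0 : p ≠ 0 := fun h => by simp [h] at hpd; omega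
  have hq0 : q ≠ 0 := fun h => by simp [h] at hqd; omega
  set g := EuclideanDomain.gcd p q with hg
  have hgp : g ∣ p := EuclideanDomain.gcd_dvd_left p q
  have hgq : g ∣ q := EuclideanDomain.gcd_dvd_right p q
  have hg0 : g ≠ 0 := by
    intro h
    rw [h, zero_dvd_iff] at hgp
    exact hp0 hgp
  have hgu : ¬ IsUnit g := by
    intro hu
    obtain ⟨c, hc⟩ := isUnit_iff_exists_inv.1 hu
    refine hnc ⟨EuclideanDomain.gcdA p q * c, EuclideanDomain.gcdB p q * c, ?_⟩
    have hb := EuclideanDomain.gcd_eq_gcd_ab p q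
    calc EuclideanDomain.gcdA p q * c * p + EuclideanDomain.gcdB p q * c * q
        = (p * EuclideanDomain.gcdA p q + q * EuclideanDomain.gcdB p q) * c := by ring
      _ = g * c := by rw [← hb]
      _ = 1 := hc
  have he1 : 1 ≤ g.natDegree := by
    by_contra h
    have h0 : g.natDegree = 0 := by omega
    have := eq_C_of_natDegree_eq_zero h0
    apply hgu
    rw [this]
    exact isUnit_C.2 (isUnit_iff_ne_zero.2 (fun hc => hg0 (by rw [this, hc, map_zero])))
  have hen : g.natDegree ≤ n := hpd ▸ natDegree_le_of_dvd hgp hp0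
  -- make monic
  set h : K[X] := g * C (g.leadingCoeff)⁻¹ with hh
  have hmon : h.Monic := monic_mul_leadingCoeff_inv hg0
  have hhd : h.natDegree = g.natDegree :=
    natDegree_mul_C_eq_of_mul_eq_one (inv_mul_cancel₀ (leadingCoeff_ne_zero.2 hg0))
  have hgh : g = h * C g.leadingCoeff := by
    rw [hh, mul_assoc, ← C_mul, inv_mul_cancel₀ (leadingCoeff_ne_zero.2 hg0), C_1, mul_one]
  have hhp : h ∣ p := dvd_trans ⟨C g.leadingCoeff, hgh⟩ hgp
  have hhq : h ∣ q := dvd_trans ⟨C g.leadingCoeff, hgh⟩ hgq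
  set e := g.natDegree with hge
  -- division
  set Q : K[X] := X ^ (2 * n) /ₘ h with hQdef
  set R : K[X] := X ^ (2 * n) %ₘ h with hRdef
  have hdiv : R + h * Q = X ^ (2 * n) := modByMonic_add_div _ h
  have hRd : ∀ m, e ≤ m → R.coeff m = 0 := by
    intro m hm
    have := degree_modByMonic_lt (X ^ (2 * n) : K[X]) hmon
    rw [degree_eq_natDegree hmon.ne_zero, hhd] at this
    exact coeff_eq_zero_of_degree_lt (lt_of_lt_of_le this (by exact_mod_cast hm))
  have hhQ : h * Q = X ^ (2 * n) - R := by rw [← hdiv]; ring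
  have hmid : ∀ m, e ≤ m → m < 2 * n → (h * Q).coeff m = 0 := by
    intro m hm hm2
    rw [hhQ, coeff_sub, coeff_X_pow, if_neg (by omega), hRd m hm, sub_zero]
  have hhQne : h * Q ≠ 0 := by
    intro hcontra
    have : (h * Q).coeff (2 * n) = 1 := by
      rw [hhQ, coeff_sub, coeff_X_pow, if_pos rfl, hRd (2 * n) (by omega), sub_zero]
    rw [hcontra] at this
    simp at this
  have hQ0 : Q ≠ 0 := fun hc => hhQne (by rw [hc, mul_zero])
  have hhQd : (h * Q).natDegree = 2 * n := by
    apply le_antisymm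
    · rw [hhQ]
      refine (natDegree_sub_le _ _).trans ?_
      have : R.natDegree ≤ 2 * n := by
        rw [natDegree_le_iff_coeff_eq_zero]
        exact fun N hN => hRd N (by omega)
      simp [natDegree_X_pow]; omega
    · exact le_natDegree_of_ne_zero (by
        rw [hhQ, coeff_sub, coeff_X_pow, if_pos rfl, hRd (2 * n) (by omega), sub_zero]
        exact one_ne_zero)
  have hQd : Q.natDegree = 2 * n - e := by
    have := natDegree_mul hmon.ne_zero hQ0
    rw [hhQd, hhd] at this
    omega
  have htop : ∀ m, 2 * n ≤ m → Q.coeff m = 0 := by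
    intro m hm
    exact coeff_eq_zero_of_natDegree_lt (by omega)
  have main : ∀ r : K[X], r.natDegree = n → h ∣ r →
      ∀ m, n ≤ m → m < 2 * n → (r * Q).coeff m = 0 := by
    intro r hrd hhr m hm hm2
    obtain ⟨c, hc⟩ := hhr
    have hc0 : c ≠ 0 := by
      intro hcc
      rw [hcc, mul_zero] at hc
      rw [hc] at hrd
      simp at hrd; omega
    have hcd : c.natDegree = n - e := by
      have := natDegree_mul hmon.ne_zero hc0
      rw [← hc, hrd, hhd] at this
      omega
    have : r * Q = c * (h * Q) := by rw [hc]; ring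
    rw [this, coeff_mul]
    apply Finset.sum_eq_zero
    intro x hx
    rw [Finset.HasAntidiagonal.mem_antidiagonal] at hx
    by_cases hx1 : n - e < x.1
    · rw [coeff_eq_zero_of_natDegree_lt (by omega), zero_mul]
    · rw [hmid x.2 (by omega) (by omega), mul_zero]
  exact ⟨Q, hQ0, htop, main p hpd hhp, main q hqd hhq⟩

end Stmt3Aux2

namespace Stmt3Trans
variable {K : Type*} [Field K]

lemma coeff_p {d : ℕ} (a : Fin d → K) (c : ℕ) :
    (∑ j : Fin d, C (a j) * X ^ (j : ℕ)).coeff c = if h : c < d then a ⟨c, h⟩ else 0 := by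
  rw [finset_sum_coeff]
  simp only [coeff_C_mul, coeff_X_pow, mul_ite, mul_one, mul_zero]
  split_ifs with h
  · rw [Finset.sum_eq_single (⟨c, h⟩ : Fin d)]
    · simp
    · intro b _ hb
      rw [if_neg (fun hc => hb (Fin.ext hc.symm))]
    · simp
  · apply Finset.sum_eq_zero
    intro j _
    rw [if_neg (fun hc => h (by rw [hc]; exact j.isLt))]

lemma natDegree_p {d : ℕ} (hd : 2 ≤ d) (a : Fin d → K)
    (had : a ⟨d - 1, by omega⟩ ≠ 0) :
    (∑ j : Fin d, C (a j) * X ^ (j : ℕ)).natDegree = d - 1 := by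
  apply le_antisymm
  · rw [natDegree_le_iff_coeff_eq_zero]
    intro N hN
    rw [coeff_p, dif_neg (by omega)]
  · apply le_natDegree_of_ne_zero
    rw [coeff_p, dif_pos (by omega)]
    exact had

lemma p_ne_zero {d : ℕ} (hd : 2 ≤ d) (a : Fin d → K)
    (had : a ⟨d - 1, by omega⟩ ≠ 0) :
    (∑ j : Fin d, C (a j) * X ^ (j : ℕ)) ≠ 0 := by
  intro h
  apply had
  have := coeff_p a (d - 1)
  rw [h, dif_pos (by omega)] at this
  simpa using this.symm

lemma coeff_P {d : ℕ} (hd : 2 ≤ d) (z : Fin (2 * (d - 1)) → K) (l : ℕ) :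
    (∑ m : Fin (2 * (d - 1)), monomial (2 * (d - 1) - 1 - (m : ℕ)) (z m)).coeff l
      = if h : l < 2 * (d - 1) then z ⟨2 * (d - 1) - 1 - l, by omega⟩ else 0 := by
  rw [finset_sum_coeff]
  simp only [coeff_monomial]
  split_ifs with h
  · rw [Finset.sum_eq_single (⟨2 * (d - 1) - 1 - l, by omega⟩ : Fin (2 * (d - 1)))]
    · rw [if_pos (by simp; omega)]
    · intro b _ hb
      rw [if_neg (fun hc => hb (Fin.ext (by have := b.isLt; simp at hc ⊢; omega)))]
    · simp
  · apply Finset.sum_eq_zero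
    intro m _
    rw [if_neg (by have := m.isLt; omega)]

lemma FP {d : ℕ} (hd : 2 ≤ d) (a : Fin d → K) (z : Fin (2 * (d - 1)) → K)
    (i : ℕ) (hi : i < d - 1) :
    ((∑ j : Fin d, C (a j) * X ^ (j : ℕ)) *
        (∑ m : Fin (2 * (d - 1)), monomial (2 * (d - 1) - 1 - (m : ℕ)) (z m))).coeff
        (2 * (d - 1) - 1 - i)
      = ∑ j : Fin d, a j * z ⟨i + (j : ℕ), by have := j.isLt; omega⟩ := by
  rw [Finset.mul_sum, finset_sum_coeff]
  have hterm : ∀ m : Fin (2 * (d - 1)),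
      ((∑ j : Fin d, C (a j) * X ^ (j : ℕ)) *
          monomial (2 * (d - 1) - 1 - (m : ℕ)) (z m)).coeff (2 * (d - 1) - 1 - i)
        = if 2 * (d - 1) - 1 - (m : ℕ) ≤ 2 * (d - 1) - 1 - i then
            (∑ j : Fin d, C (a j) * X ^ (j : ℕ)).coeff
              ((2 * (d - 1) - 1 - i) - (2 * (d - 1) - 1 - (m : ℕ))) * z m
          else 0 := by
    intro m
    rw [← C_mul_X_pow_eq_monomial, show (∑ j : Fin d, C (a j) * X ^ (j : ℕ)) *
          (C (z m) * X ^ (2 * (d - 1) - 1 - (m : ℕ)))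
        = ((∑ j : Fin d, C (a j) * X ^ (j : ℕ)) * C (z m)) * X ^ (2 * (d - 1) - 1 - (m : ℕ))
        by ring, coeff_mul_X_pow']
    split_ifs with h
    · rw [coeff_mul_C]
    · rfl
  rw [Finset.sum_congr rfl fun m _ => hterm m]
  have hemb : Function.Injective
      (fun j : Fin d => (⟨i + (j : ℕ), by have := j.isLt; omega⟩ : Fin (2 * (d - 1)))) := by
    intro x y hxy
    have : i + (x : ℕ) = i + (y : ℕ) := congrArg Fin.val hxy
    exact Fin.ext (by omega)
  rw [show (Finset.univ : Finset (Fin (2 * (d - 1))))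
      = Finset.univ.map ⟨_, hemb⟩
        ∪ ((Finset.univ : Finset (Fin (2 * (d - 1)))) \ Finset.univ.map ⟨_, hemb⟩) by
      rw [Finset.union_sdiff_of_subset (Finset.subset_univ _)],
    Finset.sum_union (Finset.disjoint_sdiff), Finset.sum_map]
  have hzero : ∀ m ∈ (Finset.univ : Finset (Fin (2 * (d - 1)))) \ Finset.univ.map ⟨_, hemb⟩,
      (if 2 * (d - 1) - 1 - (m : ℕ) ≤ 2 * (d - 1) - 1 - i then
          (∑ j : Fin d, C (a j) * X ^ (j : ℕ)).coeff
            ((2 * (d - 1) - 1 - i) - (2 * (d - 1) - 1 - (m : ℕ))) * z m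
        else 0) = 0 := by
    intro m hm
    rw [Finset.mem_sdiff, Finset.mem_map] at hm
    have hnot : ¬ (i ≤ (m : ℕ) ∧ (m : ℕ) < i + d) := by
      intro ⟨hle, hlt⟩
      exact hm.2 ⟨⟨(m : ℕ) - i, by omega⟩, Finset.mem_univ _, Fin.ext (by simp; omega)⟩
    have hmlt := m.isLt
    by_cases hmi : i ≤ (m : ℕ)
    · have : (m : ℕ) ≥ i + d := by omega
      rw [if_pos (by omega), show (2 * (d - 1) - 1 - i) - (2 * (d - 1) - 1 - (m : ℕ))
          = (m : ℕ) - i by omega, coeff_p, dif_neg (by omega), zero_mul]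
    · rw [if_neg (by omega)]
  rw [Finset.sum_eq_zero hzero, add_zero]
  apply Finset.sum_congr rfl
  intro j _
  have hj := j.isLt
  simp only [Function.Embedding.coeFn_mk]
  rw [if_pos (by omega),
    show (2 * (d - 1) - 1 - i) - (2 * (d - 1) - 1 - (i + (j : ℕ)))
      = (j : ℕ) by omega, coeff_p, dif_pos j.isLt]

end Stmt3Trans

open Polynomial in
/-- The Latin squares generated by `k` LBCA of diameter `d` are mutually
orthogonal iff the associated polynomials are pairwise coprime. -/
theorem stmt_3 (K : Type*) [Field K] [Fintype K] (d k : ℕ) (hd : 2 ≤ d) (hk : 2 ≤ k)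
    (a : Fin k → Fin d → K)
    (ha0 : ∀ t : Fin k, a t ⟨0, by omega⟩ ≠ 0)
    (had : ∀ t : Fin k, a t ⟨d - 1, by omega⟩ ≠ 0)
    (F : Fin k → (Fin (2 * (d - 1)) → K) → (Fin (d - 1) → K))
    (hF : ∀ t : Fin k, ∀ z : Fin (2 * (d - 1)) → K, ∀ i : Fin (d - 1),
      F t z i = ∑ j : Fin d, a t j *
        z ⟨(i : ℕ) + (j : ℕ), by have := i.isLt; have := j.isLt; omega⟩) :
    (∀ s t : Fin k, s ≠ t →
        Function.Bijective (fun z : Fin (2 * (d - 1)) → K => (F s z, F t z))) ↔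
      (∀ s t : Fin k, s ≠ t →
        IsCoprime (∑ j : Fin d, C (a s j) * X ^ (j : ℕ))
          (∑ j : Fin d, C (a t j) * X ^ (j : ℕ))) := by
  have hn : 1 ≤ d - 1 := by omega
  constructor
  · intro hbij s t hst
    by_contra hnc
    obtain ⟨Z, hZ0, hZtop, h1, h2⟩ := Stmt3Aux2.keyB hn _ _
      (Stmt3Trans.natDegree_p hd (a s) (had s)) (Stmt3Trans.natDegree_p hd (a t) (had t)) hnc
    set z : Fin (2 * (d - 1)) → K := fun m => Z.coeff (2 * (d - 1) - 1 - (m : ℕ)) with hz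
    have hPz : (∑ m : Fin (2 * (d - 1)), monomial (2 * (d - 1) - 1 - (m : ℕ)) (z m)) = Z := by
      ext l
      rw [Stmt3Trans.coeff_P hd]
      split_ifs with h
      · show Z.coeff (2 * (d - 1) - 1 - (2 * (d - 1) - 1 - l)) = Z.coeff l
        congr 1
        omega
      · exact (hZtop l (by omega)).symm
    have hFz : ∀ u : Fin k,
        (∀ m, d - 1 ≤ m → m < 2 * (d - 1) →
          ((∑ j : Fin d, C (a u j) * X ^ (j : ℕ)) * Z).coeff m = 0) →
        F u z = 0 := by
      intro u hu
      funext i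
      rw [hF u z i]
      have hi := i.isLt
      rw [← Stmt3Trans.FP hd (a u) z (i : ℕ) i.isLt, hPz]
      exact hu _ (by omega) (by omega)
    have hF0 : ∀ u : Fin k, F u (0 : Fin (2 * (d - 1)) → K) = 0 := by
      intro u
      funext i
      rw [hF u 0 i]
      simp
    have hzne : z ≠ 0 := by
      intro hzeq
      apply hZ0
      ext l
      rcases lt_or_ge l (2 * (d - 1)) with hl | hl
      · have h0 : z ⟨2 * (d - 1) - 1 - l, by omega⟩ = 0 := by rw [hzeq]; rfl
        have h0' : Z.coeff (2 * (d - 1) - 1 - (2 * (d - 1) - 1 - l)) = 0 := h0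
        rw [show 2 * (d - 1) - 1 - (2 * (d - 1) - 1 - l) = l by omega] at h0'
        simpa using h0'
      · simp [hZtop l hl]
    have hz0 : z = 0 := (hbij s t hst).injective (by
      show (F s z, F t z) = (F s 0, F t 0)
      rw [hFz s h1, hFz t h2, hF0 s, hF0 t])
    exact hzne hz0
  · intro hco s t hst
    rw [Fintype.bijective_iff_injective_and_card]
    constructor
    · intro z1 z2 hG
      simp only [Prod.mk.injEq] at hG
      obtain ⟨hGs, hGt⟩ := hG
      set w : Fin (2 * (d - 1)) → K := fun m => z1 m - z2 m with hw
      have hFw : ∀ u : Fin k, F u z1 = F u z2 → ∀ i : ℕ, ∀ hi : i < d - 1,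
          ∑ j : Fin d, a u j * w ⟨i + (j : ℕ), by have := j.isLt; omega⟩ = 0 := by
        intro u hu i hi
        have h1 := congrFun hu ⟨i, hi⟩
        rw [hF u z1 ⟨i, hi⟩, hF u z2 ⟨i, hi⟩] at h1
        calc ∑ j : Fin d, a u j * w ⟨i + (j : ℕ), by have := j.isLt; omega⟩
            = ∑ j : Fin d, (a u j * z1 ⟨i + (j : ℕ), by have := j.isLt; omega⟩
                - a u j * z2 ⟨i + (j : ℕ), by have := j.isLt; omega⟩) := by
              refine Finset.sum_congr rfl fun j _ => ?_
              show a u j * (z1 _ - z2 _) = _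
              ring
          _ = (∑ j : Fin d, a u j * z1 ⟨i + (j : ℕ), by have := j.isLt; omega⟩)
                - ∑ j : Fin d, a u j * z2 ⟨i + (j : ℕ), by have := j.isLt; omega⟩ :=
              Finset.sum_sub_distrib _ _
          _ = 0 := by
              have h2 : (∑ j : Fin d, a u j * z1 ⟨i + (j : ℕ), by have := j.isLt; omega⟩)
                  = ∑ j : Fin d, a u j * z2 ⟨i + (j : ℕ), by have := j.isLt; omega⟩ := h1
              rw [h2, sub_self]
      have hZtop : ∀ m, 2 * (d - 1) ≤ m →
          (∑ m' : Fin (2 * (d - 1)), monomial (2 * (d - 1) - 1 - (m' : ℕ)) (w m')).coeff m = 0 :=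
        fun m hm => by rw [Stmt3Trans.coeff_P hd, dif_neg (by omega)]
      have hmid : ∀ u : Fin k, F u z1 = F u z2 → ∀ m, d - 1 ≤ m → m < 2 * (d - 1) →
          ((∑ j : Fin d, C (a u j) * X ^ (j : ℕ)) *
            (∑ m' : Fin (2 * (d - 1)), monomial (2 * (d - 1) - 1 - (m' : ℕ)) (w m'))).coeff m
            = 0 := by
        intro u hu m hm1 hm2
        have h := hFw u hu (2 * (d - 1) - 1 - m) (by omega)
        rw [← Stmt3Trans.FP hd (a u) w (2 * (d - 1) - 1 - m) (by omega)] at h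
        rw [show m = 2 * (d - 1) - 1 - (2 * (d - 1) - 1 - m) by omega]
        exact h
      have hZ0 := Stmt3Aux.keyA hn _ _ _
        (Stmt3Trans.natDegree_p hd (a s) (had s)) (Stmt3Trans.natDegree_p hd (a t) (had t))
        (Stmt3Trans.p_ne_zero hd (a s) (had s)) (hco s t hst) hZtop (hmid s hGs) (hmid t hGt)
      funext m
      have hmlt := m.isLt
      have h0 : (∑ m' : Fin (2 * (d - 1)), monomial (2 * (d - 1) - 1 - (m' : ℕ)) (w m')).coeff
          (2 * (d - 1) - 1 - (m : ℕ)) = w m := by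
        rw [Stmt3Trans.coeff_P hd, dif_pos (by omega)]
        congr 1
        exact Fin.ext (by simp; omega)
      rw [hZ0] at h0
      simp only [coeff_zero] at h0
      exact sub_eq_zero.1 h0.symm
    · simp only [Fintype.card_fun, Fintype.card_prod, Fintype.card_fin]
      rw [← pow_add]
      congr 1
      omega
end

section
/- Let q be a prime power and n ≥ 1. The number of ordered pairs (f, g) of monic polynomials over F_q, each of degree n with nonzero constant term, such that f and g are coprime, equals q(q−1)^3 · (q^{2n−2} − 1)/(q^2 − 1) + (q−1)(q−2); equivalently, it equals q(q−1)^3 · Σ_{t=0}^{n−2} q^{2t} + (q−1)(q−2). -/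
open Polynomial Finset

namespace Stmt4Aux


/-- The claimed count of coprime pairs. -/
def Fm (q n : ℕ) : ℕ :=
  if n = 0 then 1
  else q * (q - 1) ^ 3 * (∑ t ∈ Finset.range (n - 1), q ^ (2 * t)) + (q - 1) * (q - 2)

lemma Fm_zero (q : ℕ) : Fm q 0 = 1 := rfl

lemma Fm_succ_sub (q n : ℕ) (hn : 1 ≤ n) :
    Fm q (n + 1) = Fm q n + q * (q - 1) ^ 3 * q ^ (2 * (n - 1)) := by
  obtain ⟨m, rfl⟩ := Nat.exists_eq_add_of_le hn
  simp only [Fm, if_neg (by omega : ¬ (1 + m + 1 = 0)), if_neg (by omega : ¬ (1 + m = 0))]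
  have h1 : 1 + m + 1 - 1 = (1 + m - 1) + 1 := by omega
  rw [h1, Finset.sum_range_succ]
  ring

lemma algB (q : ℕ) (hq : 2 ≤ q) :
    ∀ n, 1 ≤ n →
      Fm q n + ∑ i ∈ Finset.range n, ((q - 1) * q ^ i) * Fm q (n - (i + 1)) =
        (q - 1) ^ 2 * q ^ (2 * (n - 1)) := by
  intro n hn
  induction n, hn using Nat.le_induction with
  | base =>
      obtain ⟨r, rfl⟩ := Nat.exists_eq_add_of_le hq
      simp [Fm]
      ring_nf
  | succ n hn ih =>
      have hsum : ∑ i ∈ Finset.range (n + 1), ((q - 1) * q ^ i) * Fm q (n + 1 - (i + 1)) =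
          q * (∑ i ∈ Finset.range n, ((q - 1) * q ^ i) * Fm q (n - (i + 1)))
            + (q - 1) * Fm q n := by
        rw [Finset.sum_range_succ']
        have hterm : ∀ i ∈ Finset.range n,
            ((q - 1) * q ^ (i + 1)) * Fm q (n + 1 - (i + 1 + 1)) =
              q * (((q - 1) * q ^ i) * Fm q (n - (i + 1))) := by
          intro i _
          have h : n + 1 - (i + 1 + 1) = n - (i + 1) := by omega
          rw [h]; ring
        rw [Finset.sum_congr rfl hterm, ← Finset.mul_sum]
        simp
      -- add q * Fm q n to both sides
      apply Nat.add_right_cancel (m := q * Fm q n)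
      have hIH : q * Fm q n + q * (∑ i ∈ Finset.range n, ((q - 1) * q ^ i) * Fm q (n - (i + 1)))
          = q * ((q - 1) ^ 2 * q ^ (2 * (n - 1))) := by
        rw [← Nat.mul_add, ih]
      calc Fm q (n + 1) + ∑ i ∈ Finset.range (n + 1), ((q - 1) * q ^ i) * Fm q (n + 1 - (i + 1))
            + q * Fm q n
          = Fm q (n + 1) + (q - 1) * Fm q n +
              (q * Fm q n + q * (∑ i ∈ Finset.range n, ((q - 1) * q ^ i) * Fm q (n - (i + 1))))
            := by rw [hsum]; ring
        _ = Fm q (n + 1) + (q - 1) * Fm q n + q * ((q - 1) ^ 2 * q ^ (2 * (n - 1))) := by rw [hIH]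
        _ = (q - 1) ^ 2 * q ^ (2 * (n + 1 - 1)) + q * Fm q n := by
            rw [Fm_succ_sub q n hn]
            obtain ⟨m, rfl⟩ := Nat.exists_eq_add_of_le hn
            obtain ⟨r, rfl⟩ := Nat.exists_eq_add_of_le hq
            have e1 : 1 + m - 1 = m := by omega
            have e2 : 1 + m + 1 - 1 = m + 1 := by omega
            have e3 : 2 + r - 1 = r + 1 := by omega
            rw [e1, e2, e3]
            have e4 : 2 * (m + 1) = 2 * m + 2 := by ring
            rw [e4, pow_add]
            ring



variable {K : Type*} [Field K] [Fintype K]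

/-- Monic polynomials of degree `n` with nonzero constant term. -/
def pS (K : Type*) [Field K] (n : ℕ) : Set (Polynomial K) :=
  {f | f.Monic ∧ f.natDegree = n ∧ f.coeff 0 ≠ 0}

/-- Coprime pairs from `pS n × pS n`. -/
def pC (K : Type*) [Field K] (n : ℕ) : Set (Polynomial K × Polynomial K) :=
  {p | p.1 ∈ pS K n ∧ p.2 ∈ pS K n ∧ IsCoprime p.1 p.2}

lemma finite_natDegree_le (n : ℕ) : {f : K[X] | f.natDegree ≤ n}.Finite := by
  have hinj : Set.InjOn (fun f : K[X] => fun i : Fin (n + 1) => f.coeff i)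
      {f : K[X] | f.natDegree ≤ n} := by
    intro f hf g hg h
    ext i
    by_cases hi : i ≤ n
    · exact congrFun h ⟨i, by omega⟩
    · rw [coeff_eq_zero_of_natDegree_lt (by simp only [Set.mem_setOf_eq] at hf; omega),
        coeff_eq_zero_of_natDegree_lt (by simp only [Set.mem_setOf_eq] at hg; omega)]
  exact Set.Finite.of_finite_image (Set.toFinite _) hinj

lemma finite_pS (n : ℕ) : (pS K n).Finite :=
  (finite_natDegree_le n).subset (fun f hf => hf.2.1.le)

lemma finite_pC (n : ℕ) : (pC K n).Finite :=
  ((finite_pS n).prod (finite_pS n)).subset (fun p hp => ⟨hp.1, hp.2.1⟩)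

lemma pS_zero : pS K 0 = {1} := by
  ext f
  constructor
  · rintro ⟨hm, hd, -⟩
    exact (Polynomial.Monic.natDegree_eq_zero hm).mp hd
  · rintro rfl
    exact ⟨monic_one, natDegree_one, by simp⟩

lemma ncard_pS_zero : (pS K 0).ncard = 1 := by
  rw [pS_zero]; exact Set.ncard_singleton 1

lemma pC_zero : pC K 0 = {(1, 1)} := by
  ext p
  constructor
  · rintro ⟨h1, h2, -⟩
    rw [pS_zero] at h1 h2
    exact Prod.ext h1 h2
  · rintro rfl
    exact ⟨by rw [pS_zero]; rfl, by rw [pS_zero]; rfl, isCoprime_one_left⟩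

lemma ncard_pC_zero : (pC K 0).ncard = 1 := by
  rw [pC_zero]; exact Set.ncard_singleton _

/-- The polynomial built from a coefficient vector. -/
noncomputable def phi (m : ℕ) (v : Fin (m + 1) → K) : K[X] :=
  X ^ (m + 1) + ∑ i : Fin (m + 1), C (v i) * X ^ (i : ℕ)

lemma degree_sum_lt (m : ℕ) (v : Fin (m + 1) → K) :
    (∑ i : Fin (m + 1), C (v i) * X ^ (i : ℕ)).degree < ((m + 1 : ℕ) : WithBot ℕ) := by
  apply lt_of_le_of_lt (degree_sum_le _ _)
  rw [Finset.sup_lt_iff (by exact_mod_cast WithBot.bot_lt_coe (m + 1))]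
  intro i _
  exact lt_of_le_of_lt (degree_C_mul_X_pow_le _ _) (by exact_mod_cast i.isLt)

lemma phi_monic (m : ℕ) (v : Fin (m + 1) → K) : (phi m v).Monic :=
  monic_X_pow_add (degree_sum_lt m v)

lemma phi_natDegree (m : ℕ) (v : Fin (m + 1) → K) : (phi m v).natDegree = m + 1 := by
  have hd : (phi m v).degree = (m + 1 : ℕ) := by
    rw [phi, degree_add_eq_left_of_degree_lt (by rw [degree_X_pow]; exact degree_sum_lt m v),
      degree_X_pow]
  exact natDegree_eq_of_degree_eq_some hd

lemma phi_coeff (m : ℕ) (v : Fin (m + 1) → K) (j : Fin (m + 1)) :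
    (phi m v).coeff j = v j := by
  rw [phi, coeff_add, coeff_X_pow, if_neg (by omega : (j : ℕ) ≠ m + 1),
    finset_sum_coeff]
  rw [Finset.sum_eq_single j]
  · simp [coeff_C_mul, coeff_X_pow]
  · intro b _ hb
    simp only [coeff_C_mul, coeff_X_pow]
    rw [if_neg (by simpa [Fin.ext_iff] using (Ne.symm hb)), mul_zero]
  · simp

lemma phi_injective (m : ℕ) : Function.Injective (phi (K := K) m) := by
  intro v w h
  funext j
  rw [← phi_coeff m v j, ← phi_coeff m w j, h]

lemma pS_eq_image (m : ℕ) :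
    pS K (m + 1) = phi m '' {v : Fin (m + 1) → K | v 0 ≠ 0} := by
  ext f
  constructor
  · rintro ⟨hm, hd, hc⟩
    refine ⟨fun i => f.coeff i, by simpa using hc, ?_⟩
    rw [phi]
    have hf : f = ∑ i ∈ Finset.range (m + 2), monomial i (f.coeff i) :=
      f.as_sum_range' (m + 2) (by omega)
    rw [Fin.sum_univ_eq_sum_range (fun i => C (f.coeff i) * X ^ i) (m + 1)]
    have hlead : f.coeff (m + 1) = 1 := hd ▸ hm.coeff_natDegree
    conv_rhs => rw [hf, Finset.sum_range_succ, hlead, ← Polynomial.X_pow_eq_monomial]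
    rw [add_comm]
    congr 1
    apply Finset.sum_congr rfl
    intro i _
    rw [Polynomial.C_mul_X_pow_eq_monomial]
  · rintro ⟨v, hv, rfl⟩
    refine ⟨phi_monic m v, phi_natDegree m v, ?_⟩
    have h0 : (phi m v).coeff 0 = v 0 := by simpa using phi_coeff m v 0
    rw [h0]
    exact hv

lemma ncard_vset (m : ℕ) :
    ({v : Fin (m + 1) → K | v 0 ≠ 0}).ncard =
      (Fintype.card K - 1) * Fintype.card K ^ m := by
  classical
  have e1 : {v : Fin (m + 1) → K // v 0 ≠ 0} ≃ {p : K × (Fin m → K) // p.1 ≠ 0} :=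
    (Fin.consEquiv (fun _ : Fin (m + 1) => K)).symm.subtypeEquiv (by
      intro v
      simp [Fin.consEquiv])
  have e2 : {p : K × (Fin m → K) // p.1 ≠ 0} ≃ {x : K // x ≠ 0} × (Fin m → K) :=
    Equiv.prodSubtypeFstEquivSubtypeProd (p := fun x : K => x ≠ 0)
  rw [← Nat.card_coe_set_eq]
  have hcongr : Nat.card ↥{v : Fin (m + 1) → K | v 0 ≠ 0} =
      Nat.card ({x : K // x ≠ 0} × (Fin m → K)) :=
    Nat.card_congr ((Equiv.setCongr rfl).trans (e1.trans e2))
  rw [hcongr, Nat.card_eq_fintype_card, Fintype.card_prod, Fintype.card_fun, Fintype.card_fin]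
  congr 1
  have : Fintype.card {x : K // x ≠ 0} = Fintype.card K - Fintype.card {x : K // x = 0} :=
    Fintype.card_subtype_compl _
  rw [this, Fintype.card_subtype_eq]

lemma ncard_pS_succ (m : ℕ) :
    (pS K (m + 1)).ncard = (Fintype.card K - 1) * Fintype.card K ^ m := by
  rw [pS_eq_image, Set.ncard_image_of_injOn ((phi_injective m).injOn), ncard_vset]

noncomputable def mu : K[X] × (K[X] × K[X]) → K[X] × K[X] := fun x => (x.1 * x.2.1, x.1 * x.2.2)

variable [DecidableEq K]

lemma gcd_eq_one_of_isCoprime {a b : K[X]} (h : IsCoprime a b) : gcd a b = 1 := by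
  rw [← _root_.normalize_gcd, normalize_eq_one]
  exact (gcd_isUnit_iff a b).2 h

lemma mul_mem_pS {k l : ℕ} {d a : K[X]} (hd : d ∈ pS K k) (ha : a ∈ pS K l) :
    d * a ∈ pS K (k + l) := by
  obtain ⟨hdm, hdd, hdc⟩ := hd
  obtain ⟨ham, had, hac⟩ := ha
  refine ⟨hdm.mul ham, ?_, ?_⟩
  · rw [natDegree_mul hdm.ne_zero ham.ne_zero, hdd, had]
  · rw [mul_coeff_zero]; exact mul_ne_zero hdc hac

lemma gcd_mu {k m : ℕ} {d a b : K[X]} (hd : d ∈ pS K k) (hab : (a, b) ∈ pC K m) :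
    gcd (d * a) (d * b) = d := by
  rw [_root_.gcd_mul_left, gcd_eq_one_of_isCoprime hab.2.2, mul_one, hd.1.normalize_eq_self]

lemma injOn_mu {n k : ℕ} : Set.InjOn mu ((pS K k) ×ˢ (pC K (n - k))) := by
  rintro ⟨d, a, b⟩ hx ⟨d', a', b'⟩ hy h
  obtain ⟨hd, hab⟩ := hx
  obtain ⟨hd', hab'⟩ := hy
  have h1 : d * a = d' * a' := congrArg Prod.fst h
  have h2 : d * b = d' * b' := congrArg Prod.snd h
  have hg : d = d' := by
    have e1 : gcd (d * a) (d * b) = d := gcd_mu hd hab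
    have e2 : gcd (d' * a') (d' * b') = d' := gcd_mu hd' hab'
    rw [← e1, h1, h2, e2]
  subst hg
  have ha : a = a' := mul_left_cancel₀ hd.1.ne_zero h1
  have hb : b = b' := mul_left_cancel₀ hd.1.ne_zero h2
  simp [ha, hb]

lemma cover (n : ℕ) :
    (pS K n) ×ˢ (pS K n) = ⋃ k ∈ Finset.range (n + 1), mu '' ((pS K k) ×ˢ (pC K (n - k))) := by
  ext ⟨f, g⟩
  simp only [Set.mem_iUnion, Set.mem_image, Finset.mem_range, Set.mem_prod]
  constructor
  · rintro ⟨hf, hg⟩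
    have hf0 : f ≠ 0 := hf.1.ne_zero
    have hg0 : g ≠ 0 := hg.1.ne_zero
    have hd0 : gcd f g ≠ 0 := gcd_ne_zero_of_left hf0
    have hdm : (gcd f g).Monic := by
      have := Polynomial.monic_normalize (p := gcd f g) hd0
      rwa [_root_.normalize_gcd] at this
    have hfd : gcd f g * (f / gcd f g) = f :=
      EuclideanDomain.mul_div_cancel' hd0 (gcd_dvd_left f g)
    have hgd : gcd f g * (g / gcd f g) = g :=
      EuclideanDomain.mul_div_cancel' hd0 (gcd_dvd_right f g)
    have ham : (f / gcd f g).Monic := hdm.of_mul_monic_left (by rw [hfd]; exact hf.1)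
    have hbm : (g / gcd f g).Monic := hdm.of_mul_monic_left (by rw [hgd]; exact hg.1)
    have hdeg : (gcd f g).natDegree + (f / gcd f g).natDegree = n := by
      have h1 : (gcd f g * (f / gcd f g)).natDegree = n := by rw [hfd]; exact hf.2.1
      rwa [natDegree_mul hd0 ham.ne_zero] at h1
    have hdeg' : (gcd f g).natDegree + (g / gcd f g).natDegree = n := by
      have h1 : (gcd f g * (g / gcd f g)).natDegree = n := by rw [hgd]; exact hg.2.1
      rwa [natDegree_mul hd0 hbm.ne_zero] at h1
    have hc : (gcd f g).coeff 0 * (f / gcd f g).coeff 0 ≠ 0 := by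
      rw [← mul_coeff_zero, hfd]; exact hf.2.2
    have hc' : (gcd f g).coeff 0 * (g / gcd f g).coeff 0 ≠ 0 := by
      rw [← mul_coeff_zero, hgd]; exact hg.2.2
    obtain ⟨hdc, hac⟩ := mul_ne_zero_iff.mp hc
    obtain ⟨-, hbc⟩ := mul_ne_zero_iff.mp hc'
    have e1 : (f / gcd f g).natDegree = n - (gcd f g).natDegree := by omega
    have e2 : (g / gcd f g).natDegree = n - (gcd f g).natDegree := by omega
    refine ⟨(gcd f g).natDegree, by omega, (gcd f g, (f / gcd f g, g / gcd f g)),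
      ⟨⟨hdm, rfl, hdc⟩, ⟨ham, e1, hac⟩, ⟨hbm, e2, hbc⟩,
        isCoprime_div_gcd_div_gcd hg0⟩, ?_⟩
    simp [mu, hfd, hgd]
  · rintro ⟨k, hk, ⟨d, a, b⟩, ⟨hd, hab⟩, heq⟩
    simp only [mu, Prod.mk.injEq] at heq
    obtain ⟨rfl, rfl⟩ := heq
    have hfm := mul_mem_pS hd hab.1
    have hgm := mul_mem_pS hd hab.2.1
    have hkn : k + (n - k) = n := by omega
    rw [hkn] at hfm hgm
    exact ⟨hfm, hgm⟩

lemma mem_mu_gcd {n k : ℕ} {f g : K[X]}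
    (h : (f, g) ∈ mu '' ((pS K k) ×ˢ (pC K (n - k)))) : (gcd f g).natDegree = k := by
  obtain ⟨⟨d, a, b⟩, ⟨hd, hab⟩, heq⟩ := h
  have h1 : d * a = f := congrArg Prod.fst heq
  have h2 : d * b = g := congrArg Prod.snd heq
  rw [← h1, ← h2, gcd_mu hd hab, hd.2.1]


lemma ncard_prod' {α β : Type*} (s : Set α) (t : Set β) :
    (s ×ˢ t).ncard = s.ncard * t.ncard := by
  rw [← Nat.card_coe_set_eq, ← Nat.card_coe_set_eq, ← Nat.card_coe_set_eq,
    ← Nat.card_prod]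
  exact Nat.card_congr (Equiv.Set.prod s t)

lemma ncard_biUnion' {α : Type*} (s : Finset ℕ) (U : ℕ → Set α)
    (hfin : ∀ k ∈ s, (U k).Finite)
    (hdisj : ∀ k ∈ s, ∀ l ∈ s, k ≠ l → Disjoint (U k) (U l)) :
    (⋃ k ∈ s, U k).ncard = ∑ k ∈ s, (U k).ncard := by
  classical
  revert hfin hdisj
  induction s using Finset.induction_on with
  | empty => simp
  | @insert a s ha ih =>
      intro hfin hdisj
      have hfin' : ∀ k ∈ s, (U k).Finite := fun k hk => hfin k (Finset.mem_insert_of_mem hk)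
      have hdisj' : ∀ k ∈ s, ∀ l ∈ s, k ≠ l → Disjoint (U k) (U l) :=
        fun k hk l hl => hdisj k (Finset.mem_insert_of_mem hk) l (Finset.mem_insert_of_mem hl)
      have hUfin : (⋃ k ∈ s, U k).Finite := Set.Finite.biUnion s.finite_toSet hfin'
      have hdis : Disjoint (U a) (⋃ k ∈ s, U k) := by
        simp only [Set.disjoint_iUnion_right]
        intro l hl
        exact hdisj a (Finset.mem_insert_self a s) l (Finset.mem_insert_of_mem hl)
          (by rintro rfl; exact ha hl)
      rw [Finset.set_biUnion_insert,
        Set.ncard_union_eq hdis (hfin a (Finset.mem_insert_self a s)) hUfin,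
        Finset.sum_insert ha, ih hfin' hdisj']

variable [DecidableEq K]

lemma keyA (n : ℕ) :
    ((pS K n) ×ˢ (pS K n)).ncard =
      ∑ k ∈ Finset.range (n + 1), (pS K k).ncard * (pC K (n - k)).ncard := by
  rw [cover n, ncard_biUnion']
  · exact Finset.sum_congr rfl fun k _ => by
      rw [Set.ncard_image_of_injOn injOn_mu, ncard_prod']
  · intro k _
    exact ((finite_pS k).prod (finite_pC (n - k))).image _
  · intro k _ l _ hkl
    rw [Set.disjoint_left]
    rintro ⟨f, g⟩ hfk hfl
    exact hkl ((mem_mu_gcd hfk).symm.trans (mem_mu_gcd hfl))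

lemma main_count (n : ℕ) : (pC K n).ncard = Fm (Fintype.card K) n := by
  induction n using Nat.strong_induction_on with
  | _ n ih =>
    match n, ih with
    | 0, _ => rw [ncard_pC_zero, Fm_zero]
    | (m + 1), ih =>
      set q := Fintype.card K with hqdef
      have hq2 : 2 ≤ q := Fintype.one_lt_card
      have hA := keyA (K := K) (m + 1)
      rw [ncard_prod', ncard_pS_succ, Finset.sum_range_succ'] at hA
      have hterm : ∀ i ∈ Finset.range (m + 1),
          (pS K (i + 1)).ncard * (pC K (m + 1 - (i + 1))).ncard =
            ((q - 1) * q ^ i) * Fm q (m + 1 - (i + 1)) := by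
        intro i hi
        rw [Finset.mem_range] at hi
        rw [ncard_pS_succ, ih (m + 1 - (i + 1)) (by omega)]
      rw [Finset.sum_congr rfl hterm, ncard_pS_zero, one_mul, Nat.sub_zero] at hA
      have hB := algB q hq2 (m + 1) (by omega)
      have hRHS : ((q - 1) * q ^ m) * ((q - 1) * q ^ m) =
          (q - 1) ^ 2 * q ^ (2 * (m + 1 - 1)) := by
        have : m + 1 - 1 = m := by omega
        rw [this, two_mul, pow_add]
        ring
      rw [hRHS] at hA
      omega
end Stmt4Aux

open Polynomial in
/-- The number of ordered pairs of coprime monic polynomials of degree `n`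
with nonzero constant term over `F_q` equals
`q(q-1)^3 · Σ_{t=0}^{n-2} q^(2t) + (q-1)(q-2)` (the sum form of
`q(q-1)^3 (q^(2n-2)-1)/(q^2-1) + (q-1)(q-2)`). -/
theorem stmt_4 (K : Type*) [Field K] [Fintype K] (q n : ℕ) (hq : q = Fintype.card K)
    (hn : 1 ≤ n) :
    {p : Polynomial K × Polynomial K |
        p.1.Monic ∧ p.1.natDegree = n ∧ p.1.coeff 0 ≠ 0 ∧
        p.2.Monic ∧ p.2.natDegree = n ∧ p.2.coeff 0 ≠ 0 ∧
        IsCoprime p.1 p.2}.ncard =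
      q * (q - 1) ^ 3 * (∑ t ∈ Finset.range (n - 1), q ^ (2 * t)) +
        (q - 1) * (q - 2) := by
  classical
  subst hq
  have hset : {p : Polynomial K × Polynomial K |
      p.1.Monic ∧ p.1.natDegree = n ∧ p.1.coeff 0 ≠ 0 ∧
      p.2.Monic ∧ p.2.natDegree = n ∧ p.2.coeff 0 ≠ 0 ∧
      IsCoprime p.1 p.2} = Stmt4Aux.pC K n := by
    ext p
    simp only [Set.mem_setOf_eq, Stmt4Aux.pC, Stmt4Aux.pS]
    tauto
  rw [hset, Stmt4Aux.main_count n, Stmt4Aux.Fm, if_neg (by omega : ¬ n = 0)]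
end

section
/- Let q be a prime power and n ≥ 1. For e ≥ 1 let a_e denote the number of ordered pairs of coprime monic polynomials over F_q, each of degree e with nonzero constant term, and set a_0 = 1. Then the number of ordered pairs (f, g) of monic polynomials over F_q, each of degree n with nonzero constant term, such that f and g are NOT coprime, equals Σ_{e=0}^{n−1} a_e · (q−1) q^{n−e−1}. -/
open Polynomial in
/-- `coprimePairs K e` is the number `a_e` of ordered pairs of coprime monic polynomials
over `K` of degree `e` with nonzero constant term (note `coprimePairs K 0 = 1`). -/
noncomputable def coprimePairs (K : Type*) [Field K] (e : ℕ) : ℕ :=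
  {p : Polynomial K × Polynomial K |
    p.1.Monic ∧ p.1.natDegree = e ∧ p.1.coeff 0 ≠ 0 ∧
    p.2.Monic ∧ p.2.natDegree = e ∧ p.2.coeff 0 ≠ 0 ∧
    IsCoprime p.1 p.2}.ncard

open Polynomial


lemma aux_finite_deg_le (K : Type*) [Field K] [Fintype K] (d : ℕ) :
    {p : K[X] | p.natDegree ≤ d}.Finite := by
  classical
  apply Set.Finite.of_finite_image (f := fun p (i : Fin (d+1)) => p.coeff i) (Set.toFinite _)
  intro p hp r hr hpr
  ext k
  by_cases hk : k ≤ d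
  · exact congrFun hpr ⟨k, Nat.lt_succ_of_le hk⟩
  · rw [Polynomial.coeff_eq_zero_of_natDegree_lt (lt_of_le_of_lt hp (not_le.mp hk)),
      Polynomial.coeff_eq_zero_of_natDegree_lt (lt_of_le_of_lt hr (not_le.mp hk))]

lemma aux_gcd_mul_coprime {K : Type*} [Field K] [DecidableEq K] {h i j : K[X]} (hm : h.Monic)
    (hc : IsCoprime i j) : gcd (h * i) (h * j) = h := by
  have h1 : gcd i j = 1 := by
    rw [← normalize_gcd, normalize_eq_one]
    exact (gcd_isUnit_iff i j).mpr hc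
  rw [gcd_mul_left, h1, mul_one, hm.normalize_eq_self]

lemma aux_gcd_monic {K : Type*} [Field K] [DecidableEq K] {f g : K[X]} (hf : f ≠ 0) :
    (gcd f g).Monic := by
  have : gcd f g ≠ 0 := fun h => hf ((gcd_eq_zero_iff f g).mp h).1
  rw [← normalize_gcd]
  exact monic_normalize this

lemma aux_ncard_biUnion {α : Type*} (A : ℕ → Set α) :
    ∀ m, (∀ e, e < m → (A e).Finite) →
    (∀ i, i < m → ∀ j, j < m → i ≠ j → Disjoint (A i) (A j)) →
    (⋃ e ∈ Finset.range m, A e).ncard = ∑ e ∈ Finset.range m, (A e).ncard := by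
  intro m
  induction m with
  | zero => simp
  | succ m ih =>
    intro hfin hdisj
    have hstep : ∀ s : Finset ℕ, (⋃ e ∈ (s : Finset ℕ), A e) = ⋃ e ∈ (s : Set ℕ), A e := by
      intro s; simp
    rw [Finset.range_add_one, Finset.sum_insert (by simp)]
    have : (⋃ e ∈ insert m (Finset.range m), A e) = A m ∪ ⋃ e ∈ Finset.range m, A e := by
      simp [Set.biUnion_insert]
    rw [this, Set.ncard_union_eq ?disj ?f1 ?f2]
    · rw [ih (fun e he => hfin e (Nat.lt_succ_of_lt he))
        (fun i hi j hj hij => hdisj i (Nat.lt_succ_of_lt hi) j (Nat.lt_succ_of_lt hj) hij)]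
    case disj =>
      rw [Set.disjoint_iUnion₂_right]
      intro i hi
      exact hdisj m (Nat.lt_succ_self m) i (Nat.lt_succ_of_lt (Finset.mem_range.mp hi))
        (Finset.mem_range.mp hi).ne'
    case f1 => exact hfin m (Nat.lt_succ_self m)
    case f2 =>
      apply Set.Finite.biUnion (Finset.range m).finite_toSet
      intro i hi
      exact hfin i (Nat.lt_succ_of_lt (Finset.mem_range.mp hi))


lemma aux_ncard_nezero_tuple (K : Type*) [Field K] [Fintype K] (m : ℕ) :
    {v : Fin (m + 1) → K | v 0 ≠ 0}.ncard =
      (Fintype.card K - 1) * Fintype.card K ^ m := by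
  classical
  have e1 : {v : Fin (m + 1) → K | v 0 ≠ 0} ≃ {s : K × (Fin m → K) // s.1 ≠ 0} :=
    (Fin.consEquiv (fun _ : Fin (m + 1) => K)).symm.subtypeEquiv (fun v => by simp)
  have e2 : {s : K × (Fin m → K) // s.1 ≠ 0} ≃ {x : K // x ≠ 0} × (Fin m → K) :=
    Equiv.prodSubtypeFstEquivSubtypeProd (p := fun x : K => x ≠ 0)
  rw [Set.ncard_eq_toFinset_card']
  rw [Set.toFinset_card]
  rw [Fintype.card_congr (e1.trans e2), Fintype.card_prod, Fintype.card_pi]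
  simp [Fintype.card_subtype_compl, Fintype.card_subtype_eq]

lemma aux_ncard_monic (K : Type*) [Field K] [Fintype K] {d : ℕ} (hd : 1 ≤ d) :
    {h : K[X] | h.Monic ∧ h.natDegree = d ∧ h.coeff 0 ≠ 0}.ncard =
      (Fintype.card K - 1) * Fintype.card K ^ (d - 1) := by
  classical
  obtain ⟨m, rfl⟩ : ∃ m, d = m + 1 := ⟨d - 1, (Nat.succ_pred_eq_of_pos hd).symm⟩
  have key : (fun (h : K[X]) (i : Fin (m + 1)) => h.coeff i) ''
      {h : K[X] | h.Monic ∧ h.natDegree = m + 1 ∧ h.coeff 0 ≠ 0} =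
      {v : Fin (m + 1) → K | v 0 ≠ 0} := by
    ext v
    constructor
    · rintro ⟨h, ⟨-, -, h0⟩, rfl⟩
      simpa using h0
    · intro hv
      set p : K[X] := X ^ (m + 1) + ∑ i : Fin (m + 1), C (v i) * X ^ (i : ℕ) with hp
      have hlow : (∑ i : Fin (m + 1), C (v i) * X ^ (i : ℕ)).degree < ((m + 1 : ℕ) : WithBot ℕ) := by
        apply lt_of_le_of_lt (degree_sum_le _ _)
        rw [Finset.sup_lt_iff (by exact_mod_cast WithBot.bot_lt_coe (m + 1))]
        intro i _
        exact lt_of_le_of_lt (degree_C_mul_X_pow_le _ _) (by exact_mod_cast i.isLt)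
      have hmonic : p.Monic := monic_X_pow_add hlow
      have hcoeff : ∀ j : Fin (m + 1), p.coeff j = v j := by
        intro j
        rw [hp, coeff_add, coeff_X_pow]
        rw [if_neg (by exact_mod_cast j.isLt.ne)]
        rw [zero_add, finset_sum_coeff]
        rw [Finset.sum_eq_single j]
        · simp
        · intro i _ hij
          rw [coeff_C_mul, coeff_X_pow, if_neg (fun hc => hij (Fin.ext (by exact_mod_cast hc.symm))), mul_zero]
        · simp
      have hdeg : p.natDegree = m + 1 := by
        have : p.degree = ((m + 1 : ℕ) : WithBot ℕ) := by
          rw [hp, degree_add_eq_left_of_degree_lt (by rwa [degree_X_pow]), degree_X_pow]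
        exact natDegree_eq_of_degree_eq_some this
      refine ⟨p, ⟨hmonic, hdeg, ?_⟩, funext fun j => hcoeff j⟩
      have := hcoeff 0
      simpa using this ▸ hv
  have hinj : Set.InjOn (fun (h : K[X]) (i : Fin (m + 1)) => h.coeff i)
      {h : K[X] | h.Monic ∧ h.natDegree = m + 1 ∧ h.coeff 0 ≠ 0} := by
    rintro p ⟨hpm, hpd, -⟩ r ⟨hrm, hrd, -⟩ hpr
    ext k
    rcases lt_trichotomy k (m + 1) with hk | hk | hk
    · exact congrFun hpr ⟨k, hk⟩
    · subst hk
      rw [← hpd, hpm.coeff_natDegree, hpd, ← hrd, hrm.coeff_natDegree]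
    · rw [coeff_eq_zero_of_natDegree_lt (hpd ▸ hk), coeff_eq_zero_of_natDegree_lt (hrd ▸ hk)]
  rw [← Set.ncard_image_of_injOn hinj, key, aux_ncard_nezero_tuple, Nat.add_sub_cancel]


open Polynomial in
/-- The number of ordered pairs of NON-coprime monic polynomials of degree `n`
with nonzero constant term over `F_q` equals `Σ_{e=0}^{n-1} a_e · (q-1) q^(n-e-1)`. -/
theorem stmt_5 (K : Type*) [Field K] [Fintype K] (q n : ℕ) (hq : q = Fintype.card K)
    (hn : 1 ≤ n) :
    {p : Polynomial K × Polynomial K |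
        p.1.Monic ∧ p.1.natDegree = n ∧ p.1.coeff 0 ≠ 0 ∧
        p.2.Monic ∧ p.2.natDegree = n ∧ p.2.coeff 0 ≠ 0 ∧
        ¬ IsCoprime p.1 p.2}.ncard =
      ∑ e ∈ Finset.range n, coprimePairs K e * ((q - 1) * q ^ (n - e - 1)) := by
  classical
  subst hq
  set A : ℕ → Set (K[X] × K[X]) := fun e =>
    {p | p.1.Monic ∧ p.1.natDegree = n ∧ p.1.coeff 0 ≠ 0 ∧
      p.2.Monic ∧ p.2.natDegree = n ∧ p.2.coeff 0 ≠ 0 ∧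
      ¬ IsCoprime p.1 p.2 ∧ (gcd p.1 p.2).natDegree = n - e} with hA
  have hgcd_deg : ∀ f g : K[X], f.Monic → f.natDegree = n →
      ¬ IsCoprime f g → 1 ≤ (gcd f g).natDegree ∧ (gcd f g).natDegree ≤ n := by
    intro f g hfm hfd hcop
    have hf0 : f ≠ 0 := hfm.ne_zero
    have hle : (gcd f g).natDegree ≤ n := hfd ▸ natDegree_le_of_dvd (gcd_dvd_left f g) hf0
    refine ⟨?_, hle⟩
    by_contra h0
    have h0 : (gcd f g).natDegree = 0 := by omega
    have hone : gcd f g = 1 := ((aux_gcd_monic (g := g) hf0).natDegree_eq_zero).mp h0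
    exact hcop ((gcd_isUnit_iff f g).mp (hone ▸ isUnit_one))
  have hcover : {p : Polynomial K × Polynomial K |
        p.1.Monic ∧ p.1.natDegree = n ∧ p.1.coeff 0 ≠ 0 ∧
        p.2.Monic ∧ p.2.natDegree = n ∧ p.2.coeff 0 ≠ 0 ∧
        ¬ IsCoprime p.1 p.2} = ⋃ e ∈ Finset.range n, A e := by
    ext p
    simp only [Set.mem_setOf_eq, Set.mem_iUnion, hA]
    constructor
    · rintro ⟨h1, h2, h3, h4, h5, h6, h7⟩
      obtain ⟨hd1, hdn⟩ := hgcd_deg p.1 p.2 h1 h2 h7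
      exact ⟨n - (gcd p.1 p.2).natDegree, Finset.mem_range.mpr (by omega),
        h1, h2, h3, h4, h5, h6, h7, by omega⟩
    · rintro ⟨e, -, h1, h2, h3, h4, h5, h6, h7, -⟩
      exact ⟨h1, h2, h3, h4, h5, h6, h7⟩
  rw [hcover]
  have hAfin : ∀ e, e < n → (A e).Finite := by
    intro e _
    apply Set.Finite.subset ((aux_finite_deg_le K n).prod (aux_finite_deg_le K n))
    rintro p ⟨-, h2, -, -, h5, -⟩
    exact ⟨le_of_eq h2, le_of_eq h5⟩
  have hdisj : ∀ i, i < n → ∀ j, j < n → i ≠ j → Disjoint (A i) (A j) := by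
    intro i hi j hj hij
    rw [Set.disjoint_left]
    rintro p ⟨-, -, -, -, -, -, -, hdi⟩ ⟨-, -, -, -, -, -, -, hdj⟩
    exact hij (by omega)
  rw [aux_ncard_biUnion A n hAfin hdisj]
  refine Finset.sum_congr rfl fun e he => ?_
  have he : e < n := Finset.mem_range.mp he
  set C : Set (K[X] × K[X]) := {p : Polynomial K × Polynomial K |
    p.1.Monic ∧ p.1.natDegree = e ∧ p.1.coeff 0 ≠ 0 ∧
    p.2.Monic ∧ p.2.natDegree = e ∧ p.2.coeff 0 ≠ 0 ∧
    IsCoprime p.1 p.2} with hC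
  set M : Set K[X] := {h : K[X] | h.Monic ∧ h.natDegree = n - e ∧ h.coeff 0 ≠ 0} with hM
  set Φ : (K[X] × K[X]) × K[X] → K[X] × K[X] := fun x => (x.2 * x.1.1, x.2 * x.1.2) with hΦ
  have himg : A e = Φ '' (C ×ˢ M) := by
    ext p
    constructor
    · rintro ⟨h1, h2, h3, h4, h5, h6, h7, h8⟩
      obtain ⟨f, g⟩ := p
      dsimp only at h1 h2 h3 h4 h5 h6 h7 h8 ⊢
      have hf0 : f ≠ 0 := h1.ne_zero
      have hhm : (gcd f g).Monic := aux_gcd_monic hf0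
      set h := gcd f g with hh
      have hh0 : h ≠ 0 := hhm.ne_zero
      have hfi : h * (f / h) = f := EuclideanDomain.mul_div_cancel' hh0 (gcd_dvd_left f g)
      have hgj : h * (g / h) = g := EuclideanDomain.mul_div_cancel' hh0 (gcd_dvd_right f g)
      have him : (f / h).Monic := hhm.of_mul_monic_left (hfi.symm ▸ h1)
      have hjm : (g / h).Monic := hhm.of_mul_monic_left (hgj.symm ▸ h4)
      have hid : (f / h).natDegree = e := by
        have := natDegree_mul hh0 him.ne_zero
        rw [hfi] at this
        omega
      have hjd : (g / h).natDegree = e := by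
        have := natDegree_mul hh0 hjm.ne_zero
        rw [hgj] at this
        omega
      have hic : (f / h).coeff 0 ≠ 0 ∧ h.coeff 0 ≠ 0 := by
        have := mul_coeff_zero h (f / h)
        rw [hfi] at this
        exact ⟨fun hz => h3 (by rw [this, hz, mul_zero]), fun hz => h3 (by rw [this, hz, zero_mul])⟩
      have hjc : (g / h).coeff 0 ≠ 0 := by
        have := mul_coeff_zero h (g / h)
        rw [hgj] at this
        exact fun hz => h6 (by rw [this, hz, mul_zero])
      have hcop : IsCoprime (f / h) (g / h) := by
        have key : normalize h * gcd (f / h) (g / h) = h := by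
          rw [← gcd_mul_left, hfi, hgj]
        rw [hhm.normalize_eq_self] at key
        have h1' : gcd (f / h) (g / h) = 1 :=
          mul_left_cancel₀ hh0 (key.trans (mul_one h).symm)
        exact (gcd_isUnit_iff _ _).mp (h1' ▸ isUnit_one)
      exact ⟨((f / h, g / h), h), ⟨⟨him, hid, hic.1, hjm, hjd, hjc, hcop⟩, hhm, h8, hic.2⟩,
        by simp only [hΦ]; rw [hfi, hgj]⟩
    · rintro ⟨⟨⟨i, j⟩, h⟩, ⟨⟨h1, h2, h3, h4, h5, h6, h7⟩, hm1, hm2, hm3⟩, rfl⟩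
      dsimp only at h1 h2 h3 h4 h5 h6 h7 hm1 hm2 hm3 ⊢
      have hh0 : h ≠ 0 := hm1.ne_zero
      have hgcd : gcd (h * i) (h * j) = h := aux_gcd_mul_coprime hm1 h7
      have hnotu : ¬ IsUnit h := by
        intro hu
        have := natDegree_eq_zero_of_isUnit hu
        omega
      refine ⟨hm1.mul h1, ?_, ?_, hm1.mul h4, ?_, ?_, ?_, by rw [hgcd, hm2]⟩
      · rw [natDegree_mul hh0 h1.ne_zero]; omega
      · rw [mul_coeff_zero]; exact mul_ne_zero hm3 h3
      · rw [natDegree_mul hh0 h4.ne_zero]; omega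
      · rw [mul_coeff_zero]; exact mul_ne_zero hm3 h6
      · intro hcp
        exact hnotu (hcp.isUnit_of_dvd' (Dvd.intro _ rfl) (Dvd.intro _ rfl))
  have hinj : Set.InjOn Φ (C ×ˢ M) := by
    rintro ⟨⟨i, j⟩, h⟩ ⟨⟨-, -, -, -, -, -, h7⟩, hm1, -, -⟩ ⟨⟨i', j'⟩, h'⟩
      ⟨⟨-, -, -, -, -, -, h7'⟩, hm1', -, -⟩ heq
    dsimp only at h7 hm1 h7' hm1'
    have e1 : h * i = h' * i' := congrArg Prod.fst heq
    have e2 : h * j = h' * j' := congrArg Prod.snd heq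
    have ehh : h = h' := by
      rw [← aux_gcd_mul_coprime hm1 h7, e1, e2, aux_gcd_mul_coprime hm1' h7']
    subst ehh
    have ei : i = i' := mul_left_cancel₀ hm1.ne_zero e1
    have ej : j = j' := mul_left_cancel₀ hm1.ne_zero e2
    simp [ei, ej]
  rw [himg, Set.ncard_image_of_injOn hinj]
  have hprod : (C ×ˢ M).ncard = C.ncard * M.ncard := by
    rw [← Nat.card_coe_set_eq, ← Nat.card_coe_set_eq, ← Nat.card_coe_set_eq,
      Nat.card_congr (Equiv.Set.prod _ _), Nat.card_prod]
  rw [hprod]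
  have hMcard : M.ncard = (Fintype.card K - 1) * Fintype.card K ^ (n - e - 1) :=
    aux_ncard_monic K (by omega)
  rw [hMcard]
  rfl
end

section
/- Let n ≥ 1. The number of unordered pairs {f, g} of distinct monic polynomials over F_2, each of degree n with nonzero constant term, such that f and g are coprime, equals (4^{n−1} − 1)/3. -/
open Polynomial Finset

noncomputable section Stmt7Aux

abbrev R2 : Type := Polynomial (ZMod 2)

private lemma zmod2_eq_one : ∀ {a : ZMod 2}, a ≠ 0 → a = 1 := by decide

private lemma monic_of_ne_zero' {f : R2} (hf : f ≠ 0) : f.Monic :=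
  zmod2_eq_one (leadingCoeff_ne_zero.mpr hf)

private lemma unit_eq_one {u : R2} (h : IsUnit u) : u = 1 := by
  obtain ⟨r, hr, hC⟩ := Polynomial.isUnit_iff.mp h
  have h2 : ∀ a : ZMod 2, IsUnit a → a = 1 := by decide
  rw [← hC, h2 r hr, map_one]

private lemma assoc_eq {f g : R2} (h : Associated f g) : f = g := by
  obtain ⟨u, rfl⟩ := h
  rw [unit_eq_one u.isUnit, mul_one]

/-- monic degree-k polynomials with nonzero constant term -/
def SS (k : ℕ) : Set R2 := {f | f.Monic ∧ f.natDegree = k ∧ f.coeff 0 ≠ 0}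

/-- coprime ordered pairs -/
def CPP (k : ℕ) : Set (R2 × R2) := {p | p.1 ∈ SS k ∧ p.2 ∈ SS k ∧ IsCoprime p.1 p.2}

private lemma gcd_mul_coprime {d a b : R2} (hd : d ≠ 0) (h : IsCoprime a b) :
    gcd (d * a) (d * b) = d := by
  apply assoc_eq (associated_of_dvd_dvd ?_ ?_)
  · obtain ⟨u, v, huv⟩ := h
    have key : u * (d * a) + v * (d * b) = d := by linear_combination d * huv
    have hdvd : gcd (d * a) (d * b) ∣ u * (d * a) + v * (d * b) :=
      dvd_add ((gcd_dvd_left _ _).mul_left u) ((gcd_dvd_right _ _).mul_left v)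
    rwa [key] at hdvd
  · exact dvd_gcd (dvd_mul_right d a) (dvd_mul_right d b)

/-! ### the parametrization of `SS (m+1)` -/

def psi (m : ℕ) (v : Fin m → ZMod 2) : R2 :=
  X ^ (m + 1) + (C 1 + ∑ i : Fin m, monomial (i.val + 1) (v i))

private lemma psi_tail_deg (m : ℕ) (v : Fin m → ZMod 2) :
    (C 1 + ∑ i : Fin m, monomial (i.val + 1) (v i)).natDegree ≤ m := by
  refine (natDegree_add_le _ _).trans (max_le (by simp) ?_)
  apply natDegree_sum_le_of_forall_le
  intro i _
  exact (natDegree_monomial_le _).trans (by omega)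

private lemma psi_natDegree (m : ℕ) (v : Fin m → ZMod 2) : (psi m v).natDegree = m + 1 := by
  rw [psi, natDegree_add_eq_left_of_natDegree_lt, natDegree_X_pow]
  rw [natDegree_X_pow]
  exact lt_of_le_of_lt (psi_tail_deg m v) (Nat.lt_succ_self m)

private lemma psi_ne_zero (m : ℕ) (v : Fin m → ZMod 2) : psi m v ≠ 0 := by
  intro h
  have := psi_natDegree m v
  rw [h, natDegree_zero] at this
  omega

private lemma psi_coeff_zero (m : ℕ) (v : Fin m → ZMod 2) : (psi m v).coeff 0 = 1 := by
  rw [psi]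
  simp [coeff_X_pow, coeff_monomial]

private lemma psi_coeff_succ (m : ℕ) (v : Fin m → ZMod 2) (j : ℕ) :
    (psi m v).coeff (j + 1) =
      if h : j < m then v ⟨j, h⟩ else if j = m then 1 else 0 := by
  rw [psi]
  rw [coeff_add, coeff_add, coeff_X_pow, coeff_C, finset_sum_coeff]
  have hsum : ∀ i : Fin m, (monomial (i.val + 1) (v i)).coeff (j + 1)
      = if i.val = j then v i else 0 := by
    intro i
    rw [coeff_monomial]
    simp only [Nat.add_right_cancel_iff]
  by_cases h : j < m
  · rw [Finset.sum_congr rfl fun i _ => hsum i]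
    have hcond : ∀ i : Fin m, (if (i : ℕ) = j then v i else 0)
        = if i = (⟨j, h⟩ : Fin m) then v i else 0 := by
      intro i; simp [Fin.ext_iff]
    rw [Finset.sum_congr rfl fun i _ => hcond i]
    rw [Finset.sum_ite_eq' Finset.univ (⟨j, h⟩ : Fin m) (fun i => v i)]
    simp only [Finset.mem_univ, if_true]
    have h1 : ¬ (m + 1 = j + 1) := by omega
    have h2 : ¬ (j + 1 = 0) := by omega
    simp [h1, h2, h]
    omega
  · rw [Finset.sum_congr rfl fun i _ => hsum i]
    have : ∀ i : Fin m, ¬ (i.val = j) := by intro i; omega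
    rw [Finset.sum_congr rfl fun i _ => if_neg (this i)]
    by_cases hj : j = m
    · subst hj
      simp [h]
    · have h1 : ¬ (m + 1 = j + 1) := by omega
      simp [h1, h, hj]

private lemma psi_mem (m : ℕ) (v : Fin m → ZMod 2) : psi m v ∈ SS (m + 1) := by
  refine ⟨monic_of_ne_zero' (psi_ne_zero m v), psi_natDegree m v, ?_⟩
  rw [psi_coeff_zero]
  exact one_ne_zero

private lemma SS_eq_range (m : ℕ) : SS (m + 1) = Set.range (psi m) := by
  ext f
  constructor
  · rintro ⟨hmon, hdeg, hc0⟩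
    refine ⟨fun i => f.coeff (i.val + 1), ?_⟩
    ext j
    rcases j with _ | j
    · rw [psi_coeff_zero]
      exact (zmod2_eq_one hc0).symm
    · rw [psi_coeff_succ]
      by_cases h : j < m
      · simp [h]
      · by_cases hj : j = m
        · subst hj
          simp only [h, dif_neg, if_pos rfl]
          have := hmon.coeff_natDegree
          rw [hdeg] at this
          exact this.symm
        · have hlt : m + 1 < j + 1 := by omega
          rw [dif_neg h, if_neg hj]
          rw [eq_comm, coeff_eq_zero_of_natDegree_lt (by omega : f.natDegree < j + 1)]
  · rintro ⟨v, rfl⟩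
    exact psi_mem m v

private lemma psi_injective (m : ℕ) : Function.Injective (psi m) := by
  intro v w h
  funext i
  have := congrArg (fun f : R2 => f.coeff (i.val + 1)) h
  simp only [psi_coeff_succ, i.isLt, dif_pos] at this
  simpa using this

private lemma SS_finite (k : ℕ) : (SS k).Finite := by
  rcases k with _ | m
  · apply Set.Finite.subset (Set.finite_singleton 1)
    rintro f ⟨hmon, hdeg, _⟩
    exact hmon.natDegree_eq_zero.mp hdeg
  · rw [SS_eq_range]
    exact Set.finite_range _

private lemma SS_ncard (m : ℕ) : (SS (m + 1)).ncard = 2 ^ m := by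
  rw [SS_eq_range, ← Set.image_univ, Set.ncard_image_of_injective _ (psi_injective m),
    Set.ncard_univ]
  simp [Nat.card_eq_fintype_card]

private lemma SS_zero : SS 0 = {1} := by
  ext f
  constructor
  · rintro ⟨hmon, hdeg, _⟩
    exact hmon.natDegree_eq_zero.mp hdeg
  · rintro rfl
    exact ⟨monic_one, natDegree_one, by simp⟩

private lemma CPP_subset (k : ℕ) : CPP k ⊆ (SS k) ×ˢ (SS k) := by
  rintro p ⟨h1, h2, _⟩
  exact ⟨h1, h2⟩

private lemma CPP_finite (k : ℕ) : (CPP k).Finite :=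
  Set.Finite.subset ((SS_finite k).prod (SS_finite k)) (CPP_subset k)

private lemma CPP_ne {k : ℕ} (hk : 1 ≤ k) {p : R2 × R2} (hp : p ∈ CPP k) : p.1 ≠ p.2 := by
  intro h
  obtain ⟨⟨_, hdeg, _⟩, _, hcop⟩ := hp
  rw [h] at hcop hdeg
  have := natDegree_eq_zero_of_isUnit (isCoprime_self.mp hcop)
  omega

private lemma CPP_zero : CPP 0 = {((1 : R2), (1 : R2))} := by
  ext p
  constructor
  · rintro ⟨h1, h2, _⟩
    rw [SS_zero] at h1 h2
    exact Prod.ext h1 h2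
  · rintro rfl
    refine ⟨?_, ?_, isCoprime_one_left⟩ <;> · rw [SS_zero]; rfl

private lemma CPP_one : CPP 1 = ∅ := by
  ext p
  simp only [Set.mem_empty_iff_false, iff_false]
  intro hp
  apply CPP_ne le_rfl hp
  obtain ⟨⟨hm1, hd1, hc1⟩, ⟨hm2, hd2, hc2⟩, _⟩ := hp
  rw [hm1.eq_X_add_C hd1, hm2.eq_X_add_C hd2, zmod2_eq_one hc1, zmod2_eq_one hc2]

/-! ### the convolution identity -/

private lemma SS_mem_iff {k : ℕ} {f : R2} : f ∈ SS k ↔ f.Monic ∧ f.natDegree = k ∧ f.coeff 0 ≠ 0 :=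
  Iff.rfl

private lemma fiber_card (n k : ℕ) (hkn : k ≤ n) :
    (((SS_finite n).toFinset ×ˢ (SS_finite n).toFinset).filter
        (fun p => (gcd p.1 p.2).natDegree = k)).card
      = (SS k).ncard * (CPP (n - k)).ncard := by
  classical
  rw [Set.ncard_eq_toFinset_card _ (SS_finite k), Set.ncard_eq_toFinset_card _ (CPP_finite (n-k)),
    ← Finset.card_product]
  apply Finset.card_nbij'
    (i := fun p : R2 × R2 => ((gcd p.1 p.2 : R2), (p.1 / gcd p.1 p.2, p.2 / gcd p.1 p.2)))
    (j := fun q : R2 × (R2 × R2) => (q.1 * q.2.1, q.1 * q.2.2))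
  · -- forward membership
    rintro ⟨f, g⟩ hp
    dsimp only
    rw [Finset.mem_coe, Finset.mem_filter, Finset.mem_product, Set.Finite.mem_toFinset,
      Set.Finite.mem_toFinset] at hp
    obtain ⟨⟨⟨hm1, hd1, hc1⟩, ⟨hm2, hd2, hc2⟩⟩, hgdeg⟩ := hp
    have hf0 : f ≠ 0 := hm1.ne_zero
    have hg0 : g ≠ 0 := hm2.ne_zero
    have hd0 : gcd f g ≠ 0 := gcd_ne_zero_of_left hf0
    have hfd : gcd f g * (f / gcd f g) = f :=
      EuclideanDomain.mul_div_cancel' hd0 (gcd_dvd_left _ _)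
    have hgd : gcd f g * (g / gcd f g) = g :=
      EuclideanDomain.mul_div_cancel' hd0 (gcd_dvd_right _ _)
    have ha0 : f / gcd f g ≠ 0 := by
      intro h; rw [h, mul_zero] at hfd; exact hf0 hfd.symm
    have hb0 : g / gcd f g ≠ 0 := by
      intro h; rw [h, mul_zero] at hgd; exact hg0 hgd.symm
    have hdeg1 : k + (f / gcd f g).natDegree = n := by
      conv_rhs => rw [← hd1, ← hfd]
      rw [natDegree_mul hd0 ha0, hgdeg]
    have hdeg2 : k + (g / gcd f g).natDegree = n := by
      conv_rhs => rw [← hd2, ← hgd]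
      rw [natDegree_mul hd0 hb0, hgdeg]
    have hcd1 : (gcd f g).coeff 0 * (f / gcd f g).coeff 0 ≠ 0 := by
      rw [← mul_coeff_zero, hfd]; exact hc1
    have hcd2 : (gcd f g).coeff 0 * (g / gcd f g).coeff 0 ≠ 0 := by
      rw [← mul_coeff_zero, hgd]; exact hc2
    rw [Finset.mem_coe, Finset.mem_product, Set.Finite.mem_toFinset, Set.Finite.mem_toFinset]
    refine ⟨⟨monic_of_ne_zero' hd0, hgdeg, fun h => hcd1 (by rw [h, zero_mul])⟩, ?_, ?_, ?_⟩
    · exact ⟨monic_of_ne_zero' ha0, by dsimp only; omega, fun h => hcd1 (by rw [h, mul_zero])⟩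
    · exact ⟨monic_of_ne_zero' hb0, by dsimp only; omega, fun h => hcd2 (by rw [h, mul_zero])⟩
    · exact isCoprime_div_gcd_div_gcd hg0
  · -- backward membership
    rintro ⟨d, a, b⟩ hq
    dsimp only
    rw [Finset.mem_coe, Finset.mem_product, Set.Finite.mem_toFinset, Set.Finite.mem_toFinset] at hq
    obtain ⟨⟨hmd, hdd, hcd⟩, ⟨hma, hda, hca⟩, ⟨hmb, hdb, hcb⟩, hcop⟩ := hq
    have hd0 : d ≠ 0 := hmd.ne_zero
    have ha0 : a ≠ 0 := hma.ne_zero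
    have hb0 : b ≠ 0 := hmb.ne_zero
    have hgcd : gcd (d * a) (d * b) = d := gcd_mul_coprime hd0 hcop
    rw [Finset.mem_coe, Finset.mem_filter, Finset.mem_product, Set.Finite.mem_toFinset,
      Set.Finite.mem_toFinset]
    refine ⟨⟨⟨monic_of_ne_zero' (mul_ne_zero hd0 ha0), ?_, ?_⟩,
      ⟨monic_of_ne_zero' (mul_ne_zero hd0 hb0), ?_, ?_⟩⟩, ?_⟩
    · rw [natDegree_mul hd0 ha0, hdd, hda]; omega
    · rw [mul_coeff_zero]; exact mul_ne_zero hcd hca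
    · rw [natDegree_mul hd0 hb0, hdd, hdb]; omega
    · rw [mul_coeff_zero]; exact mul_ne_zero hcd hcb
    · show (gcd (d * a) (d * b)).natDegree = k
      rw [hgcd, hdd]
  · -- left inverse
    rintro ⟨f, g⟩ hp
    dsimp only
    rw [Finset.mem_coe, Finset.mem_filter, Finset.mem_product, Set.Finite.mem_toFinset,
      Set.Finite.mem_toFinset] at hp
    obtain ⟨⟨⟨hm1, _, _⟩, ⟨hm2, _, _⟩⟩, _⟩ := hp
    have hd0 : gcd f g ≠ 0 := gcd_ne_zero_of_left hm1.ne_zero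
    exact Prod.ext (EuclideanDomain.mul_div_cancel' hd0 (gcd_dvd_left _ _))
      (EuclideanDomain.mul_div_cancel' hd0 (gcd_dvd_right _ _))
  · -- right inverse
    rintro ⟨d, a, b⟩ hq
    dsimp only
    rw [Finset.mem_coe, Finset.mem_product, Set.Finite.mem_toFinset, Set.Finite.mem_toFinset] at hq
    obtain ⟨⟨hmd, _, _⟩, ⟨hma, _, _⟩, ⟨hmb, _, _⟩, hcop⟩ := hq
    have hd0 : d ≠ 0 := hmd.ne_zero
    have hgcd : gcd (d * a) (d * b) = d := gcd_mul_coprime hd0 hcop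
    have hda : d * a / d = a := by
      have := EuclideanDomain.mul_div_cancel' hd0 (Dvd.intro a rfl)
      exact mul_left_cancel₀ hd0 this
    have hdb : d * b / d = b := by
      have := EuclideanDomain.mul_div_cancel' hd0 (Dvd.intro b rfl)
      exact mul_left_cancel₀ hd0 this
    show (gcd (d * a) (d * b), (d * a / gcd (d * a) (d * b), d * b / gcd (d * a) (d * b)))
      = (d, (a, b))
    rw [hgcd, hda, hdb]

private lemma conv (n : ℕ) (hn : 1 ≤ n) :
    (SS n).ncard * (SS n).ncard
      = ∑ k ∈ range (n + 1), (SS k).ncard * (CPP (n - k)).ncard := by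
  classical
  have hcardA : ((SS_finite n).toFinset ×ˢ (SS_finite n).toFinset).card
      = (SS n).ncard * (SS n).ncard := by
    rw [Finset.card_product, Set.ncard_eq_toFinset_card _ (SS_finite n)]
  have hmap : ∀ p ∈ (SS_finite n).toFinset ×ˢ (SS_finite n).toFinset,
      (gcd p.1 p.2).natDegree ∈ range (n + 1) := by
    intro p hp
    rw [Finset.mem_product, Set.Finite.mem_toFinset, Set.Finite.mem_toFinset] at hp
    obtain ⟨⟨hm, hd, _⟩, _⟩ := hp
    rw [Finset.mem_range]
    have := natDegree_le_of_dvd (gcd_dvd_left p.1 p.2) hm.ne_zero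
    omega
  rw [← hcardA, Finset.card_eq_sum_card_fiberwise hmap]
  apply Finset.sum_congr rfl
  intro k hk
  rw [Finset.mem_range] at hk
  exact fiber_card n k (by omega)

/-! ### arithmetic -/

private def cc (k : ℕ) : ℕ := (CPP k).ncard

private lemma cc_identity (n : ℕ) (hn : 1 ≤ n) :
    4 ^ (n - 1) = cc n + ∑ j ∈ range n, 2 ^ (n - 1 - j) * cc j := by
  rcases n with _ | m
  · omega
  have h := conv (m + 1) (by omega)
  rw [SS_ncard m] at h
  have hL : (4 : ℕ) ^ m = 2 ^ m * 2 ^ m := by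
    rw [show (4 : ℕ) = 2 * 2 from rfl, mul_pow]
  rw [Finset.sum_range_succ'] at h
  have h0 : (SS 0).ncard * (CPP (m + 1 - 0)).ncard = cc (m + 1) := by
    rw [SS_zero, Set.ncard_singleton, one_mul]
    rfl
  rw [h0] at h
  have hterm : ∀ i ∈ range (m + 1),
      (SS (i + 1)).ncard * (CPP (m + 1 - (i + 1))).ncard = 2 ^ i * cc (m - i) := by
    intro i _
    rw [SS_ncard i]
    have : m + 1 - (i + 1) = m - i := by omega
    rw [this]
    rfl
  rw [Finset.sum_congr rfl hterm] at h
  have hrefl : ∑ j ∈ range (m + 1), 2 ^ (m + 1 - 1 - j) * cc j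
      = ∑ i ∈ range (m + 1), 2 ^ i * cc (m - i) := by
    rw [← Finset.sum_range_reflect (fun j => 2 ^ j * cc (m - j)) (m + 1)]
    apply Finset.sum_congr rfl
    intro j hj
    rw [Finset.mem_range] at hj
    have h1 : m + 1 - 1 - j = m - j := by omega
    have h2 : m - (m - j) = j := by omega
    rw [h1, h2]
  simp only [Nat.add_sub_cancel] at hrefl ⊢
  rw [hrefl]
  omega

private lemma cc_one : cc 1 = 0 := by
  rw [cc, CPP_one, Set.ncard_empty]

private lemma cc_rec (n : ℕ) (hn : 1 ≤ n) : cc (n + 1) = cc n + 2 * 4 ^ (n - 1) := by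
  have h1 := cc_identity n hn
  have h2 := cc_identity (n + 1) (by omega)
  simp only [Nat.add_sub_cancel] at h2
  rw [Finset.sum_range_succ] at h2
  have hsplit : ∑ j ∈ range n, 2 ^ (n - j) * cc j
      = 2 * ∑ j ∈ range n, 2 ^ (n - 1 - j) * cc j := by
    rw [Finset.mul_sum]
    apply Finset.sum_congr rfl
    intro j hj
    rw [Finset.mem_range] at hj
    rw [show n - j = n - 1 - j + 1 from by omega, pow_succ]
    ring
  rw [hsplit] at h2
  have h4 : (4 : ℕ) ^ n = 4 * 4 ^ (n - 1) := by
    rw [← pow_succ']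
    congr 1
    omega
  simp only [Nat.sub_self, pow_zero, one_mul] at h2
  omega

private lemma cc_count (n : ℕ) (hn : 1 ≤ n) : 3 * cc n + 2 = 2 * 4 ^ (n - 1) := by
  induction n, hn using Nat.le_induction with
  | base => simp [cc_one]
  | succ n hn ih =>
    have hrec := cc_rec n hn
    have h4 : (4 : ℕ) ^ n = 4 * 4 ^ (n - 1) := by
      rw [← pow_succ']
      congr 1
      omega
    simp only [Nat.add_sub_cancel]
    omega

private def phi (p : R2 × R2) : Finset R2 := {p.1, p.2}

private lemma phi_fiber_card {n : ℕ} (hn : 1 ≤ n) {f g : R2} (hp : (f, g) ∈ CPP n) :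
    (((CPP_finite n).toFinset).filter (fun p => phi p = phi (f, g))).card = 2 := by
  classical
  have hne : f ≠ g := CPP_ne hn hp
  have hswap : (g, f) ∈ CPP n := ⟨hp.2.1, hp.1, hp.2.2.symm⟩
  have hfilter : ((CPP_finite n).toFinset).filter (fun p => phi p = phi (f, g))
      = {(f, g), (g, f)} := by
    ext q
    rw [Finset.mem_filter, Finset.mem_insert, Finset.mem_singleton]
    constructor
    · rintro ⟨hqF, hq⟩
      obtain ⟨a, b⟩ := q
      rw [Set.Finite.mem_toFinset] at hqF
      have hqne : a ≠ b := CPP_ne hn hqF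
      have ha : a ∈ ({f, g} : Finset R2) := by rw [show ({f,g} : Finset R2) = phi (f,g) from rfl, ← hq]; simp [phi]
      have hb : b ∈ ({f, g} : Finset R2) := by rw [show ({f,g} : Finset R2) = phi (f,g) from rfl, ← hq]; simp [phi]
      rw [Finset.mem_insert, Finset.mem_singleton] at ha hb
      rcases ha with rfl | rfl <;> rcases hb with rfl | rfl
      · exact absurd rfl hqne
      · left; rfl
      · right; rfl
      · exact absurd rfl hqne
    · rintro (rfl | rfl)
      · exact ⟨Set.Finite.mem_toFinset _ |>.mpr hp, rfl⟩
      · refine ⟨Set.Finite.mem_toFinset _ |>.mpr hswap, ?_⟩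
        show ({g, f} : Finset R2) = {f, g}
        exact Finset.pair_comm g f
  rw [hfilter]
  rw [Finset.card_insert_of_notMem, Finset.card_singleton]
  rw [Finset.mem_singleton]
  exact fun h => hne (Prod.ext_iff.mp h).1

end Stmt7Aux

open Polynomial in
/-- The number of unordered pairs of distinct coprime monic polynomials of
degree `n` with nonzero constant term over `F_2` equals `(4^(n-1) - 1)/3`. -/
theorem stmt_7 (n : ℕ) (hn : 1 ≤ n) :
    {s : Finset (Polynomial (ZMod 2)) | s.card = 2 ∧
        (∀ f ∈ s, f.Monic ∧ f.natDegree = n ∧ f.coeff 0 ≠ 0) ∧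
        (∀ f ∈ s, ∀ g ∈ s, f ≠ g → IsCoprime f g)}.ncard =
      (4 ^ (n - 1) - 1) / 3 := by
  classical
  have hset : {s : Finset (Polynomial (ZMod 2)) | s.card = 2 ∧
        (∀ f ∈ s, f.Monic ∧ f.natDegree = n ∧ f.coeff 0 ≠ 0) ∧
        (∀ f ∈ s, ∀ g ∈ s, f ≠ g → IsCoprime f g)} = phi '' (CPP n) := by
    ext s
    constructor
    · rintro ⟨hcard, hmem, hcop⟩
      obtain ⟨f, g, hfg, rfl⟩ := Finset.card_eq_two.mp hcard
      exact ⟨(f, g), ⟨hmem f (by simp), hmem g (by simp), hcop f (by simp) g (by simp) hfg⟩, rfl⟩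
    · rintro ⟨⟨f, g⟩, hp, rfl⟩
      have hne : f ≠ g := CPP_ne hn hp
      obtain ⟨h1, h2, h3⟩ := hp
      refine ⟨Finset.card_pair hne, ?_, ?_⟩
      · intro x hx
        rcases Finset.mem_insert.mp hx with rfl | hx
        · exact h1
        · rw [Finset.mem_singleton] at hx
          subst hx
          exact h2
      · intro x hx y hy hxy
        rcases Finset.mem_insert.mp hx with rfl | hx <;>
          rcases Finset.mem_insert.mp hy with rfl | hy
        · exact absurd rfl hxy
        · rw [Finset.mem_singleton] at hy
          subst hy
          exact h3
        · rw [Finset.mem_singleton] at hx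
          subst hx
          exact h3.symm
        · rw [Finset.mem_singleton] at hx hy
          subst hx; subst hy
          exact absurd rfl hxy
  rw [hset]
  have hF : phi '' (CPP n) = ↑(((CPP_finite n).toFinset).image phi) := by
    rw [Finset.coe_image, Set.Finite.coe_toFinset]
  rw [hF, Set.ncard_coe_finset]
  have himg : ∀ p ∈ (CPP_finite n).toFinset, phi p ∈ ((CPP_finite n).toFinset).image phi :=
    fun p hp => Finset.mem_image_of_mem phi hp
  have hcardF := Finset.card_eq_sum_card_fiberwise himg
  have hfib : ∀ t ∈ ((CPP_finite n).toFinset).image phi,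
      (((CPP_finite n).toFinset).filter (fun p => phi p = t)).card = 2 := by
    intro t ht
    obtain ⟨⟨f, g⟩, hp, rfl⟩ := Finset.mem_image.mp ht
    rw [Set.Finite.mem_toFinset] at hp
    exact phi_fiber_card hn hp
  rw [Finset.sum_congr rfl hfib, Finset.sum_const, smul_eq_mul, mul_comm] at hcardF
  have hc : ((CPP_finite n).toFinset).card = cc n :=
    (Set.ncard_eq_toFinset_card _ (CPP_finite n)).symm
  have hcount := cc_count n hn
  omega
end

section
/- Let q be a prime power. For n ≥ 1 let I_n denote the number of monic irreducible polynomials of degree n over F_q with nonzero constant term (so I_1 = q − 1, and for n ≥ 2, I_n equals the number of all monic irreducible polynomials of degree n over F_q). Then I_n ≥ I_{n−1} for all n ≥ 2; that is, the sequence (I_n)_{n ≥ 1} is non-decreasing. -/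
open Polynomial IntermediateField

section Aux

variable {K : Type*} [Field K] [Fintype K]

/-- The degree of the minimal polynomial divides the finrank of a finite extension. -/
theorem aux_minpoly_natDegree_dvd_finrank {F L : Type*} [Field F] [Field L] [Algebra F L]
    [FiniteDimensional F L] (x : L) : (minpoly F x).natDegree ∣ Module.finrank F L := by
  have hint : IsIntegral F x := IsIntegral.of_finite F x
  rw [← IntermediateField.adjoin.finrank hint]
  exact ⟨Module.finrank F⟮x⟯ L, (Module.finrank_mul_finrank F F⟮x⟯ L).symm⟩

theorem aux_pow_card_pow_deg (α : AlgebraicClosure K) :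
    α ^ (Fintype.card K) ^ (minpoly K α).natDegree = α := by
  have hint : IsIntegral K α := Algebra.IsIntegral.isIntegral α
  have hfd : FiniteDimensional K K⟮α⟯ := IntermediateField.adjoin.finiteDimensional hint
  have hfin : Finite (K⟮α⟯ : IntermediateField K (AlgebraicClosure K)) :=
    Module.finite_of_finite K
  have : Fintype (K⟮α⟯ : IntermediateField K (AlgebraicClosure K)) := Fintype.ofFinite _
  have hcard : Fintype.card K⟮α⟯ = Fintype.card K ^ (minpoly K α).natDegree := by
    rw [Module.card_eq_pow_finrank (K := K), IntermediateField.adjoin.finrank hint]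
  have := FiniteField.pow_card (AdjoinSimple.gen K α)
  rw [hcard] at this
  have := congrArg (algebraMap K⟮α⟯ (AlgebraicClosure K)) this
  rwa [map_pow, AdjoinSimple.algebraMap_gen] at this

theorem aux_pow_card_pow_of_dvd (α : AlgebraicClosure K) {n : ℕ}
    (h : (minpoly K α).natDegree ∣ n) : α ^ (Fintype.card K) ^ n = α := by
  obtain ⟨k, rfl⟩ := h
  induction k with
  | zero => simp
  | succ k ih =>
      rw [Nat.mul_succ, pow_add, pow_mul, ih, aux_pow_card_pow_deg α]

theorem aux_deg_dvd_of_pow_card_pow {α : AlgebraicClosure K} {n : ℕ} (hn : n ≠ 0)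
    (h : α ^ (Fintype.card K) ^ n = α) : (minpoly K α).natDegree ∣ n := by
  classical
  have hq1 : 1 < Fintype.card K := Fintype.one_lt_card
  have hprime : (ringChar K).Prime := CharP.char_is_prime K _
  haveI : Fact (ringChar K).Prime := ⟨hprime⟩
  obtain ⟨s, -, hcard⟩ := FiniteField.card K (ringChar K)
  haveI : CharP (AlgebraicClosure K) (ringChar K) :=
    charP_of_injective_algebraMap (algebraMap K (AlgebraicClosure K)).injective _
  haveI : ExpChar (AlgebraicClosure K) (ringChar K) := ExpChar.prime hprime
  have hqn : (Fintype.card K) ^ n = (ringChar K) ^ ((s : ℕ) * n) := by rw [hcard, ← pow_mul]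
  have hmem : ∀ x : AlgebraicClosure K,
      x ∈ (iterateFrobenius (AlgebraicClosure K) (ringChar K) ((s : ℕ) * n)).eqLocusField
        (RingHom.id (AlgebraicClosure K)) ↔ x ^ (Fintype.card K) ^ n = x := by
    intro x
    constructor
    · intro hx
      have : iterateFrobenius (AlgebraicClosure K) (ringChar K) ((s : ℕ) * n) x = x := hx
      rwa [iterateFrobenius_def, ← hqn] at this
    · intro hx
      show iterateFrobenius (AlgebraicClosure K) (ringChar K) ((s : ℕ) * n) x = x
      rwa [iterateFrobenius_def, ← hqn]
  set E : IntermediateField K (AlgebraicClosure K) :=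
    Subfield.toIntermediateField _ (fun x => (hmem _).2 (by
      rw [← map_pow, FiniteField.pow_card_pow])) with hE
  have hmemE : ∀ x : AlgebraicClosure K, x ∈ E ↔ x ^ (Fintype.card K) ^ n = x := hmem
  have hfne : (X ^ (Fintype.card K) ^ n - X : K[X]) ≠ 0 :=
    FiniteField.X_pow_card_pow_sub_X_ne_zero K hn hq1
  have hroot : (E : Set (AlgebraicClosure K))
      = (X ^ (Fintype.card K) ^ n - X : K[X]).rootSet (AlgebraicClosure K) := by
    ext x
    rw [SetLike.mem_coe, hmemE, mem_rootSet_of_ne hfne]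
    simp [sub_eq_zero]
  have hsep : (X ^ (Fintype.card K) ^ n - X : K[X]).Separable :=
    galois_poly_separable (ringChar K) ((Fintype.card K) ^ n)
      (by rw [hqn]; exact dvd_pow_self _ (by positivity))
  have hcardroot : Fintype.card
      ((X ^ (Fintype.card K) ^ n - X : K[X]).rootSet (AlgebraicClosure K))
      = (Fintype.card K) ^ n := by
    rw [card_rootSet_eq_natDegree hsep (IsAlgClosed.splits _),
      FiniteField.X_pow_card_pow_sub_X_natDegree_eq K hn hq1]
  have hEfin : (E : Set (AlgebraicClosure K)).Finite := by
    rw [hroot]; exact Set.toFinite _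
  haveI : Finite E := hEfin.to_subtype
  haveI : Fintype E := Fintype.ofFinite E
  have hcardE : Fintype.card E = (Fintype.card K) ^ n := by
    rw [← hcardroot]
    exact Fintype.card_congr (Equiv.setCongr hroot)
  have hfinrank : Module.finrank K E = n := by
    have := Module.card_eq_pow_finrank (K := K) (V := E)
    rw [hcardE] at this
    exact (Nat.pow_right_injective hq1 this.symm)
  have hα : α ∈ E := (hmemE α).2 h
  haveI : FiniteDimensional K E := Module.Finite.of_finite
  have hβα : algebraMap E (AlgebraicClosure K) ⟨α, hα⟩ = α := rfl
  have hminβ : minpoly K α = minpoly K (⟨α, hα⟩ : E) := by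
    conv_lhs => rw [← hβα]
    exact minpoly.algebraMap_eq (algebraMap (↥E) (AlgebraicClosure K)).injective _
  rw [hminβ, ← hfinrank]
  exact aux_minpoly_natDegree_dvd_finrank _

/-- The set of monic irreducible polynomials of degree `d` with nonzero constant term. -/
def auxPset (K : Type*) [Field K] (d : ℕ) : Set K[X] :=
  {f | f.Monic ∧ Irreducible f ∧ f.natDegree = d ∧ f.coeff 0 ≠ 0}

instance aux_finitePset (d : ℕ) : Finite (auxPset K d) := by
  have : Function.Injective
      (fun f : auxPset K d => (fun i : Fin (d+1) => (f : K[X]).coeff i)) := by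
    rintro ⟨f, hf⟩ ⟨g, hg⟩ h
    ext1
    ext m
    rcases le_or_gt m d with hm | hm
    · exact congrFun h ⟨m, by omega⟩
    · rw [coeff_eq_zero_of_natDegree_lt (hf.2.2.1.symm ▸ hm),
        coeff_eq_zero_of_natDegree_lt (hg.2.2.1.symm ▸ hm)]
  exact Finite.of_injective _ this

theorem aux_minpoly_coeff_zero_ne_zero {α : AlgebraicClosure K} (hα : α ≠ 0) :
    (minpoly K α).coeff 0 ≠ 0 := by
  intro h0
  have hint : IsIntegral K α := Algebra.IsIntegral.isIntegral α
  have hX : (X : K[X]) ∣ minpoly K α := X_dvd_iff.2 h0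
  have : minpoly K α = X := by
    have hass : Associated (X : K[X]) (minpoly K α) :=
      (irreducible_X.associated_of_dvd (minpoly.irreducible hint) hX)
    exact (eq_of_monic_of_associated monic_X (minpoly.monic hint) hass).symm
  have h2 := minpoly.aeval K α
  rw [this, aeval_X] at h2
  exact hα h2

/-- The set of elements of the algebraic closure of degree `d`, excluding `0`. -/
def auxAset (K : Type*) [Field K] [Fintype K] (d : ℕ) : Set (AlgebraicClosure K) :=
  {α | (minpoly K α).natDegree = d ∧ α ≠ 0}

theorem aux_mem_Pset_minpoly {α : AlgebraicClosure K} {d : ℕ} (hα : α ∈ auxAset K d) :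
    minpoly K α ∈ auxPset K d := by
  have hint : IsIntegral K α := Algebra.IsIntegral.isIntegral α
  exact ⟨minpoly.monic hint, minpoly.irreducible hint, hα.1, aux_minpoly_coeff_zero_ne_zero hα.2⟩

theorem aux_mem_rootSet_minpoly (α : AlgebraicClosure K) :
    α ∈ (minpoly K α).rootSet (AlgebraicClosure K) := by
  have hint : IsIntegral K α := Algebra.IsIntegral.isIntegral α
  rw [mem_rootSet_of_ne (minpoly.ne_zero hint)]
  exact minpoly.aeval K α

theorem aux_minpoly_of_root {f : K[X]} {d : ℕ} (hf : f ∈ auxPset K d) {x : AlgebraicClosure K}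
    (hx : x ∈ f.rootSet (AlgebraicClosure K)) : minpoly K x = f := by
  rw [mem_rootSet] at hx
  exact (minpoly.eq_of_irreducible_of_monic hf.2.1 hx.2 hf.1).symm

theorem aux_root_mem_Aset {f : K[X]} {d : ℕ} (hf : f ∈ auxPset K d) {x : AlgebraicClosure K}
    (hx : x ∈ f.rootSet (AlgebraicClosure K)) : x ∈ auxAset K d := by
  have hm := aux_minpoly_of_root hf hx
  refine ⟨by rw [hm, hf.2.2.1], ?_⟩
  rintro rfl
  rw [mem_rootSet] at hx
  apply hf.2.2.2
  have := hx.2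
  rw [← coeff_zero_eq_aeval_zero'] at this
  exact (_root_.map_eq_zero _).1 this

noncomputable def auxAsetEquiv (d : ℕ) :
    (auxAset K d) ≃ Σ f : auxPset K d, ((f : K[X]).rootSet (AlgebraicClosure K)) where
  toFun α := ⟨⟨minpoly K α.1, aux_mem_Pset_minpoly α.2⟩, ⟨α.1, aux_mem_rootSet_minpoly α.1⟩⟩
  invFun x := ⟨x.2.1, aux_root_mem_Aset x.1.2 x.2.2⟩
  left_inv α := rfl
  right_inv x := by
    rcases x with ⟨⟨f, hf⟩, ⟨x, hx⟩⟩
    exact Sigma.subtype_ext (Subtype.ext (aux_minpoly_of_root hf hx)) rfl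

end Aux

open Polynomial in
/-- `numIrred K k` is the number `I_k` of monic irreducible polynomials of degree `k`
over `K` with nonzero constant term. -/
noncomputable def numIrred (K : Type*) [Field K] (k : ℕ) : ℕ :=
  {f : Polynomial K | f.Monic ∧ Irreducible f ∧ f.natDegree = k ∧ f.coeff 0 ≠ 0}.ncard

section Aux2

variable {K : Type*} [Field K] [Fintype K]

theorem aux_numIrred_eq (d : ℕ) : numIrred K d = (auxPset K d).ncard := rfl

theorem aux_card_Aset (d : ℕ) : Nat.card (auxAset K d) = d * numIrred K d := by
  classical
  haveI : Fintype (auxPset K d) := Fintype.ofFinite _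
  rw [Nat.card_congr (auxAsetEquiv d), Nat.card_eq_fintype_card, Fintype.card_sigma]
  have : ∀ f : auxPset K d, Fintype.card ((f : K[X]).rootSet (AlgebraicClosure K)) = d := by
    rintro ⟨f, hf⟩
    rw [card_rootSet_eq_natDegree (PerfectField.separable_of_irreducible hf.2.1)
      (IsAlgClosed.splits _), hf.2.2.1]
  simp only [this, Finset.sum_const, Finset.card_univ, smul_eq_mul]
  rw [aux_numIrred_eq, ← Nat.card_coe_set_eq, Nat.card_eq_fintype_card, mul_comm]

/-- The nonzero elements of the algebraic closure fixed by the `n`-th power of Frobenius. -/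
def auxBset (K : Type*) [Field K] [Fintype K] (n : ℕ) : Set (AlgebraicClosure K) :=
  {α | α ^ (Fintype.card K) ^ n = α ∧ α ≠ 0}

noncomputable def auxBsetEquiv {n : ℕ} (hn : n ≠ 0) :
    (auxBset K n) ≃ Σ d : n.divisors, (auxAset K (d : ℕ)) where
  toFun α := ⟨⟨(minpoly K α.1).natDegree,
      Nat.mem_divisors.2 ⟨aux_deg_dvd_of_pow_card_pow hn α.2.1, hn⟩⟩, ⟨α.1, rfl, α.2.2⟩⟩
  invFun x := ⟨x.2.1, ⟨aux_pow_card_pow_of_dvd x.2.1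
    (by rw [x.2.2.1]; exact (Nat.mem_divisors.1 x.1.2).1), x.2.2.2⟩⟩
  left_inv α := rfl
  right_inv x := by
    rcases x with ⟨⟨d, hd⟩, ⟨x, hx⟩⟩
    exact Sigma.subtype_ext (Subtype.ext hx.1) rfl

instance aux_finiteAset (d : ℕ) : Finite (auxAset K d) :=
  Finite.of_equiv _ (auxAsetEquiv d).symm

/-- The key identity `∑_{d ∣ n} d ⬝ I_d + 1 = q ^ n`. -/
theorem aux_key_identity {n : ℕ} (hn : n ≠ 0) :
    (∑ d ∈ n.divisors, d * numIrred K d) + 1 = (Fintype.card K) ^ n := by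
  classical
  have hq1 : 1 < Fintype.card K := Fintype.one_lt_card
  have hfne : (X ^ (Fintype.card K) ^ n - X : K[X]) ≠ 0 :=
    FiniteField.X_pow_card_pow_sub_X_ne_zero K hn hq1
  have hset : {α : AlgebraicClosure K | α ^ (Fintype.card K) ^ n = α}
      = (X ^ (Fintype.card K) ^ n - X : K[X]).rootSet (AlgebraicClosure K) := by
    ext x
    rw [Set.mem_setOf_eq, mem_rootSet_of_ne hfne]
    simp [sub_eq_zero]
  have hsep : (X ^ (Fintype.card K) ^ n - X : K[X]).Separable := by
    have hprime : (ringChar K).Prime := CharP.char_is_prime K _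
    obtain ⟨s, -, hcard⟩ := FiniteField.card K (ringChar K)
    exact galois_poly_separable (ringChar K) ((Fintype.card K) ^ n)
      (by rw [hcard, ← pow_mul]; exact dvd_pow_self _ (by positivity))
  have hScard : {α : AlgebraicClosure K | α ^ (Fintype.card K) ^ n = α}.ncard
      = (Fintype.card K) ^ n := by
    rw [hset, ← Nat.card_coe_set_eq, Nat.card_eq_fintype_card,
      card_rootSet_eq_natDegree hsep (IsAlgClosed.splits _),
      FiniteField.X_pow_card_pow_sub_X_natDegree_eq K hn hq1]
  have hSfin : {α : AlgebraicClosure K | α ^ (Fintype.card K) ^ n = α}.Finite := by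
    rw [hset]; exact Set.toFinite _
  have h0 : (0 : AlgebraicClosure K)
      ∈ {α : AlgebraicClosure K | α ^ (Fintype.card K) ^ n = α} := by
    simp [zero_pow (pow_ne_zero n (by omega : Fintype.card K ≠ 0))]
  have hBdiff : auxBset K n = {α : AlgebraicClosure K | α ^ (Fintype.card K) ^ n = α} \ {0} := by
    ext x; simp [auxBset, Set.mem_diff, and_comm]
  have hBcard : (auxBset K n).ncard + 1 = (Fintype.card K) ^ n := by
    have hd := Set.ncard_diff_singleton_of_mem h0
    rw [← hBdiff] at hd
    have hpos : 0 < Fintype.card K ^ n := by positivity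
    omega
  have hBval : (auxBset K n).ncard = ∑ d ∈ n.divisors, d * numIrred K d := by
    haveI : ∀ d : ℕ, Fintype (auxAset K d) := fun d => Fintype.ofFinite _
    rw [← Nat.card_coe_set_eq, Nat.card_congr (auxBsetEquiv hn), Nat.card_eq_fintype_card,
      Fintype.card_sigma]
    rw [← Finset.sum_attach (n.divisors) (fun d => d * numIrred K d)]
    apply Finset.sum_congr rfl
    intro d _
    rw [← aux_card_Aset]
    exact Nat.card_eq_fintype_card.symm
  omega

end Aux2

theorem aux_star_ineq (q n : ℕ) (hq : 2 ≤ q) (hn3 : 3 ≤ n) :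
    n * q^(n-1) + (n-1) * q^(n/2+1) ≤ (n-1) * q^n + n * q := by
  have hq' : (2:ℤ) ≤ (q:ℤ) := by exact_mod_cast hq
  have hq0 : (0:ℤ) ≤ (q:ℤ) := by linarith
  rcases le_or_gt n 5 with h5 | h5
  · interval_cases n
    · show 3 * q^2 + 2 * q^2 ≤ 2 * q^3 + 3*q
      zify
      nlinarith [mul_nonneg (mul_nonneg hq0 (by linarith : (0:ℤ) ≤ (q:ℤ) - 1))
        (by nlinarith : (0:ℤ) ≤ 2*(q:ℤ) - 3)]
    · show 4 * q^3 + 3 * q^3 ≤ 3 * q^4 + 4*q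
      zify
      nlinarith [mul_nonneg (mul_nonneg hq0 (by linarith : (0:ℤ) ≤ (q:ℤ) - 2))
        (by nlinarith : (0:ℤ) ≤ 3*(q:ℤ)^2 - q - 2)]
    · show 5 * q^4 + 4 * q^3 ≤ 4 * q^5 + 5*q
      have h1 : 2*q^4 ≤ q^5 := by
        calc 2*q^4 ≤ q*q^4 := Nat.mul_le_mul_right _ hq
        _ = q^5 := by ring
      have h2 : 2*q^3 ≤ q^4 := by
        calc 2*q^3 ≤ q*q^3 := Nat.mul_le_mul_right _ hq
        _ = q^4 := by ring
      zify at h1 h2 ⊢; linarith [pow_nonneg hq0 3, pow_nonneg hq0 4]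
  · have hth : q^(n/2+1) ≤ q^(n-2) := Nat.pow_le_pow_right (by omega) (by omega)
    have ha : 1 ≤ q^(n-2) := Nat.one_le_pow _ _ (by omega)
    have e1 : q^(n-1) = q * q^(n-2) := by
      rw [← pow_succ']; congr 1; omega
    have e2 : q^n = q * (q * q^(n-2)) := by
      rw [← pow_succ', ← pow_succ']; congr 1; omega
    have key : n * (q * q^(n-2)) + (n-1) * q^(n-2) ≤ (n-1) * (q * (q * q^(n-2))) := by
      have hn' : (6:ℤ) ≤ (n:ℤ) := by exact_mod_cast (by omega : 6 ≤ n)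
      have ha' : (1:ℤ) ≤ ((q^(n-2) : ℕ) : ℤ) := by exact_mod_cast ha
      have hc : (0:ℤ) ≤ ((n:ℤ)-1)*q*q - n*q - ((n:ℤ)-1) := by
        nlinarith [mul_nonneg (mul_nonneg (by linarith : (0:ℤ) ≤ (q:ℤ)-2)
            (by linarith : (0:ℤ) ≤ (n:ℤ)-1)) hq0,
          mul_nonneg (by linarith : (0:ℤ) ≤ (q:ℤ)-2) (by linarith : (0:ℤ) ≤ (n:ℤ)-2)]
      zify
      push_cast [Nat.cast_sub (by omega : 1 ≤ n)]
      nlinarith [mul_nonneg (by linarith : (0:ℤ) ≤ ((q^(n-2):ℕ):ℤ)) hc]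
    calc n * q^(n-1) + (n-1) * q^(n/2+1)
        ≤ n * (q * q^(n-2)) + (n-1) * q^(n-2) := by
          rw [e1]; exact Nat.add_le_add_left (Nat.mul_le_mul_left _ hth) _
      _ ≤ (n-1) * q^n := by rw [e2]; exact key
      _ ≤ (n-1) * q^n + n * q := Nat.le_add_right _ _

theorem aux_geo_bound (q m : ℕ) (hq : 2 ≤ q) :
    (∑ d ∈ Finset.Icc 1 m, (q^d - 1)) + 1 ≤ q^(m+1) := by
  induction m with
  | zero =>
      simp
      omega
  | succ m ih =>
      rw [Finset.sum_Icc_succ_top (by omega : 1 ≤ m + 1)]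
      have h1 : 1 ≤ q^(m+1) := Nat.one_le_pow _ _ (by omega)
      have h2 : 2*q^(m+1) ≤ q^(m+1+1) := by
        calc 2*q^(m+1) ≤ q*q^(m+1) := Nat.mul_le_mul_right _ hq
        _ = q^(m+1+1) := (pow_succ' q _).symm
      generalize hB : q^(m+1+1) = B at h2 ⊢
      generalize hA : q^(m+1) = A at h1 h2 ih ⊢
      omega

/-- The sequence `(I_n)_{n ≥ 1}` is non-decreasing: `I_n ≥ I_(n-1)` for `n ≥ 2`. -/
theorem stmt_8 (K : Type*) [Field K] [Fintype K] (n : ℕ) (hn : 2 ≤ n) :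
    numIrred K (n - 1) ≤ numIrred K n := by
  classical
  have hq : 2 ≤ Fintype.card K := Fintype.one_lt_card
  have hI1 : numIrred K 1 + 1 = Fintype.card K := by
    have h := aux_key_identity (K := K) (n := 1) one_ne_zero
    rwa [Nat.divisors_one, Finset.sum_singleton, one_mul, pow_one] at h
  have term_le : ∀ d : ℕ, d ≠ 0 → d * numIrred K d + 1 ≤ Fintype.card K ^ d := by
    intro d hd
    have h := aux_key_identity (K := K) (n := d) hd
    have h2 : d * numIrred K d ≤ ∑ e ∈ d.divisors, e * numIrred K e :=
      Finset.single_le_sum (f := fun e => e * numIrred K e)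
        (fun i _ => Nat.zero_le _) (Nat.mem_divisors_self d hd)
    omega
  rcases eq_or_lt_of_le hn with h2 | h3
  · -- case n = 2
    subst h2
    have h := aux_key_identity (K := K) (n := 2) two_ne_zero
    have hdiv2 : Nat.divisors 2 = {1, 2} := by decide
    rw [hdiv2, Finset.sum_pair (by omega : (1:ℕ) ≠ 2)] at h
    have hsq : 3 * Fintype.card K ≤ Fintype.card K ^ 2 + 2 := by
      have : Fintype.card K * Fintype.card K = Fintype.card K ^ 2 := (sq _).symm
      nlinarith
    show numIrred K 1 ≤ numIrred K 2
    linarith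
  · -- case n ≥ 3
    have hn3 : 3 ≤ n := h3
    -- upper bound for (n-1) * I_(n-1)
    have hkey1 := aux_key_identity (K := K) (n := n - 1) (by omega)
    have hpairsub : ({1, n-1} : Finset ℕ) ⊆ (n-1).divisors := by
      intro d hd
      rcases Finset.mem_insert.1 hd with rfl | hd
      · exact Nat.mem_divisors.2 ⟨one_dvd _, by omega⟩
      · rw [Finset.mem_singleton] at hd
        subst hd
        exact Nat.mem_divisors_self _ (by omega)
    have hsumpair := Finset.sum_le_sum_of_subset (f := fun d => d * numIrred K d) hpairsub
    rw [Finset.sum_pair (by omega : (1:ℕ) ≠ n - 1), one_mul] at hsumpair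
    have hA : (n-1) * numIrred K (n-1) + Fintype.card K ≤ Fintype.card K ^ (n-1) := by
      linarith
    -- lower bound for n * I_n
    have hkeyn := aux_key_identity (K := K) (n := n) (by omega)
    have hsplit : ∑ d ∈ n.divisors, d * numIrred K d
        = n * numIrred K n + ∑ d ∈ n.properDivisors, d * numIrred K d := by
      rw [← Nat.cons_self_properDivisors (by omega : n ≠ 0), Finset.sum_cons]
    have hstep1 : ∀ d ∈ n.properDivisors, d * numIrred K d ≤ Fintype.card K ^ d - 1 := by
      intro d hd
      have h := term_le d (Nat.pos_of_mem_properDivisors hd).ne'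
      exact Nat.le_sub_one_of_lt h
    have hsub : n.properDivisors ⊆ Finset.Icc 1 (n/2) := by
      intro d hd
      rw [Nat.mem_properDivisors] at hd
      obtain ⟨k, hk⟩ := hd.1
      have hk2 : 2 ≤ k := by
        by_contra hk2
        interval_cases k <;> omega
      refine Finset.mem_Icc.2 ⟨by
        rcases Nat.eq_zero_or_pos d with rfl | hp
        · omega
        · omega, ?_⟩
      rw [Nat.le_div_iff_mul_le (by omega : 0 < 2)]
      calc d * 2 ≤ d * k := Nat.mul_le_mul_left _ hk2
        _ = n := hk.symm
    have hTle : ∑ d ∈ n.properDivisors, d * numIrred K d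
        ≤ ∑ d ∈ Finset.Icc 1 (n/2), (Fintype.card K ^ d - 1) :=
      (Finset.sum_le_sum hstep1).trans (Finset.sum_le_sum_of_subset hsub)
    have hT : (∑ d ∈ n.properDivisors, d * numIrred K d) + 1
        ≤ Fintype.card K ^ (n/2+1) :=
      (Nat.add_le_add_right hTle 1).trans (aux_geo_bound _ _ hq)
    have hstar := aux_star_ineq (Fintype.card K) n hq hn3
    -- combine
    have h₁ : n*((n-1) * numIrred K (n-1)) + n * Fintype.card K
        ≤ n * Fintype.card K ^ (n-1) := by
      have := Nat.mul_le_mul_left n hA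
      rw [Nat.mul_add] at this
      exact this
    have h₂ : (n-1) * Fintype.card K ^ n
        ≤ (n-1)*(n * numIrred K n) + (n-1) * Fintype.card K ^ (n/2+1) := by
      have hBP : Fintype.card K ^ n ≤ n * numIrred K n + Fintype.card K ^ (n/2+1) := by
        have : (∑ d ∈ n.divisors, d * numIrred K d) + 1 = Fintype.card K ^ n := hkeyn
        rw [hsplit] at this
        omega
      have := Nat.mul_le_mul_left (n-1) hBP
      rwa [Nat.mul_add] at this
    have hmain : n*((n-1) * numIrred K (n-1)) ≤ (n-1)*(n * numIrred K n) := by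
      linarith
    have hrw : (n-1)*(n * numIrred K n) = n*((n-1) * numIrred K n) := by ring
    rw [hrw] at hmain
    have step1 := Nat.le_of_mul_le_mul_left hmain (by omega : 0 < n)
    exact Nat.le_of_mul_le_mul_left step1 (by omega : 0 < n - 1)
end

section
/- Let q be a prime power and n ≥ 1, and let N_n = I_n + Σ_{k=1}^{⌊n/2⌋} I_k be the maximum cardinality of a pairwise coprime subset of S_n. Let A ⊆ S_n be pairwise coprime. Then |A| = N_n if and only if all of the following hold: (1) A contains every monic irreducible polynomial of degree n with nonzero constant term; (2) if n is even, then g² ∈ A for every monic irreducible polynomial g of degree n/2 with nonzero constant term; (3) for every monic irreducible polynomial g with nonzero constant term of degree k with 1 ≤ k < n/2, there exists a unique f ∈ A such that g divides f, and this f either has the form f = g^{n/k} (in which case k divides n), or has the form f = g^b · h for some integer b ≥ 1 with b·k < n/2 and some monic irreducible polynomial h of degree n − b·k, in which case h divides no element of A other than f. -/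
namespace Stmt12Aux

open Polynomial

variable {K : Type*} [Field K]

lemma finite_natDegree_le [Fintype K] (n : ℕ) : {f : K[X] | f.natDegree ≤ n}.Finite := by
  have h : Set.InjOn (fun f : K[X] => fun i : Fin (n + 1) => f.coeff i)
      {f : K[X] | f.natDegree ≤ n} := by
    intro f hf g hg hfg
    ext i
    by_cases hi : i ≤ n
    · exact congrFun hfg ⟨i, Nat.lt_succ_of_le hi⟩
    · rw [coeff_eq_zero_of_natDegree_lt (lt_of_le_of_lt hf (not_le.1 hi)),
        coeff_eq_zero_of_natDegree_lt (lt_of_le_of_lt hg (not_le.1 hi))]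
  exact Set.Finite.of_finite_image (Set.toFinite _) h

lemma coeff0_ne_of_dvd {f p : K[X]} (h : p ∣ f) (hf : f.coeff 0 ≠ 0) : p.coeff 0 ≠ 0 := by
  obtain ⟨m, rfl⟩ := h
  rw [mul_coeff_zero] at hf
  exact left_ne_zero_of_mul hf

lemma eq_of_monic_dvd_deg {f p : K[X]} (hf : f.Monic) (hp : p.Monic)
    (hdvd : p ∣ f) (hdeg : f.natDegree ≤ p.natDegree) : f = p := by
  obtain ⟨m, rfl⟩ := hdvd
  have hm : m.Monic := hp.of_mul_monic_left hf
  have h1 : (p * m).natDegree = p.natDegree + m.natDegree := hp.natDegree_mul hm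
  have h2 : m.natDegree = 0 := by omega
  rw [hm.natDegree_eq_zero.mp h2, mul_one]

lemma eq_of_monic_irred_dvd {p q : K[X]} (hp : p.Monic) (hq : q.Monic)
    (hip : Irreducible p) (hiq : Irreducible q) (h : p ∣ q) : p = q :=
  eq_of_monic_of_associated hp hq (hip.associated_of_dvd hiq h)

lemma eq_of_dvd_pow {p g : K[X]} (hp : p.Monic) (hg : g.Monic)
    (hip : Irreducible p) (hig : Irreducible g) {b : ℕ} (h : p ∣ g ^ b) : p = g :=
  eq_of_monic_irred_dvd hp hg hip hig (hip.prime.dvd_of_dvd_pow h)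

lemma exists_min_factor {f : K[X]} (hf : 1 ≤ f.natDegree) :
    ∃ p : K[X], (p.Monic ∧ Irreducible p ∧ p ∣ f) ∧
      ∀ r : K[X], r.Monic → Irreducible r → r ∣ f → p.natDegree ≤ r.natDegree := by
  classical
  have hne : ∃ d : ℕ, ∃ p : K[X], (p.Monic ∧ Irreducible p ∧ p ∣ f) ∧ p.natDegree = d := by
    obtain ⟨p, h1, h2, h3⟩ := f.exists_monic_irreducible_factor (not_isUnit_of_natDegree_pos f hf)
    exact ⟨p.natDegree, p, ⟨h1, h2, h3⟩, rfl⟩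
  obtain ⟨p, hp, hd⟩ := Nat.find_spec hne
  refine ⟨p, hp, fun r hr1 hr2 hr3 => ?_⟩
  rw [hd]
  exact Nat.find_le ⟨r, ⟨hr1, hr2, hr3⟩, rfl⟩

lemma min_factor_small {f p : K[X]} (hf : f.Monic) (hfi : ¬Irreducible f)
    (hp : p.Monic) (hpi : Irreducible p) (hpd : p ∣ f)
    (hmin : ∀ r : K[X], r.Monic → Irreducible r → r ∣ f → p.natDegree ≤ r.natDegree) :
    2 * p.natDegree ≤ f.natDegree := by
  obtain ⟨m, hfm⟩ := hpd
  have hm : m.Monic := hp.of_mul_monic_left (hfm ▸ hf)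
  have hmu : ¬IsUnit m := by
    intro hu
    rw [hm.eq_one_of_isUnit hu, mul_one] at hfm
    exact hfi (by rw [hfm]; exact hpi)
  obtain ⟨r, hr1, hr2, hr3⟩ := m.exists_monic_irreducible_factor hmu
  have h1 := hmin r hr1 hr2 (by rw [hfm]; exact hr3.mul_left p)
  have h2 : r.natDegree ≤ m.natDegree := natDegree_le_of_dvd hr3 hm.ne_zero
  have h3 : f.natDegree = p.natDegree + m.natDegree := by rw [hfm, hp.natDegree_mul hm]
  omega

/-- The target set `B`: monic irreducibles with nonzero constant term whose degree is
either `n` or at most `n/2`. -/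
def Bd (K : Type*) [Field K] (k : ℕ) : Set K[X] :=
  {f : Polynomial K | f.Monic ∧ Irreducible f ∧ f.natDegree = k ∧ f.coeff 0 ≠ 0}

def Bset (K : Type*) [Field K] (n : ℕ) : Set K[X] :=
  {f : K[X] | f.Monic ∧ Irreducible f ∧ f.coeff 0 ≠ 0 ∧
    (f.natDegree = n ∨ 2 * f.natDegree ≤ n)}

lemma Bd_finite [Fintype K] (k : ℕ) : (Bd K k).Finite :=
  (finite_natDegree_le k).subset fun f hf => hf.2.2.1.le

lemma Bset_finite [Fintype K] (n : ℕ) : (Bset K n).Finite :=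
  (finite_natDegree_le n).subset fun f hf => by
    simp only [Set.mem_setOf_eq]
    rcases hf.2.2.2 with h | h
    · exact h.le
    · omega

lemma ncard_biUnion_Bd [Fintype K] (s : Finset ℕ) :
    (⋃ k ∈ s, Bd K k).ncard = ∑ k ∈ s, (Bd K k).ncard := by
  classical
  refine Finset.induction_on s (by simp) ?_
  intro a s ha ih
  rw [Finset.set_biUnion_insert, Finset.sum_insert ha, ← ih]
  refine Set.ncard_union_eq ?_ (Bd_finite a)
    (Set.Finite.biUnion s.finite_toSet fun k _ => Bd_finite k)
  rw [Set.disjoint_left]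
  rintro f hf hf2
  simp only [Set.mem_iUnion] at hf2
  obtain ⟨k, hk, hfk⟩ := hf2
  have hak : a = k := hf.2.2.1.symm.trans hfk.2.2.1
  exact ha (hak ▸ hk)

lemma ncard_Bset [Fintype K] {n : ℕ} (hn : 1 ≤ n) :
    (Bset K n).ncard = (Bd K n).ncard + ∑ k ∈ Finset.Icc 1 (n / 2), (Bd K k).ncard := by
  classical
  have hsplit : Bset K n = Bd K n ∪ ⋃ k ∈ Finset.Icc 1 (n / 2), Bd K k := by
    ext f
    simp only [Bset, Bd, Set.mem_setOf_eq, Set.mem_union, Set.mem_iUnion, Finset.mem_Icc,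
      exists_prop]
    constructor
    · rintro ⟨h1, h2, h3, h4 | h4⟩
      · exact Or.inl ⟨h1, h2, h4, h3⟩
      · exact Or.inr ⟨f.natDegree, ⟨h2.natDegree_pos, by omega⟩, h1, h2, rfl, h3⟩
    · rintro (⟨h1, h2, h4, h3⟩ | ⟨k, ⟨hk1, hk2⟩, h1, h2, h4, h3⟩)
      · exact ⟨h1, h2, h3, Or.inl h4⟩
      · exact ⟨h1, h2, h3, Or.inr (by rw [h4]; omega)⟩
  have hdis : Disjoint (Bd K n) (⋃ k ∈ Finset.Icc 1 (n / 2), Bd K k) := by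
    rw [Set.disjoint_left]
    rintro f hf hf2
    simp only [Set.mem_iUnion, Finset.mem_Icc, exists_prop] at hf2
    obtain ⟨k, ⟨hk1, hk2⟩, hfk⟩ := hf2
    have h1 := hf.2.2.1
    have h2 := hfk.2.2.1
    omega
  rw [hsplit, Set.ncard_union_eq hdis (Bd_finite n)
    (Set.Finite.biUnion (Finset.Icc 1 (n / 2)).finite_toSet fun k _ => Bd_finite k),
    ncard_biUnion_Bd]

end Stmt12Aux

open Polynomial in
/-- Characterization of the pairwise coprime subsets of `S_n` of maximum
cardinality `N_n = I_n + Σ_{k=1}^{⌊n/2⌋} I_k`. -/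
theorem stmt_12 (K : Type*) [Field K] [Fintype K] (n : ℕ) (hn : 1 ≤ n)
    (A : Set (Polynomial K))
    (hA : ∀ f ∈ A, f.Monic ∧ f.natDegree = n ∧ f.coeff 0 ≠ 0)
    (hcop : ∀ f ∈ A, ∀ g ∈ A, f ≠ g → IsCoprime f g) :
    A.ncard = numIrred K n + ∑ k ∈ Finset.Icc 1 (n / 2), numIrred K k ↔
      -- (1) A contains every monic irreducible of degree n with nonzero constant term
      ((∀ f : Polynomial K, f.Monic → Irreducible f → f.natDegree = n → f.coeff 0 ≠ 0 →
          f ∈ A) ∧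
      -- (2) if n is even, A contains g² for every monic irreducible g of degree n/2
      --     with nonzero constant term
       (Even n → ∀ g : Polynomial K, g.Monic → Irreducible g → g.natDegree = n / 2 →
          g.coeff 0 ≠ 0 → g ^ 2 ∈ A) ∧
      -- (3) every monic irreducible g with nonzero constant term of degree k, 1 ≤ k < n/2,
      --     divides a unique f ∈ A, which is either g^(n/k) (with k ∣ n) or g^b·h with
      --     b·k < n/2, h irreducible of degree n - b·k dividing no other element of A
       (∀ g : Polynomial K, g.Monic → Irreducible g → g.coeff 0 ≠ 0 →
          1 ≤ g.natDegree → 2 * g.natDegree < n →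
          ∃ f ∈ A, g ∣ f ∧ (∀ f' ∈ A, g ∣ f' → f' = f) ∧
            ((g.natDegree ∣ n ∧ f = g ^ (n / g.natDegree)) ∨
             (∃ b : ℕ, 1 ≤ b ∧ 2 * (b * g.natDegree) < n ∧
               ∃ h : Polynomial K, h.Monic ∧ Irreducible h ∧
                 h.natDegree = n - b * g.natDegree ∧ f = g ^ b * h ∧
                 (∀ f' ∈ A, h ∣ f' → f' = f))))) := by
  classical
  have hAfin : A.Finite :=
    (Stmt12Aux.finite_natDegree_le n).subset fun f hf => ((hA f hf).2.1).le
  have hBfin := Stmt12Aux.Bset_finite (K := K) n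
  have huniq : ∀ p : K[X], ¬IsUnit p → ∀ f ∈ A, ∀ f' ∈ A, p ∣ f → p ∣ f' → f = f' := by
    intro p hp f hf f' hf' h1 h2
    by_contra hne
    exact hp ((hcop f hf f' hf' hne).isUnit_of_dvd' h1 h2)
  have hφex : ∀ f : K[X], f ∈ A → ∃ p, p ∈ Stmt12Aux.Bset K n ∧ p ∣ f := by
    intro f hf
    obtain ⟨hmon, hdeg, hc0⟩ := hA f hf
    obtain ⟨⟨hp1, hp2, hp3⟩, hmin⟩ :=
      (Stmt12Aux.exists_min_factor (f := f) (by rw [hdeg]; exact hn)).choose_spec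
    set p := (Stmt12Aux.exists_min_factor (f := f) (by rw [hdeg]; exact hn)).choose
    refine ⟨p, ⟨hp1, hp2, Stmt12Aux.coeff0_ne_of_dvd hp3 hc0, ?_⟩, hp3⟩
    by_cases hirr : Irreducible f
    · left
      have hpf : p = f := Stmt12Aux.eq_of_monic_irred_dvd hp1 hmon hp2 hirr hp3
      rw [hpf, hdeg]
    · right
      have := Stmt12Aux.min_factor_small hmon hirr hp1 hp2 hp3 hmin
      omega
  choose φ hφ using hφex
  set Φ : K[X] → K[X] := fun f => if h : f ∈ A then φ f h else 0 with hΦdef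
  have hΦmem : ∀ f ∈ A, Φ f ∈ Stmt12Aux.Bset K n := by
    intro f hf; simp only [hΦdef, dif_pos hf]; exact (hφ f hf).1
  have hΦdvd : ∀ f ∈ A, Φ f ∣ f := by
    intro f hf; simp only [hΦdef, dif_pos hf]; exact (hφ f hf).2
  have hΦinj : Set.InjOn Φ A := by
    intro f hf g hg hfg
    exact huniq (Φ f) (hΦmem f hf).2.1.not_isUnit f hf g hg (hΦdvd f hf)
      (hfg.symm ▸ hΦdvd g hg)
  have hupper : A.ncard ≤ (Stmt12Aux.Bset K n).ncard :=
    Set.ncard_le_ncard_of_injOn Φ hΦmem hΦinj hBfin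
  have hBcard : (Stmt12Aux.Bset K n).ncard
      = numIrred K n + ∑ k ∈ Finset.Icc 1 (n / 2), numIrred K k := by
    rw [Stmt12Aux.ncard_Bset hn]
    rfl
  constructor
  · intro hcard
    have hsurj : ∀ p ∈ Stmt12Aux.Bset K n, ∃ f ∈ A, Φ f = p := by
      have himg : Φ '' A = Stmt12Aux.Bset K n := by
        apply Set.eq_of_subset_of_ncard_le
        · rintro _ ⟨f, hf, rfl⟩; exact hΦmem f hf
        · rw [Set.ncard_image_of_injOn hΦinj, hcard, hBcard]
        · exact hBfin
      intro p hp
      rw [← himg] at hp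
      obtain ⟨f, hf, hfp⟩ := hp
      exact ⟨f, hf, hfp⟩
    have hkey : ∀ f ∈ A, ∀ r : K[X], r.Monic → Irreducible r → r ∣ f →
        2 * r.natDegree ≤ n → r = Φ f := by
      intro f hf r h1 h2 h3 h4
      have hr : r ∈ Stmt12Aux.Bset K n :=
        ⟨h1, h2, Stmt12Aux.coeff0_ne_of_dvd h3 (hA f hf).2.2, Or.inr h4⟩
      obtain ⟨f', hf', hΦf'⟩ := hsurj r hr
      have heq : f' = f := huniq r h2.not_isUnit f' hf' f hf (hΦf' ▸ hΦdvd f' hf') h3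
      rw [← hΦf', heq]
    refine ⟨?_, ?_, ?_⟩
    · -- (1)
      intro f h1 h2 h3 h4
      obtain ⟨g, hg, hΦg⟩ := hsurj f ⟨h1, h2, h4, Or.inl h3⟩
      have hdvd : f ∣ g := hΦg ▸ hΦdvd g hg
      have hgf : g = f :=
        Stmt12Aux.eq_of_monic_dvd_deg (hA g hg).1 h1 hdvd (by rw [(hA g hg).2.1, h3])
      exact hgf ▸ hg
    · -- (2)
      intro hev g h1 h2 h3 h4
      obtain ⟨m0, hm0⟩ := hev
      have hgB : g ∈ Stmt12Aux.Bset K n := ⟨h1, h2, h4, Or.inr (by omega)⟩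
      obtain ⟨f, hf, hΦf⟩ := hsurj g hgB
      obtain ⟨hfm, hfdeg, hfc⟩ := hA f hf
      have hgf : g ∣ f := hΦf ▸ hΦdvd f hf
      obtain ⟨m, hfeq⟩ := hgf
      have hmm : m.Monic := h1.of_mul_monic_left (hfeq ▸ hfm)
      have hdegm : m.natDegree = n / 2 := by
        have h5 : f.natDegree = g.natDegree + m.natDegree := by
          rw [hfeq, h1.natDegree_mul hmm]
        omega
      have hmu : ¬IsUnit m := by
        intro hu
        rw [hmm.eq_one_of_isUnit hu] at hdegm
        simp only [natDegree_one] at hdegm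
        omega
      obtain ⟨r, hr1, hr2, hr3⟩ := m.exists_monic_irreducible_factor hmu
      have hrf : r ∣ f := by rw [hfeq]; exact hr3.mul_left g
      have hrdeg : r.natDegree ≤ n / 2 := hdegm ▸ natDegree_le_of_dvd hr3 hmm.ne_zero
      have hrg : r = g := by
        have := hkey f hf r hr1 hr2 hrf (by omega)
        rw [this, hΦf]
      have hgm : g ∣ m := hrg ▸ hr3
      have hmg : m = g := Stmt12Aux.eq_of_monic_dvd_deg hmm h1 hgm (by rw [hdegm, h3])
      rw [hfeq, hmg, ← sq] at hf
      exact hf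
    · -- (3)
      intro g h1 h2 h3 h4 h5
      have hgB : g ∈ Stmt12Aux.Bset K n := ⟨h1, h2, h3, Or.inr (by omega)⟩
      obtain ⟨f, hf, hΦf⟩ := hsurj g hgB
      obtain ⟨hfm, hfdeg, hfc⟩ := hA f hf
      have hgf : g ∣ f := hΦf ▸ hΦdvd f hf
      have hf0 : f ≠ 0 := hfm.ne_zero
      refine ⟨f, hf, hgf, fun f' hf' hd => huniq g h2.not_isUnit f' hf' f hf hd hgf, ?_⟩
      set M := UniqueFactorizationMonoid.normalizedFactors f with hM
      have hMel : ∀ r ∈ M, r.Monic ∧ Irreducible r := by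
        intro r hr
        have hirr := UniqueFactorizationMonoid.irreducible_of_normalized_factor r hr
        have hnorm := UniqueFactorizationMonoid.normalize_normalized_factor r hr
        exact ⟨hnorm ▸ Polynomial.monic_normalize hirr.ne_zero, hirr⟩
      have hMprod : M.prod = f := by
        have hassoc := UniqueFactorizationMonoid.prod_normalizedFactors hf0
        refine Polynomial.eq_of_monic_of_associated ?_ hfm hassoc
        have := monic_multiset_prod_of_monic M id fun r hr => (hMel r hr).1
        simpa using this
      have hdegsum : (M.map Polynomial.natDegree).sum = n := by
        rw [← Polynomial.natDegree_multiset_prod_of_monic M fun r hr => (hMel r hr).1,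
          hMprod, hfdeg]
      have hgM : g ∈ M := by
        obtain ⟨q, hq, hassoc⟩ :=
          UniqueFactorizationMonoid.exists_mem_normalizedFactors_of_dvd hf0 h2 hgf
        rwa [Polynomial.eq_of_monic_of_associated h1 (hMel q hq).1 hassoc]
      have hbig : ∀ r ∈ M, r = g ∨ n < 2 * r.natDegree := by
        intro r hr
        by_cases hsmall : 2 * r.natDegree ≤ n
        · left
          have := hkey f hf r (hMel r hr).1 (hMel r hr).2
            (UniqueFactorizationMonoid.dvd_of_mem_normalizedFactors hr) hsmall
          rw [this, hΦf]
        · right; omega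
      by_cases hall : ∀ r ∈ M, r = g
      · left
        have hrep : M = Multiset.replicate (Multiset.card M) g :=
          Multiset.eq_replicate_of_mem hall
        have hfpow : f = g ^ Multiset.card M := by
          conv_lhs => rw [← hMprod, hrep, Multiset.prod_replicate]
        have hdeg2 : Multiset.card M * g.natDegree = n := by
          rw [← hfdeg, hfpow, Polynomial.natDegree_pow]
        refine ⟨⟨Multiset.card M, by rw [← hdeg2, mul_comm]⟩, ?_⟩
        have hq : n / g.natDegree = Multiset.card M := by
          rw [← hdeg2, Nat.mul_div_cancel _ (by omega : 0 < g.natDegree)]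
        rw [hq]; exact hfpow
      · right
        push_neg at hall
        obtain ⟨h, hhM, hhg⟩ := hall
        have hhbig : n < 2 * h.natDegree := (hbig h hhM).resolve_left hhg
        have hcons : h ::ₘ M.erase h = M := Multiset.cons_erase hhM
        have hall' : ∀ r ∈ M.erase h, r = g := by
          intro r hr
          by_contra hrg
          have hrM : r ∈ M := Multiset.mem_of_mem_erase hr
          have hrbig : n < 2 * r.natDegree := (hbig r hrM).resolve_left hrg
          have hsum : h.natDegree + ((M.erase h).map Polynomial.natDegree).sum = n := by
            conv_rhs => rw [← hdegsum, ← hcons]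
            rw [Multiset.map_cons, Multiset.sum_cons]
          have hrle : r.natDegree ≤ ((M.erase h).map Polynomial.natDegree).sum :=
            Multiset.single_le_sum (fun x _ => Nat.zero_le x) _
              (Multiset.mem_map_of_mem _ hr)
          omega
        set b := Multiset.card (M.erase h) with hb
        have hrep : M.erase h = Multiset.replicate b g := Multiset.eq_replicate_of_mem hall'
        have hgerase : g ∈ M.erase h :=
          (Multiset.mem_erase_of_ne fun hgh => hhg hgh.symm).2 hgM
        have hb1 : 1 ≤ b := by
          have : 0 < Multiset.card (M.erase h) :=
            Multiset.card_pos_iff_exists_mem.mpr ⟨g, hgerase⟩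
          omega
        have hmonh := (hMel h hhM).1
        have hirrh := (hMel h hhM).2
        have hfform : f = g ^ b * h := by
          rw [← hMprod, ← hcons, Multiset.prod_cons, hrep, Multiset.prod_replicate, mul_comm]
        have hdegf2 : n = b * g.natDegree + h.natDegree := by
          rw [← hfdeg, hfform, (h1.pow b).natDegree_mul hmonh, Polynomial.natDegree_pow]
        refine ⟨b, hb1, by omega, h, hmonh, hirrh, by omega, hfform, ?_⟩
        intro f' hf' hd
        exact huniq h hirrh.not_isUnit f' hf' f hf hd
          (UniqueFactorizationMonoid.dvd_of_mem_normalizedFactors hhM)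
  · rintro ⟨c1, c2, c3⟩
    refine le_antisymm (hupper.trans_eq hBcard) ?_
    rw [← hBcard]
    have hΨex : ∀ g : K[X], g ∈ Stmt12Aux.Bset K n → ∃ f, f ∈ A ∧ g ∣ f ∧
        ∀ g' : K[X], g'.Monic → Irreducible g' → g' ∣ f →
          g'.natDegree ≤ g.natDegree → g' = g := by
      rintro g ⟨h1, h2, h3, hdeg⟩
      rcases hdeg with hdeg | hdeg
      · refine ⟨g, c1 g h1 h2 hdeg h3, dvd_refl g, ?_⟩
        intro g' hg1 hg2 hg3 _
        exact Stmt12Aux.eq_of_monic_irred_dvd hg1 h1 hg2 h2 hg3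
      · rcases eq_or_lt_of_le hdeg with heq | hlt
        · have hev : Even n := ⟨g.natDegree, by omega⟩
          have hd2 : g.natDegree = n / 2 := by omega
          refine ⟨g ^ 2, c2 hev g h1 h2 hd2 h3, dvd_pow_self g two_ne_zero, ?_⟩
          intro g' hg1 hg2 hg3 _
          exact Stmt12Aux.eq_of_dvd_pow hg1 h1 hg2 h2 hg3
        · obtain ⟨f, hfA, hgf, huq, hstr⟩ := c3 g h1 h2 h3 h2.natDegree_pos hlt
          refine ⟨f, hfA, hgf, ?_⟩
          intro g' hg1 hg2 hg3 hg4
          rcases hstr with ⟨hdvd, hfeq⟩ | ⟨b, hb1, hb2, h, hh1, hh2, hh3, hfeq, huqh⟩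
          · exact Stmt12Aux.eq_of_dvd_pow hg1 h1 hg2 h2 (hfeq ▸ hg3)
          · rcases hg2.prime.2.2 _ _ (hfeq ▸ hg3) with hc | hc
            · exact Stmt12Aux.eq_of_dvd_pow hg1 h1 hg2 h2 hc
            · exfalso
              have hgh : g' = h := Stmt12Aux.eq_of_monic_irred_dvd hg1 hh1 hg2 hh2 hc
              rw [hgh, hh3] at hg4
              omega
    choose Ψ0 hΨ0 using hΨex
    set Ψ : K[X] → K[X] := fun g => if h : g ∈ Stmt12Aux.Bset K n then Ψ0 g h else 0
      with hΨdef
    have hΨA : ∀ g ∈ Stmt12Aux.Bset K n, Ψ g ∈ A := by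
      intro g hg; simp only [hΨdef, dif_pos hg]; exact (hΨ0 g hg).1
    have hΨspec : ∀ g, ∀ hg : g ∈ Stmt12Aux.Bset K n, g ∣ Ψ g ∧
        ∀ g' : K[X], g'.Monic → Irreducible g' → g' ∣ Ψ g →
          g'.natDegree ≤ g.natDegree → g' = g := by
      intro g hg
      simp only [hΨdef, dif_pos hg]
      exact ⟨(hΨ0 g hg).2.1, (hΨ0 g hg).2.2⟩
    have hΨinj : Set.InjOn Ψ (Stmt12Aux.Bset K n) := by
      intro g1 hg1 g2 hg2 heq
      obtain ⟨hd1, hp1⟩ := hΨspec g1 hg1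
      obtain ⟨hd2, hp2⟩ := hΨspec g2 hg2
      rcases le_total g1.natDegree g2.natDegree with hle | hle
      · exact hp2 g1 hg1.1 hg1.2.1 (heq ▸ hd1) hle
      · exact (hp1 g2 hg2.1 hg2.2.1 (heq.symm ▸ hd2) hle).symm
    exact Set.ncard_le_ncard_of_injOn Ψ hΨA hΨinj hAfin
end

section
/- Let q be a prime power. For k ≥ 1 let I_k denote the number of monic irreducible polynomials of degree k over F_q with nonzero constant term, and for n ≥ 1 set D_n = Π_{k=1}^{⌊(n−1)/2⌋} I_{n−k}! / (I_{n−k} − I_k)!. Then log_q D_n = Θ(q^{n/2}) as n → ∞; that is, there exist constants c, C > 0 and N such that for all n ≥ N, c · q^{n/2} ≤ log_q D_n ≤ C · q^{n/2} (where q^{n/2} denotes the real number q raised to the power n/2 and log_q is the real logarithm in base q). -/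
/-- `Dnum K n = Π_{k=1}^{⌊(n-1)/2⌋} I_(n-k)!/(I_(n-k) − I_k)!`, the number of maximal
pairwise coprime families produced by the irreducible-pairing construction. -/
noncomputable def Dnum (K : Type*) [Field K] (n : ℕ) : ℕ :=
  ∏ k ∈ Finset.Icc 1 ((n - 1) / 2),
    (numIrred K (n - k)).factorial / (numIrred K (n - k) - numIrred K k).factorial

/-! ### Auxiliary material -/

open scoped Classical
open Polynomial IntermediateField

section NatHelpers

theorem help1 : ∀ j : ℕ, 9 ≤ j → j ≤ 2 ^ (j - 5) := by
  intro j hj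
  induction j with
  | zero => omega
  | succ j ih =>
    rcases Nat.lt_or_ge j 9 with h | h
    · have : j = 8 := by omega
      subst this; norm_num
    · have := ih (by omega)
      have h2 : j + 1 - 5 = (j - 5) + 1 := by omega
      rw [h2, pow_succ]
      omega

theorem help2 : ∀ t : ℕ, 7 ≤ t → 4 * t + 16 ≤ 2 ^ t := by
  intro t ht
  induction t with
  | zero => omega
  | succ t ih =>
    rcases Nat.lt_or_ge t 7 with h | h
    · have : t = 6 := by omega
      subst this; norm_num
    · have := ih (by omega)
      rw [pow_succ]
      omega

theorem help3 : ∀ s : ℕ, 15 ≤ s → 16 * (s + 1) ^ 2 ≤ 2 ^ s := by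
  intro s hs
  induction s with
  | zero => omega
  | succ s ih =>
    rcases Nat.lt_or_ge s 15 with h | h
    · have : s = 14 := by omega
      subst this; norm_num
    · have h1 := ih (by omega)
      rw [pow_succ 2]
      have : 16 * (s + 1 + 1) ^ 2 ≤ 2 * (16 * (s + 1) ^ 2) := by nlinarith
      omega

theorem mono_core (j A B X Y Z : ℕ) (hj : 5 ≤ j) (h1 : Z ≤ (j+1) * B + 2 * Y)
    (h2 : j * A ≤ X) (h4 : 4 * Y ≤ X) (h5 : 2 * X ≤ Z) (hY : 1 ≤ Y) :
    A ≤ B := by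
  by_contra hc
  push_neg at hc
  have hc' : B + 1 ≤ A := hc
  nlinarith [Nat.mul_le_mul_left j h2, Nat.mul_le_mul_left j h1]

theorem b3_core (m j0 u v X Y Z Qe : ℕ) (hm : 4 ≤ m) (hj : j0 ≤ m + 2) (hj1 : m + 1 ≤ j0)
    (h1 : m * u ≤ X) (h2 : Z ≤ j0 * v + 2 * Y) (h3 : 2 * X ≤ Z) (h4 : X = Qe * Y)
    (h5 : 2 * m + 8 ≤ Qe) (hY : 1 ≤ Y) : u + Y ≤ v := by
  by_contra hc
  push_neg at hc
  have hc' : v + 1 ≤ u + Y := hc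
  nlinarith [Nat.mul_le_mul_left j0 h1, Nat.mul_le_mul_left m h2]

theorem fixpow_gcd {M : Type*} [Monoid M] (a : M) (Q : ℕ) :
    ∀ d k : ℕ, a ^ Q ^ d = a → a ^ Q ^ k = a → a ^ Q ^ (Nat.gcd d k) = a := by
  intro d
  induction d using Nat.strong_induction_on with
  | _ d ih =>
    intro k hd hk
    rcases Nat.eq_zero_or_pos d with hd0 | hd0
    · subst hd0; simpa using hk
    · have hmul : ∀ t : ℕ, a ^ Q ^ (d * t) = a := by
        intro t
        induction t with
        | zero => simpa using rfl
        | succ t iht =>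
          rw [Nat.mul_succ, pow_add, pow_mul, iht, hd]
      have key : a ^ Q ^ k = a ^ Q ^ (k % d) := by
        conv_lhs => rw [← Nat.div_add_mod k d]
        rw [pow_add, pow_mul, hmul]
      have hmod : a ^ Q ^ (k % d) = a := key.symm.trans hk
      rw [Nat.gcd_rec]
      exact ih (k % d) (Nat.mod_lt _ hd0) d hmod hd

end NatHelpers

section Alg
variable (K : Type*) [Field K] [Fintype K]

local notation "Ω" => AlgebraicClosure K
local notation "Q" => Fintype.card K

theorem pow_card_deg (α : AlgebraicClosure K) :
    α ^ Q ^ ((minpoly K α).natDegree) = α := by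
  have hint : IsIntegral K α := (Algebra.IsAlgebraic.isAlgebraic α).isIntegral
  set L := K⟮α⟯ with hL
  have hfd : FiniteDimensional K L := adjoin.finiteDimensional hint
  have hfin : Finite L := Module.finite_of_finite K
  have : Fintype L := Fintype.ofFinite L
  have hcard : Fintype.card L = Fintype.card K ^ Module.finrank K L :=
    Module.card_eq_pow_finrank (K := K)
  have hrank : Module.finrank K L = (minpoly K α).natDegree := adjoin.finrank hint
  have hx : (AdjoinSimple.gen K α) ^ (Fintype.card L) = AdjoinSimple.gen K α :=
    FiniteField.pow_card _
  have := congrArg (Subtype.val) hx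
  simpa [hcard, hrank] using this

/-- The set of monic irreducible polynomials of degree `k`. -/
def Aset (k : ℕ) : Set (Polynomial K) :=
  {f | f.Monic ∧ Irreducible f ∧ f.natDegree = k}

/-- root finset in the algebraic closure -/
noncomputable def rs (f : Polynomial K) : Finset Ω := (f.aroots Ω).toFinset

/-- the roots of `X^(Q^k) - X` -/
noncomputable def Tk (k : ℕ) : Finset Ω :=
  ((X ^ Q ^ k - X : Polynomial Ω).roots).toFinset

variable {K}

theorem mem_rs {f : Polynomial K} (hf : f ≠ 0) {α : Ω} :
    α ∈ rs K f ↔ aeval α f = 0 := by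
  simp [rs, mem_aroots, hf]

theorem minpoly_eq_of_mem_rs {f : Polynomial K} {k : ℕ} (hf : f ∈ Aset K k) {α : Ω}
    (hα : α ∈ rs K f) : minpoly K α = f := by
  obtain ⟨hm, hi, hd⟩ := hf
  have := (mem_rs hi.ne_zero).1 hα
  exact (minpoly.eq_of_irreducible_of_monic hi this hm).symm

theorem card_rs {f : Polynomial K} {k : ℕ} (hf : f ∈ Aset K k) : (rs K f).card = k := by
  obtain ⟨hm, hi, hd⟩ := hf
  have hsep : (f.map (algebraMap K Ω)).Separable :=
    (PerfectField.separable_of_irreducible hi).map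
  have hnd : (f.aroots Ω).Nodup := nodup_roots hsep
  have hsp : Splits (f.map (algebraMap K Ω)) :=
    IsAlgClosed.splits _
  rw [rs, Multiset.toFinset_card_of_nodup hnd, aroots, splits_iff_card_roots.mp hsp,
    natDegree_map, hd]

theorem mem_Tk {k : ℕ} (hk : 1 ≤ k) {α : Ω} : α ∈ Tk K k ↔ α ^ Q ^ k = α := by
  have hQ : 2 ≤ Q ^ k := le_trans Fintype.one_lt_card (Nat.le_self_pow (by omega) _)
  have hne : (X ^ Q ^ k - X : Polynomial Ω) ≠ 0 :=
    FiniteField.X_pow_card_sub_X_ne_zero _ hQ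
  simp only [Tk, Multiset.mem_toFinset, mem_roots hne]
  simp [sub_eq_zero]

theorem rs_subset_Tk {f : Polynomial K} {k : ℕ} (hf : f ∈ Aset K k) (hk : 1 ≤ k) :
    rs K f ⊆ Tk K k := by
  intro α hα
  have hmp := minpoly_eq_of_mem_rs hf hα
  have hdeg : (minpoly K α).natDegree = k := by rw [hmp, hf.2.2]
  have hpow : α ^ Q ^ k = α := by rw [← hdeg]; exact pow_card_deg K α
  exact (mem_Tk hk).mpr hpow

theorem card_Tk_le (k : ℕ) : (Tk K k).card ≤ Q ^ k := by
  refine le_trans (Multiset.toFinset_card_le _) ?_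
  refine le_trans (card_roots' _) ?_
  refine le_trans (natDegree_sub_le _ _) ?_
  simp only [natDegree_X_pow, natDegree_X, max_le_iff]
  exact ⟨le_rfl, Nat.one_le_pow _ _ Fintype.card_pos⟩

theorem card_Tk {k : ℕ} (hk : 1 ≤ k) : (Tk K k).card = Q ^ k := by
  have : CharP K (ringChar K) := ringChar.charP K
  have hpp : Fact (ringChar K).Prime := ⟨CharP.char_is_prime K _⟩
  have hchar : CharP Ω (ringChar K) :=
    charP_of_injective_algebraMap (algebraMap K Ω).injective _
  have hdvd : (ringChar K) ∣ Q :=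
    (CharP.cast_eq_zero_iff K (ringChar K) Q).mp (FiniteField.cast_card_eq_zero K)
  have hsep : Separable (X ^ Q ^ k - X : Polynomial Ω) :=
    galois_poly_separable (ringChar K) _ (hdvd.trans (dvd_pow_self _ (by omega)))
  have hQ : 1 < Q ^ k := Nat.one_lt_pow (by omega) Fintype.one_lt_card
  have hnd : (X ^ Q ^ k - X : Polynomial Ω).natDegree = Q ^ k :=
    FiniteField.X_pow_card_sub_X_natDegree_eq _ hQ
  have hsp : Splits (X ^ Q ^ k - X : Polynomial Ω) :=
    IsAlgClosed.splits _
  rw [Tk, Multiset.toFinset_card_of_nodup (nodup_roots hsep),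
    splits_iff_card_roots.mp hsp, hnd]

/-- fixed points of the `k`-th iterate of the `Q`-power Frobenius -/
noncomputable def fixedFieldQ (k : ℕ) : IntermediateField K Ω where
  carrier := {x | x ^ Q ^ k = x}
  mul_mem' := by
    intro a b ha hb
    simp only [Set.mem_setOf_eq, mul_pow] at *
    rw [ha, hb]
  one_mem' := by simp
  add_mem' := by
    intro a b ha hb
    have : CharP K (ringChar K) := ringChar.charP K
    obtain ⟨s, hpp, hs⟩ := FiniteField.card K (ringChar K)
    have hfact : Fact (ringChar K).Prime := ⟨hpp⟩
    have hchar : CharP Ω (ringChar K) :=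
      charP_of_injective_algebraMap (algebraMap K Ω).injective _
    simp only [Set.mem_setOf_eq] at *
    rw [hs, ← pow_mul, add_pow_char_pow, pow_mul, ← hs, ha, hb]
  zero_mem' := by
    have : (0:ℕ) < Q ^ k := Nat.pow_pos Fintype.card_pos
    simp [Set.mem_setOf_eq, zero_pow this.ne']
  algebraMap_mem' := by
    intro x
    simp only [Set.mem_setOf_eq, ← map_pow, FiniteField.pow_card_pow]
  inv_mem' := by
    intro x hx
    simp only [Set.mem_setOf_eq, inv_pow] at *
    rw [hx]

theorem deg_le {k : ℕ} (hk : 1 ≤ k) {α : Ω} (hα : α ^ Q ^ k = α) :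
    (minpoly K α).natDegree ≤ k := by
  have hint : IsIntegral K α := (Algebra.IsAlgebraic.isAlgebraic α).isIntegral
  have hle : K⟮α⟯ ≤ fixedFieldQ k := by
    rw [adjoin_le_iff]
    intro x hx
    rcases hx with rfl
    exact hα
  have hfd : FiniteDimensional K K⟮α⟯ := adjoin.finiteDimensional hint
  have : Finite K⟮α⟯ := Module.finite_of_finite K
  have : Fintype K⟮α⟯ := Fintype.ofFinite _
  have hcard : Fintype.card K⟮α⟯ = Q ^ (minpoly K α).natDegree := by
    rw [Module.card_eq_pow_finrank (K := K), adjoin.finrank hint]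
  have hFT : ((fixedFieldQ k : IntermediateField K Ω) : Set Ω) ⊆ ↑(Tk K k) := by
    intro x hx
    exact (mem_Tk hk).mpr hx
  have hsub : (K⟮α⟯ : Set Ω) ⊆ ↑(Tk K k) := le_trans hle hFT
  have hn : (K⟮α⟯ : Set Ω).ncard ≤ (Tk K k).card := by
    rw [← Set.ncard_coe_finset (Tk K k)]
    exact Set.ncard_le_ncard hsub (Tk K k).finite_toSet
  rw [← Nat.card_coe_set_eq, SetLike.coe_sort_coe, Nat.card_eq_fintype_card, hcard,
    card_Tk hk] at hn
  exact (Nat.pow_le_pow_iff_right Fintype.one_lt_card).mp hn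

theorem finite_Aset {k : ℕ} (hk : 1 ≤ k) : (Aset K k).Finite := by
  have hinj : Set.InjOn (rs K) (Aset K k) := by
    intro f hf g hg hfg
    have hcard : (rs K f).card = k := card_rs hf
    obtain ⟨α, hα⟩ : ∃ α, α ∈ rs K f := Finset.card_pos.mp (by omega)
    have h1 := minpoly_eq_of_mem_rs hf hα
    have h2 := minpoly_eq_of_mem_rs hg (hfg ▸ hα)
    rw [← h1, ← h2]
  apply Set.Finite.of_finite_image ?_ hinj
  apply Set.Finite.subset ((Tk K k).powerset.finite_toSet)
  rintro S ⟨f, hf, rfl⟩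
  simpa using rs_subset_Tk hf hk

/-- the finset of monic irreducible polys of degree `k` -/
noncomputable def AF (k : ℕ) : Finset (Polynomial K) :=
  if hk : 1 ≤ k then (finite_Aset (K := K) hk).toFinset else ∅

theorem mem_AF {k : ℕ} (hk : 1 ≤ k) {f : Polynomial K} :
    f ∈ AF (K := K) k ↔ f ∈ Aset K k := by
  simp [AF, hk]

theorem AF_disj {k : ℕ} (hk : 1 ≤ k) :
    ∀ f ∈ AF (K := K) k, ∀ g ∈ AF (K := K) k, f ≠ g → Disjoint (rs K f) (rs K g) := by
  intro f hf g hg hne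
  rw [mem_AF hk] at hf hg
  rw [Finset.disjoint_left]
  intro α h1 h2
  exact hne ((minpoly_eq_of_mem_rs hf h1).symm.trans (minpoly_eq_of_mem_rs hg h2))

theorem count_upper {k : ℕ} (hk : 1 ≤ k) : k * (AF (K := K) k).card ≤ Q ^ k := by
  have hbu : ((AF (K := K) k).biUnion (rs K)).card = k * (AF (K := K) k).card := by
    rw [Finset.card_biUnion (AF_disj hk)]
    rw [Finset.sum_congr rfl (fun f hf => card_rs ((mem_AF hk).mp hf))]
    simp [mul_comm]
  rw [← hbu, ← card_Tk (K := K) hk]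
  apply Finset.card_le_card
  intro α hα
  obtain ⟨f, hf, hαf⟩ := Finset.mem_biUnion.mp hα
  exact rs_subset_Tk ((mem_AF hk).mp hf) hk hαf

theorem geom_sum_le (m : ℕ) : ∑ j ∈ Finset.Icc 1 m, Q ^ j ≤ 2 * Q ^ m := by
  induction m with
  | zero => simp
  | succ m ih =>
    rw [← Finset.insert_Icc_right_eq_Icc_add_one (by omega), Finset.sum_insert (by simp)]
    have hQ2 : 2 ≤ Q := Fintype.one_lt_card (α := K)
    have h2 : 2 * Q ^ m ≤ Q ^ (m + 1) := by
      calc 2 * Q ^ m ≤ Q * Q ^ m := Nat.mul_le_mul_right _ hQ2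
      _ = Q ^ (m + 1) := (pow_succ' _ _).symm
    omega

theorem count_lower {k : ℕ} (hk : 1 ≤ k) :
    Q ^ k ≤ k * (AF (K := K) k).card + 2 * Q ^ (k / 2) := by
  have hcov : Tk K k ⊆ ((AF (K := K) k).biUnion (rs K)) ∪
      (Finset.Icc 1 (k / 2)).biUnion (Tk K) := by
    intro α hα
    have hpow : α ^ Q ^ k = α := (mem_Tk hk).mp hα
    have hint : IsIntegral K α := (Algebra.IsAlgebraic.isAlgebraic α).isIntegral
    set d := (minpoly K α).natDegree with hd
    have hd1 : 1 ≤ d := minpoly.natDegree_pos hint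
    have hdk : d ≤ k := deg_le hk hpow
    rcases eq_or_lt_of_le hdk with heq | hlt
    · apply Finset.mem_union_left
      apply Finset.mem_biUnion.mpr
      refine ⟨minpoly K α, (mem_AF hk).mpr ⟨minpoly.monic hint, minpoly.irreducible hint, heq⟩, ?_⟩
      exact (mem_rs (minpoly.ne_zero hint)).mpr (minpoly.aeval K α)
    · apply Finset.mem_union_right
      set g := Nat.gcd d k with hg
      have hg1 : 1 ≤ g := Nat.gcd_pos_of_pos_left k (show 0 < d by omega)
      have hgd : g ≤ d := Nat.le_of_dvd (by omega) (Nat.gcd_dvd_left _ _)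
      have hgk : g ∣ k := Nat.gcd_dvd_right _ _
      have hghalf : g ≤ k / 2 := by
        have : g ≠ k := by omega
        obtain ⟨t, ht⟩ := hgk
        have ht2 : 2 ≤ t := by
          rcases t with _ | _ | t
          · omega
          · omega
          · omega
        have h2g : 2 * g ≤ k := by
          rw [ht]
          calc 2 * g ≤ t * g := Nat.mul_le_mul_right _ ht2
          _ = g * t := mul_comm _ _
        omega
      have hαg : α ^ Q ^ g = α := fixpow_gcd α Q d k (pow_card_deg K α) hpow
      exact Finset.mem_biUnion.mpr ⟨g, Finset.mem_Icc.mpr ⟨hg1, hghalf⟩, (mem_Tk hg1).mpr hαg⟩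
  have h1 : (Tk K k).card ≤ ((AF (K := K) k).biUnion (rs K)).card +
      ((Finset.Icc 1 (k / 2)).biUnion (Tk K)).card :=
    le_trans (Finset.card_le_card hcov) (Finset.card_union_le _ _)
  have h2 : ((AF (K := K) k).biUnion (rs K)).card = k * (AF (K := K) k).card := by
    rw [Finset.card_biUnion (AF_disj hk)]
    rw [Finset.sum_congr rfl (fun f hf => card_rs ((mem_AF hk).mp hf))]
    simp [mul_comm]
  have h3 : ((Finset.Icc 1 (k / 2)).biUnion (Tk K)).card ≤ 2 * Q ^ (k / 2) := by
    refine le_trans (Finset.card_biUnion_le) (le_trans ?_ (geom_sum_le _))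
    exact Finset.sum_le_sum (fun j _ => card_Tk_le j)
  rw [card_Tk hk] at h1
  omega

/-! ### The `J`-layer: counting via `numIrred` -/

theorem numIrred_le_J {k : ℕ} (hk : 1 ≤ k) : numIrred K k ≤ (AF (K := K) k).card := by
  rw [← Set.ncard_coe_finset]
  apply Set.ncard_le_ncard ?_ (AF (K := K) k).finite_toSet
  intro f hf
  rw [Finset.mem_coe, mem_AF hk]
  exact ⟨hf.1, hf.2.1, hf.2.2.1⟩

theorem numIrred_eq_J {k : ℕ} (hk : 2 ≤ k) : numIrred K k = (AF (K := K) k).card := by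
  rw [← Set.ncard_coe_finset]
  apply congrArg Set.ncard
  ext f
  simp only [Finset.mem_coe, mem_AF (show 1 ≤ k by omega), Aset, Set.mem_setOf_eq, numIrred]
  refine ⟨fun h => ⟨h.1, h.2.1, h.2.2.1⟩, fun ⟨hm, hi, hd⟩ => ⟨hm, hi, hd, fun hc => ?_⟩⟩
  have hX : (X : Polynomial K) ∣ f := X_dvd_iff.mpr hc
  obtain ⟨g, rfl⟩ := hX
  rcases hi.isUnit_or_isUnit rfl with h | h
  · exact Polynomial.not_isUnit_X h
  · have hg : g.natDegree = 0 := by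
      obtain ⟨r, hr, rfl⟩ := isUnit_iff.mp h
      simp
    have hgz : g ≠ 0 := by
      rintro rfl
      simp at hd
      omega
    have := natDegree_mul (X_ne_zero (R := K)) hgz
    rw [natDegree_X] at this
    omega

theorem J_le_pow {k : ℕ} (hk : 1 ≤ k) : (AF (K := K) k).card ≤ Q ^ k :=
  le_trans (Nat.le_mul_of_pos_left _ (by omega)) (count_upper hk)

theorem J_pow4 {j : ℕ} (hj : 13 ≤ j) : Q ^ 4 ≤ (AF (K := K) j).card := by
  have hQ2 : 2 ≤ Q := Fintype.one_lt_card (α := K)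
  have key : j * Q ^ 4 + 2 * Q ^ (j / 2) ≤ Q ^ j := by
    have e1 : j * Q ^ 4 ≤ Q ^ (j - 1) := by
      calc j * Q ^ 4 ≤ 2 ^ (j - 5) * Q ^ 4 :=
            Nat.mul_le_mul_right _ (help1 j (by omega))
      _ ≤ Q ^ (j - 5) * Q ^ 4 := Nat.mul_le_mul_right _ (Nat.pow_le_pow_left hQ2 _)
      _ = Q ^ (j - 5 + 4) := (pow_add _ _ _).symm
      _ ≤ Q ^ (j - 1) := Nat.pow_le_pow_right (by omega) (by omega)
    have e2 : 2 * Q ^ (j / 2) ≤ Q ^ (j - 1) := by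
      calc 2 * Q ^ (j / 2) ≤ Q * Q ^ (j / 2) := Nat.mul_le_mul_right _ hQ2
      _ = Q ^ (j / 2 + 1) := (pow_succ' _ _).symm
      _ ≤ Q ^ (j - 1) := Nat.pow_le_pow_right (by omega) (by omega)
    have e3 : 2 * Q ^ (j - 1) ≤ Q ^ j := by
      calc 2 * Q ^ (j - 1) ≤ Q * Q ^ (j - 1) := Nat.mul_le_mul_right _ hQ2
      _ = Q ^ (j - 1 + 1) := (pow_succ' _ _).symm
      _ = Q ^ j := by congr 1; omega
    omega
  have hl := count_lower (K := K) (show 1 ≤ j by omega)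
  have : j * Q ^ 4 ≤ j * (AF (K := K) j).card := by omega
  exact Nat.le_of_mul_le_mul_left this (by omega)

theorem J_mono_step {j : ℕ} (hj : 5 ≤ j) :
    (AF (K := K) j).card ≤ (AF (K := K) (j + 1)).card := by
  have hQ2 : 2 ≤ Q := Fintype.one_lt_card (α := K)
  have h1 : Q ^ (j + 1) ≤ (j + 1) * (AF (K := K) (j+1)).card + 2 * Q ^ ((j+1) / 2) :=
    count_lower (by omega)
  have h2 : j * (AF (K := K) j).card ≤ Q ^ j := count_upper (by omega)
  have h4 : 4 * Q ^ ((j+1)/2) ≤ Q ^ j := by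
    calc 4 * Q ^ ((j+1)/2) ≤ Q ^ 2 * Q ^ ((j+1)/2) := by
          have : 4 ≤ Q ^ 2 := by nlinarith
          exact Nat.mul_le_mul_right _ this
    _ = Q ^ ((j+1)/2 + 2) := by rw [← pow_add]; ring_nf
    _ ≤ Q ^ j := Nat.pow_le_pow_right (by omega) (by omega)
  have h5 : 2 * Q ^ j ≤ Q ^ (j + 1) := by
    calc 2 * Q ^ j ≤ Q * Q ^ j := Nat.mul_le_mul_right _ hQ2
    _ = Q ^ (j + 1) := (pow_succ' _ _).symm
  exact mono_core j _ _ (Q ^ j) (Q ^ ((j+1)/2)) (Q ^ (j+1)) hj h1 h2 h4 h5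
    (Nat.one_le_pow _ _ (by omega))

theorem J_mono {a b : ℕ} (ha : 5 ≤ a) (hab : a ≤ b) :
    (AF (K := K) a).card ≤ (AF (K := K) b).card := by
  induction b, hab using Nat.le_induction with
  | base => exact le_refl _
  | succ b hb ih => exact le_trans ih (J_mono_step (by omega))


theorem hQ2 : 2 ≤ Q := Fintype.one_lt_card (α := K)

theorem I_le_I {n k : ℕ} (hn : 100 ≤ n) (hk1 : 1 ≤ k) (hk2 : k ≤ (n - 1) / 2) :
    numIrred K k ≤ numIrred K (n - k) := by
  have h2 : 2 ≤ n - k := by omega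
  rw [numIrred_eq_J h2]
  rcases Nat.lt_or_ge k 5 with h | h
  · refine le_trans (numIrred_le_J hk1) (le_trans (J_le_pow hk1) ?_)
    refine le_trans ?_ (J_pow4 (show 13 ≤ n - k by omega))
    exact Nat.pow_le_pow_right (by have := hQ2 (K := K); omega) (by omega)
  · exact le_trans (numIrred_le_J hk1) (J_mono h (by omega))

theorem b3 {n : ℕ} (hn : 100 ≤ n) :
    numIrred K ((n - 1) / 2) + Q ^ ((n - (n - 1) / 2) / 2)
      ≤ numIrred K (n - (n - 1) / 2) := by
  have hQ := hQ2 (K := K)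
  set m := (n - 1) / 2 with hm
  set j0 := n - m with hj0
  set h0 := j0 / 2 with hh0
  have hm4 : 4 ≤ m := by omega
  have hj : j0 ≤ m + 2 := by omega
  have hj1 : m + 1 ≤ j0 := by omega
  have hh0m : h0 ≤ m := by omega
  rw [numIrred_eq_J (show 2 ≤ m by omega), numIrred_eq_J (show 2 ≤ j0 by omega)]
  refine b3_core m j0 _ _ (Q ^ m) (Q ^ h0) (Q ^ j0) (Q ^ (m - h0)) hm4 hj hj1
    (count_upper (by omega)) (count_lower (by omega)) ?_ ?_ ?_ ?_
  · calc 2 * Q ^ m ≤ Q * Q ^ m := Nat.mul_le_mul_right _ hQ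
    _ = Q ^ (m + 1) := (pow_succ' _ _).symm
    _ ≤ Q ^ j0 := Nat.pow_le_pow_right (by omega) hj1
  · rw [← pow_add]
    congr 1
    omega
  · set e := m - h0 with he
    have he7 : 7 ≤ e := by omega
    calc 2 * m + 8 ≤ 4 * e + 16 := by omega
    _ ≤ 2 ^ e := help2 e he7
    _ ≤ Q ^ e := Nat.pow_le_pow_left hQ _
  · exact Nat.one_le_pow _ _ (by omega)

theorem Dnum_eq {n : ℕ} (hn : 100 ≤ n) :
    Dnum K n = ∏ k ∈ Finset.Icc 1 ((n - 1) / 2),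
      Nat.descFactorial (numIrred K (n - k)) (numIrred K k) := by
  refine Finset.prod_congr rfl (fun k hk => ?_)
  rw [Finset.mem_Icc] at hk
  exact (Nat.descFactorial_eq_div (I_le_I hn hk.1 hk.2)).symm

theorem Dnum_upper {n : ℕ} (hn : 100 ≤ n) :
    Dnum K n ≤ Q ^ (∑ k ∈ Finset.Icc 1 ((n - 1) / 2), (n - k) * numIrred K k) := by
  rw [Dnum_eq hn, ← Finset.prod_pow_eq_pow_sum]
  refine Finset.prod_le_prod' (fun k hk => ?_)
  rw [Finset.mem_Icc] at hk
  calc Nat.descFactorial (numIrred K (n - k)) (numIrred K k)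
      ≤ (numIrred K (n - k)) ^ (numIrred K k) := Nat.descFactorial_le_pow _ _
  _ ≤ (Q ^ (n - k)) ^ (numIrred K k) := by
      apply Nat.pow_le_pow_left
      exact le_trans (numIrred_le_J (by omega)) (J_le_pow (by omega))
  _ = Q ^ ((n - k) * numIrred K k) := by rw [← pow_mul]

theorem Dnum_lower {n : ℕ} (hn : 100 ≤ n) :
    Q ^ (((n - (n - 1) / 2) / 2) * numIrred K ((n - 1) / 2)) ≤ Dnum K n := by
  rw [Dnum_eq hn]
  have hb3 := b3 (K := K) hn
  have hterm : Q ^ (((n - (n - 1) / 2) / 2) * numIrred K ((n - 1) / 2)) ≤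
      Nat.descFactorial (numIrred K (n - (n - 1) / 2)) (numIrred K ((n - 1) / 2)) := by
    rw [pow_mul]
    refine le_trans ?_ (Nat.pow_sub_le_descFactorial _ _)
    exact Nat.pow_le_pow_left (by omega) _
  have hmem : (n - 1) / 2 ∈ Finset.Icc 1 ((n - 1) / 2) :=
    Finset.mem_Icc.mpr ⟨by omega, le_rfl⟩
  refine le_trans hterm (Finset.single_le_prod'
    (f := fun k => Nat.descFactorial (numIrred K (n - k)) (numIrred K k))
    (fun k hk => ?_) hmem)
  rw [Finset.mem_Icc] at hk
  have hIle := I_le_I (K := K) hn hk.1 hk.2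
  calc 1 ≤ (numIrred K (n - k) + 1 - numIrred K k) ^ (numIrred K k) :=
        Nat.one_le_pow _ _ (by omega)
  _ ≤ Nat.descFactorial (numIrred K (n - k)) (numIrred K k) :=
        Nat.pow_sub_le_descFactorial _ _

theorem a_lower {n : ℕ} (hn : 100 ≤ n) :
    Q ^ ((n - 1) / 2) ≤ 4 * (((n - (n - 1) / 2) / 2) * numIrred K ((n - 1) / 2)) := by
  have hQ := hQ2 (K := K)
  set m := (n - 1) / 2 with hm
  set h0 := (n - m) / 2 with hh0
  have k1 : Q ^ m ≤ 2 * (m * numIrred K m) := by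
    have hl := count_lower (K := K) (show 1 ≤ m by omega)
    have h4 : 4 * Q ^ (m / 2) ≤ Q ^ m := by
      calc 4 * Q ^ (m / 2) ≤ Q ^ 2 * Q ^ (m / 2) := by
            have : 4 ≤ Q ^ 2 := by nlinarith
            exact Nat.mul_le_mul_right _ this
      _ = Q ^ (m / 2 + 2) := by rw [← pow_add]; ring_nf
      _ ≤ Q ^ m := Nat.pow_le_pow_right (by omega) (by omega)
    rw [← numIrred_eq_J (show 2 ≤ m by omega)] at hl
    omega
  have k2 : m ≤ 2 * h0 := by omega
  have k3 : m * numIrred K m ≤ (2 * h0) * numIrred K m := Nat.mul_le_mul_right _ k2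
  calc Q ^ m ≤ 2 * (m * numIrred K m) := k1
  _ ≤ 2 * ((2 * h0) * numIrred K m) := Nat.mul_le_mul_left _ k3
  _ = 4 * (h0 * numIrred K m) := by ring

theorem E_upper {n : ℕ} (hn : 100 ≤ n) :
    (∑ k ∈ Finset.Icc 1 ((n - 1) / 2), (n - k) * numIrred K k) ≤ 9 * Q ^ ((n - 1) / 2) := by
  have hQ := hQ2 (K := K)
  set m := (n - 1) / 2 with hm
  set t := m / 2 with ht
  have hI_le : ∀ k, 1 ≤ k → numIrred K k ≤ Q ^ k := fun k hk =>
    le_trans (numIrred_le_J hk) (J_le_pow hk)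
  have hsplit : Finset.Icc 1 m = Finset.Icc 1 t ∪ Finset.Icc (t + 1) m := by
    ext x
    simp only [Finset.mem_Icc, Finset.mem_union]
    omega
  have hdisj : Disjoint (Finset.Icc 1 t) (Finset.Icc (t + 1) m) := by
    rw [Finset.disjoint_left]
    intro x hx hx'
    rw [Finset.mem_Icc] at hx hx'
    omega
  rw [hsplit, Finset.sum_union hdisj]
  have hS1 : (∑ k ∈ Finset.Icc 1 t, (n - k) * numIrred K k) ≤ Q ^ m := by
    have hb : ∀ k ∈ Finset.Icc 1 t, (n - k) * numIrred K k ≤ n * Q ^ t := by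
      intro k hk
      rw [Finset.mem_Icc] at hk
      apply Nat.mul_le_mul (by omega)
      exact le_trans (hI_le k hk.1) (Nat.pow_le_pow_right (by omega) hk.2)
    refine le_trans (Finset.sum_le_card_nsmul _ _ _ hb) ?_
    rw [Nat.card_Icc, smul_eq_mul]
    set s := m - t with hs
    have hn2 : n ≤ 4 * s + 2 := by omega
    have hts : t + 1 - 1 = t := by omega
    calc (t + 1 - 1) * (n * Q ^ t) = (t * n) * Q ^ t := by rw [hts]; ring
    _ ≤ (16 * (s + 1) ^ 2) * Q ^ t := by
        apply Nat.mul_le_mul_right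
        have hts2 : t ≤ s := by omega
        have hmul := Nat.mul_le_mul hts2 hn2
        nlinarith [hmul]
    _ ≤ 2 ^ s * Q ^ t := Nat.mul_le_mul_right _ (help3 s (by omega))
    _ ≤ Q ^ s * Q ^ t := Nat.mul_le_mul_right _ (Nat.pow_le_pow_left hQ _)
    _ = Q ^ (s + t) := (pow_add _ _ _).symm
    _ = Q ^ m := by congr 1; omega
  have hS2 : (∑ k ∈ Finset.Icc (t + 1) m, (n - k) * numIrred K k) ≤ 8 * Q ^ m := by
    have key : (t + 1) * (∑ k ∈ Finset.Icc (t + 1) m, (n - k) * numIrred K k)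
        ≤ (t + 1) * (8 * Q ^ m) := by
      rw [Finset.mul_sum]
      have hb : ∀ k ∈ Finset.Icc (t + 1) m, (t + 1) * ((n - k) * numIrred K k) ≤ n * Q ^ k := by
        intro k hk
        rw [Finset.mem_Icc] at hk
        calc (t + 1) * ((n - k) * numIrred K k) ≤ k * ((n - k) * numIrred K k) :=
              Nat.mul_le_mul_right _ hk.1
        _ = (n - k) * (k * numIrred K k) := by ring
        _ ≤ (n - k) * Q ^ k := by
            apply Nat.mul_le_mul_left
            calc k * numIrred K k ≤ k * (AF (K := K) k).card :=
                  Nat.mul_le_mul_left _ (numIrred_le_J (by omega))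
            _ ≤ Q ^ k := count_upper (by omega)
        _ ≤ n * Q ^ k := Nat.mul_le_mul_right _ (by omega)
      refine le_trans (Finset.sum_le_sum hb) ?_
      have hsub : (∑ k ∈ Finset.Icc (t + 1) m, n * Q ^ k) ≤ n * ∑ k ∈ Finset.Icc 1 m, Q ^ k := by
        rw [← Finset.mul_sum]
        apply Nat.mul_le_mul_left
        apply Finset.sum_le_sum_of_subset
        intro x hx
        rw [Finset.mem_Icc] at *
        constructor <;> omega
      refine le_trans hsub ?_
      calc n * ∑ k ∈ Finset.Icc 1 m, Q ^ k ≤ n * (2 * Q ^ m) :=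
            Nat.mul_le_mul_left _ (geom_sum_le m)
      _ ≤ (4 * (t + 1)) * (2 * Q ^ m) := Nat.mul_le_mul_right _ (by omega)
      _ = (t + 1) * (8 * Q ^ m) := by ring
    exact Nat.le_of_mul_le_mul_left key (by omega)
  omega


end Alg

theorem glue (q D a E m n : ℕ) (hq2 : 2 ≤ q) (hlow : q ^ a ≤ D) (hupp : D ≤ q ^ E)
    (ha : q ^ m ≤ 4 * a) (hE : E ≤ 9 * q ^ m) (hm1 : n ≤ 2 * m + 2) (hm2 : 2 * m ≤ n) :
    (1 / (4 * (q:ℝ))) * (q:ℝ) ^ ((n : ℝ) / 2) ≤ Real.logb q D ∧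
      Real.logb q D ≤ 9 * (q:ℝ) ^ ((n : ℝ) / 2) := by
  have hq1 : (1:ℝ) < q := by exact_mod_cast hq2
  have hq0 : (0:ℝ) < q := by linarith
  have hqne : (q:ℝ) ≠ 1 := by linarith
  have hpa : (0:ℝ) < (q:ℝ) ^ (a:ℕ) := pow_pos hq0 a
  have hD0 : (0:ℝ) < D := lt_of_lt_of_le hpa (by exact_mod_cast hlow)
  have hcast : ∀ t : ℕ, ((q ^ t : ℕ) : ℝ) = (q:ℝ) ^ (t : ℝ) := by
    intro t
    rw [Real.rpow_natCast]
    push_cast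
    ring
  have hx1 : (a:ℝ) ≤ Real.logb q D := by
    have := Real.logb_le_logb_of_le hq1 (x := ((q ^ a : ℕ) : ℝ)) (by positivity)
      (by exact_mod_cast Nat.cast_le.mpr hlow)
    rwa [hcast a, Real.logb_rpow hq0 hqne] at this
  have hx2 : Real.logb q D ≤ (E:ℝ) := by
    have := Real.logb_le_logb_of_le hq1 (x := (D:ℝ)) hD0 (by exact_mod_cast Nat.cast_le.mpr hupp)
    rwa [hcast E, Real.logb_rpow hq0 hqne] at this
  have hqm : ((q ^ m : ℕ) : ℝ) = (q:ℝ) ^ ((m:ℕ) : ℝ) := hcast m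
  constructor
  · refine le_trans ?_ hx1
    have h1 : (q:ℝ) ^ ((n:ℝ)/2 - 1) ≤ (q:ℝ) ^ ((m:ℕ):ℝ) := by
      apply Real.rpow_le_rpow_of_exponent_le (le_of_lt hq1)
      have : (n:ℝ) ≤ 2 * m + 2 := by exact_mod_cast hm1
      linarith
    have h2 : ((q ^ m : ℕ) : ℝ) ≤ 4 * a := by exact_mod_cast ha
    rw [hqm] at h2
    have h3 : (q:ℝ) ^ ((n:ℝ)/2 - 1) = (q:ℝ) ^ ((n:ℝ)/2) / q := by
      rw [Real.rpow_sub hq0, Real.rpow_one]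
    rw [h3, div_le_iff₀ hq0] at h1
    rw [div_mul_eq_mul_div, div_le_iff₀ (by linarith : (0:ℝ) < 4 * (q:ℝ))]
    calc (1:ℝ) * (q:ℝ) ^ ((n:ℝ)/2) = (q:ℝ) ^ ((n:ℝ)/2) := one_mul _
    _ ≤ (q:ℝ) ^ ((m:ℕ):ℝ) * q := h1
    _ ≤ (4 * a) * q := by nlinarith
    _ = (a:ℝ) * (4 * q) := by ring
  · refine le_trans hx2 ?_
    have h1 : (q:ℝ) ^ ((m:ℕ):ℝ) ≤ (q:ℝ) ^ ((n:ℝ)/2) := by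
      apply Real.rpow_le_rpow_of_exponent_le (le_of_lt hq1)
      have : 2 * (m:ℝ) ≤ n := by exact_mod_cast hm2
      linarith
    have h2 : (E:ℝ) ≤ 9 * ((q ^ m : ℕ) : ℝ) := by exact_mod_cast hE
    rw [hqm] at h2
    nlinarith


/-- `log_q D_n = Θ(q^(n/2))` as `n → ∞`. -/
theorem stmt_14 (K : Type*) [Field K] [Fintype K] (q : ℕ) (hq : q = Fintype.card K) :
    ∃ c C : ℝ, 0 < c ∧ 0 < C ∧ ∃ N : ℕ, ∀ n : ℕ, N ≤ n →
      c * (q : ℝ) ^ ((n : ℝ) / 2) ≤ Real.logb q (Dnum K n) ∧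
      Real.logb q (Dnum K n) ≤ C * (q : ℝ) ^ ((n : ℝ) / 2) := by
  subst hq
  have hc0 : (0:ℝ) < Fintype.card K := by
    exact_mod_cast Fintype.card_pos
  refine ⟨1 / (4 * (Fintype.card K : ℝ)), 9, by positivity, by norm_num, 100, fun n hn => ?_⟩
  exact glue (Fintype.card K) (Dnum K n)
    (((n - (n - 1) / 2) / 2) * numIrred K ((n - 1) / 2))
    (∑ k ∈ Finset.Icc 1 ((n - 1) / 2), (n - k) * numIrred K k) ((n - 1) / 2) n
    (hQ2 (K := K)) (Dnum_lower hn) (Dnum_upper hn) (a_lower hn) (E_upper hn)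
    (by omega) (by omega)
end
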